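/- arXiv:2111.14626 — 14 statements merged into one kernel-verified Lean document; each statement's English description precedes it below -/
import Mathlib

section
/- Let A = [A_{i,j}]_{i,j=1}^m ∈ M_m(M_n) be positive semidefinite. Then I_m ⊗ tr_1(A^τ) ≥ A^τ, i.e., the Kronecker product of I_m with the first partial trace of the partial transpose of A dominates A^τ in the Loewner order. -/
open Matrix Kronecker BigOperators
open scoped ComplexOrder

noncomputable section

/-- The partial transpose of a block matrix `A ∈ M_m(M_n)`:
the `(i,j)` block of `ptrans A` is the `(j,i)` block of `A` (blocks are swapped,
but not themselves transposed). -/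
def ptrans {m n : ℕ} (A : Matrix (Fin m × Fin n) (Fin m × Fin n) ℂ) :
    Matrix (Fin m × Fin n) (Fin m × Fin n) ℂ :=
  fun p q => A (q.1, p.2) (p.1, q.2)

/-- The first partial trace `tr₁ A = ∑ i, A_{i,i} ∈ M_n`. -/
def tr1 {m n : ℕ} (A : Matrix (Fin m × Fin n) (Fin m × Fin n) ℂ) :
    Matrix (Fin n) (Fin n) ℂ :=
  fun r s => ∑ i, A (i, r) (i, s)

private lemma swap3 {m n : ℕ} (f : Fin n → Fin n → Fin m → ℂ) :
    (∑ r, ∑ s, ∑ k, f r s k) = ∑ k, ∑ r, ∑ s, f r s k := by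
  calc (∑ r, ∑ s, ∑ k, f r s k) = ∑ r, ∑ k, ∑ s, f r s k :=
        Finset.sum_congr rfl fun r _ => Finset.sum_comm
    _ = ∑ k, ∑ r, ∑ s, f r s k := Finset.sum_comm

/-- **Choi's theorem**: if `A ∈ M_m(M_n)` is positive semidefinite, then
`I_m ⊗ tr₁(Aᵗ) ≥ Aᵗ` in the Loewner order. -/
theorem stmt0 {m n : ℕ} (A : Matrix (Fin m × Fin n) (Fin m × Fin n) ℂ)
    (hA : A.PosSemidef) :
    ((1 : Matrix (Fin m) (Fin m) ℂ) ⊗ₖ tr1 (ptrans A) - ptrans A).PosSemidef := by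
  obtain ⟨hH, hP⟩ := posSemidef_iff_dotProduct_mulVec.mp hA
  rw [posSemidef_iff_dotProduct_mulVec]
  constructor
  · ext p q
    simp only [conjTranspose_apply, Matrix.sub_apply, kroneckerMap_apply, one_apply, tr1, ptrans,
      star_sub, star_mul', star_sum, apply_ite (star : ℂ → ℂ), star_one, star_zero]
    rw [if_congr (Iff.intro Eq.symm Eq.symm) rfl rfl]
    congr 1
    · congr 1
      exact Finset.sum_congr rfl fun k _ => hH.apply _ _
    · exact hH.apply _ _
  · intro x
    set v : Fin m → Fin m → (Fin m × Fin n → ℂ) := fun i j p =>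
      (if p.1 = i then x (j, p.2) else 0) - (if p.1 = j then x (i, p.2) else 0) with hv
    have hQform : ∀ i j, star (v i j) ⬝ᵥ (A *ᵥ v i j) =
        ∑ r, ∑ s, ((starRingEnd ℂ) (x (j,r)) * A (i,r) (i,s) * x (j,s)
          - (starRingEnd ℂ) (x (j,r)) * A (i,r) (j,s) * x (i,s)
          - (starRingEnd ℂ) (x (i,r)) * A (j,r) (i,s) * x (j,s)
          + (starRingEnd ℂ) (x (i,r)) * A (j,r) (j,s) * x (i,s)) := by
      intro i j
      simp only [hv, dotProduct, mulVec, Pi.star_apply, Fintype.sum_prod_type, star_sub,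
        apply_ite (star : ℂ → ℂ), star_zero, sub_mul, mul_sub, ite_mul, zero_mul, mul_ite,
        mul_zero, Finset.sum_sub_distrib, Finset.sum_ite_eq', Finset.mem_univ, if_true,
        Finset.mul_sum, Finset.sum_ite_eq, Finset.sum_ite_irrel, Finset.sum_const_zero,
        RCLike.star_def]
      simp only [Finset.sum_add_distrib, Finset.sum_sub_distrib]
      ring
    have hLHS : star x ⬝ᵥ (((1 : Matrix (Fin m) (Fin m) ℂ) ⊗ₖ tr1 (ptrans A) - ptrans A) *ᵥ x) =
        (∑ i, ∑ k : Fin m, ∑ r, ∑ s, (starRingEnd ℂ) (x (i,r)) * (A (k,r) (k,s) * x (i,s)))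
        - ∑ i, ∑ j : Fin m, ∑ r, ∑ s, (starRingEnd ℂ) (x (i,r)) * (A (j,r) (i,s) * x (j,s)) := by
      simp only [dotProduct, mulVec, Matrix.sub_apply, kroneckerMap_apply, one_apply, tr1, ptrans,
        Fintype.sum_prod_type, Pi.star_apply, sub_mul, mul_sub, ite_mul, one_mul, zero_mul,
        mul_ite, mul_zero, Finset.sum_sub_distrib, Finset.sum_ite_irrel, Finset.sum_const_zero,
        Finset.sum_ite_eq', Finset.sum_ite_eq, Finset.mem_univ, if_true, Finset.mul_sum,
        Finset.sum_mul, RCLike.star_def]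
      congr 1
      · exact Finset.sum_congr rfl fun i _ => swap3 _
      · exact Finset.sum_congr rfl fun i _ => Finset.sum_comm
    have key : (2:ℂ) *
        (star x ⬝ᵥ (((1 : Matrix (Fin m) (Fin m) ℂ) ⊗ₖ tr1 (ptrans A) - ptrans A) *ᵥ x)) =
        ∑ i, ∑ j, star (v i j) ⬝ᵥ (A *ᵥ v i j) := by
      simp only [hQform, hLHS]
      simp only [Finset.sum_add_distrib, Finset.sum_sub_distrib]
      have e1 : (∑ i, ∑ j, ∑ r, ∑ s,
            (starRingEnd ℂ) (x (j,r)) * A (i,r) (i,s) * x (j,s)) =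
          ∑ i, ∑ j, ∑ r, ∑ s, (starRingEnd ℂ) (x (i,r)) * A (j,r) (j,s) * x (i,s) :=
        Finset.sum_comm
      have e2 : (∑ i, ∑ j, ∑ r, ∑ s,
            (starRingEnd ℂ) (x (j,r)) * A (i,r) (j,s) * x (i,s)) =
          ∑ i, ∑ j, ∑ r, ∑ s, (starRingEnd ℂ) (x (i,r)) * A (j,r) (i,s) * x (j,s) :=
        Finset.sum_comm
      rw [e1, e2]
      simp only [mul_assoc]
      ring
    have h0 : (0:ℂ) ≤ ∑ i, ∑ j, star (v i j) ⬝ᵥ (A *ᵥ v i j) :=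
      Finset.sum_nonneg fun i _ => Finset.sum_nonneg fun j _ => hP (v i j)
    rw [← key] at h0
    have h2 : star x ⬝ᵥ (((1 : Matrix (Fin m) (Fin m) ℂ) ⊗ₖ tr1 (ptrans A) - ptrans A) *ᵥ x)
        = 2⁻¹ * ((2:ℂ) *
          (star x ⬝ᵥ (((1 : Matrix (Fin m) (Fin m) ℂ) ⊗ₖ tr1 (ptrans A) - ptrans A) *ᵥ x))) := by
      ring
    rw [h2]
    exact mul_nonneg (by rw [Complex.le_def]; norm_num) h0
end
end

section
/- Let A = [A_{i,j}]_{i,j=1}^m ∈ M_m(M_n) be positive semidefinite. Then I_m ⊗ tr_1(A^τ) ≥ −A^τ + 2D_A, where D_A = A_{1,1} ⊕ A_{2,2} ⊕ ⋯ ⊕ A_{m,m}. -/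
/-
For `i ≠ j`, conjugating `A ⪰ 0` by `P_ij = (E_ij + E_ji) ⊗ I_n` gives a positive
semidefinite matrix. Summed over all pairs `(i, j)` these conjugates give
`2 (I_m ⊗ tr₁ A) + 2 A^τ`, while the diagonal pairs contribute `4 D_A`; so the sum over
`i ≠ j` is `2 (I_m ⊗ tr₁ A^τ + A^τ - 2 D_A)`, because `tr₁ A^τ = tr₁ A`.
-/

open Matrix Kronecker BigOperators
open scoped ComplexOrder

noncomputable section

/-- `D_A = A₁₁ ⊕ A₂₂ ⊕ ⋯ ⊕ A_mm`, the block diagonal part of `A`. -/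
def blockDiagPart {m n : ℕ} (A : Matrix (Fin m × Fin n) (Fin m × Fin n) ℂ) :
    Matrix (Fin m × Fin n) (Fin m × Fin n) ℂ :=
  fun p q => if p.1 = q.1 then A p q else 0

lemma conjTranspose_add_mul_mul_add {R ι κ : Type*} [Fintype ι] [Fintype κ]
    [NonUnitalNonAssocSemiring R] [StarAddMonoid R] (A : Matrix κ κ R) (U V : Matrix κ ι R) :
    (U + V)ᴴ * A * (U + V) = Uᴴ * A * U + Vᴴ * A * U + (Uᴴ * A * V + Vᴴ * A * V) := by
  simp only [conjTranspose_add, Matrix.add_mul, Matrix.mul_add]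

def blockSingle {ι : Type*} [DecidableEq ι] (R κ : Type*) [Semiring R] [DecidableEq κ]
    (i j : ι) : Matrix (ι × κ) (ι × κ) R :=
  single i j 1 ⊗ₖ 1

lemma blockSingle_conj_apply {R ι κ : Type*} [Fintype ι] [DecidableEq ι] [Fintype κ]
    [DecidableEq κ] [Semiring R] [StarRing R] (A : Matrix (ι × κ) (ι × κ) R) (i j k l : ι)
    (p q : ι × κ) :
    ((blockSingle R κ i j)ᴴ * A * blockSingle R κ k l) p q =
      if p.1 = j ∧ q.1 = l then A (i, p.2) (k, q.2) else 0 := by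
  obtain ⟨a, r⟩ := p; obtain ⟨b, s⟩ := q
  simp only [blockSingle, Matrix.mul_apply, conjTranspose_apply, kroneckerMap_apply,
    single_apply, one_apply, ite_and, mul_ite, ite_mul, mul_one, one_mul, mul_zero, zero_mul,
    apply_ite star, star_one, star_zero, Fintype.sum_prod_type, Finset.sum_ite_eq',
    Finset.sum_ite_eq, Finset.mem_univ, ↓reduceIte]
  grind

section BlockMatrix

variable {m n : ℕ} (A : Matrix (Fin m × Fin n) (Fin m × Fin n) ℂ)

local notation "E" => blockSingle ℂ (Fin n)

lemma tr1_ptrans : tr1 (ptrans A) = tr1 A :=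
  rfl

lemma sum_blockSingle_conj_same : ∑ i, ∑ j, (E i j)ᴴ * A * E i j = 1 ⊗ₖ tr1 A := by
  ext p q
  simp [Matrix.sum_apply, blockSingle_conj_apply, tr1, one_apply, ite_and, eq_comm (a := q.1)]

lemma sum_blockSingle_conj_swap : ∑ i, ∑ j, (E i j)ᴴ * A * E j i = ptrans A := by
  ext p q
  simp [Matrix.sum_apply, blockSingle_conj_apply, ptrans, ite_and]

lemma sum_blockSingle_conj_diag : ∑ i, (E i i)ᴴ * A * E i i = blockDiagPart A := by
  ext p q
  simp only [Matrix.sum_apply, blockSingle_conj_apply, blockDiagPart, ite_and,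
    Finset.sum_ite_eq, Finset.mem_univ, ↓reduceIte, Prod.mk.eta]
  grind

lemma sum_blockSwap_conj :
    ∑ i, ∑ j, (E i j + E j i)ᴴ * A * (E i j + E j i) =
      2 • (1 ⊗ₖ tr1 A) + 2 • ptrans A := by
  simp only [conjTranspose_add_mul_mul_add, Finset.sum_add_distrib]
  rw [Finset.sum_comm (f := fun i j => (E j i)ᴴ * A * E i j),
    Finset.sum_comm (f := fun i j => (E j i)ᴴ * A * E j i),
    sum_blockSingle_conj_same, sum_blockSingle_conj_swap]
  abel

lemma sum_blockSwap_conj_diag :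
    ∑ i, (E i i + E i i)ᴴ * A * (E i i + E i i) = 4 • blockDiagPart A := by
  simp only [conjTranspose_add_mul_mul_add, Finset.sum_add_distrib, sum_blockSingle_conj_diag]
  abel

lemma sum_offDiag_blockSwap_conj :
    ∑ i, ∑ j ∈ Finset.univ.erase i, (E i j + E j i)ᴴ * A * (E i j + E j i) =
      2 • (1 ⊗ₖ tr1 A) + 2 • ptrans A - 4 • blockDiagPart A := by
  simp only [Finset.sum_erase_eq_sub (Finset.mem_univ _), Finset.sum_sub_distrib,
    sum_blockSwap_conj, sum_blockSwap_conj_diag]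

end BlockMatrix

/-- If `A ∈ M_m(M_n)` is positive semidefinite, then
`I_m ⊗ tr₁(Aᵗ) ≥ -Aᵗ + 2 D_A` in the Loewner order. -/
theorem stmt1 {m n : ℕ} (A : Matrix (Fin m × Fin n) (Fin m × Fin n) ℂ)
    (hA : A.PosSemidef) :
    ((1 : Matrix (Fin m) (Fin m) ℂ) ⊗ₖ tr1 (ptrans A)
      - (-(ptrans A) + 2 • blockDiagPart A)).PosSemidef := by
  have hsum := posSemidef_sum Finset.univ fun i _ =>
    posSemidef_sum (Finset.univ.erase i) fun j _ =>
      hA.conjTranspose_mul_mul_same (blockSingle ℂ (Fin n) i j + blockSingle ℂ (Fin n) j i)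
  rw [sum_offDiag_blockSwap_conj] at hsum
  convert hsum.smul (a := (2⁻¹ : ℂ)) (by norm_num [Complex.le_def]) using 1
  rw [tr1_ptrans]
  module
end
end

section
/- Let A = [A_{i,j}]_{i,j=1}^m ∈ M_m(M_n) be Hermitian. Then (m−1)λ_max(A)·I_{mn} + 2D_A ≥ I_m ⊗ tr_1(A^τ) + A^τ ≥ (m−1)λ_min(A)·I_{mn} + 2D_A, where D_A = A_{1,1} ⊕ A_{2,2} ⊕ ⋯ ⊕ A_{m,m}. -/
open Matrix Kronecker BigOperators
open scoped ComplexOrder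

noncomputable section

/-- The largest eigenvalue of a Hermitian matrix. -/
def lamMax {N : Type*} [Fintype N] [DecidableEq N] {A : Matrix N N ℂ}
    (hA : A.IsHermitian) : ℝ := ⨆ i, hA.eigenvalues i

/-- The smallest eigenvalue of a Hermitian matrix. -/
def lamMin {N : Type*} [Fintype N] [DecidableEq N] {A : Matrix N N ℂ}
    (hA : A.IsHermitian) : ℝ := ⨅ i, hA.eigenvalues i

lemma conj_diag_psd {N : Type*} [Fintype N] [DecidableEq N]
    (U : Matrix.unitaryGroup N ℂ) (d : N → ℝ) (hd : ∀ i, 0 ≤ d i) :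
    ((U : Matrix N N ℂ) * diagonal (fun i => ((d i : ℝ) : ℂ)) * star (U : Matrix N N ℂ)).PosSemidef := by
  rw [star_eq_conjTranspose]
  exact (Matrix.PosSemidef.diagonal (fun i => by
    simpa using Complex.zero_le_real.mpr (hd i))).mul_mul_conjTranspose_same _

lemma decomp {N : Type*} [Fintype N] [DecidableEq N] {A : Matrix N N ℂ}
    (hA : A.IsHermitian) (c : ℝ) :
    (c : ℂ) • 1 - A =
      (hA.eigenvectorUnitary : Matrix N N ℂ) *
        diagonal (fun i => ((c - hA.eigenvalues i : ℝ) : ℂ)) *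
        (star (hA.eigenvectorUnitary : Matrix N N ℂ)) := by
  have hU : (hA.eigenvectorUnitary : Matrix N N ℂ) * star (hA.eigenvectorUnitary : Matrix N N ℂ) = 1 :=
    (Matrix.mem_unitaryGroup_iff).mp hA.eigenvectorUnitary.2
  have h2 : diagonal (fun i => ((c - hA.eigenvalues i : ℝ) : ℂ))
      = (c : ℂ) • 1 - diagonal (RCLike.ofReal ∘ hA.eigenvalues) := by
    ext i j
    by_cases hij : i = j <;>
      simp [diagonal_apply, hij, Matrix.smul_apply, Matrix.one_apply, Function.comp]
  rw [h2, mul_sub, sub_mul, mul_smul_comm, smul_mul_assoc, mul_one, hU]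
  conv_lhs => rw [hA.spectral_theorem, Unitary.conjStarAlgAut_apply]

lemma decomp' {N : Type*} [Fintype N] [DecidableEq N] {A : Matrix N N ℂ}
    (hA : A.IsHermitian) (c : ℝ) :
    A - (c : ℂ) • 1 =
      (hA.eigenvectorUnitary : Matrix N N ℂ) *
        diagonal (fun i => ((hA.eigenvalues i - c : ℝ) : ℂ)) *
        (star (hA.eigenvectorUnitary : Matrix N N ℂ)) := by
  have h3 : diagonal (fun i => ((hA.eigenvalues i - c : ℝ) : ℂ))
      = - diagonal (fun i => ((c - hA.eigenvalues i : ℝ) : ℂ)) := by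
    ext i j
    by_cases hij : i = j <;> simp [diagonal_apply, hij]
  rw [h3, mul_neg, neg_mul, ← decomp hA c]; abel

lemma smul_one_sub_psd {N : Type*} [Fintype N] [DecidableEq N] {A : Matrix N N ℂ}
    (hA : A.IsHermitian) {c : ℝ} (h : ∀ i, hA.eigenvalues i ≤ c) :
    ((c : ℂ) • 1 - A).PosSemidef := by
  rw [decomp hA c]
  exact conj_diag_psd _ _ (fun i => by linarith [h i])

lemma sub_smul_one_psd {N : Type*} [Fintype N] [DecidableEq N] {A : Matrix N N ℂ}
    (hA : A.IsHermitian) {c : ℝ} (h : ∀ i, c ≤ hA.eigenvalues i) :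
    (A - (c : ℂ) • 1).PosSemidef := by
  rw [decomp' hA c]
  exact conj_diag_psd _ _ (fun i => by linarith [h i])

def Sw {m n : ℕ} (i j : Fin m) : Matrix (Fin m × Fin n) (Fin m × Fin n) ℂ :=
  fun p k => (if p.1 = i ∧ k.1 = j ∧ p.2 = k.2 then 1 else 0)
           + (if p.1 = j ∧ k.1 = i ∧ p.2 = k.2 then 1 else 0)

lemma Sw_mul_apply {m n : ℕ} (B : Matrix (Fin m × Fin n) (Fin m × Fin n) ℂ) (i j : Fin m)
    (p l : Fin m × Fin n) :
    (Sw (n := n) i j * B) p l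
      = (if p.1 = i then B (j, p.2) l else 0) + (if p.1 = j then B (i, p.2) l else 0) := by
  simp [Sw, mul_apply, add_mul, ite_mul, Finset.sum_add_distrib, Fintype.sum_prod_type, ite_and,
    Finset.sum_ite_irrel, Finset.sum_ite_eq, Finset.sum_ite_eq']

lemma mul_Swc_apply {m n : ℕ} (M : Matrix (Fin m × Fin n) (Fin m × Fin n) ℂ) (i j : Fin m)
    (p q : Fin m × Fin n) :
    (M * (Sw (n := n) i j)ᴴ) p q
      = (if q.1 = i then M p (j, q.2) else 0) + (if q.1 = j then M p (i, q.2) else 0) := by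
  simp [Sw, mul_apply, conjTranspose_apply, star_add, apply_ite (star : ℂ → ℂ),
    mul_add, mul_ite, mul_one, mul_zero, Finset.sum_add_distrib, Fintype.sum_prod_type, ite_and,
    Finset.sum_ite_irrel, Finset.sum_ite_eq, Finset.sum_ite_eq']

lemma SBS {m n : ℕ} (B : Matrix (Fin m × Fin n) (Fin m × Fin n) ℂ) (i j : Fin m)
    (p q : Fin m × Fin n) :
    (Sw (n := n) i j * B * (Sw (n := n) i j)ᴴ) p q =
      (if p.1 = i ∧ q.1 = i then B (j, p.2) (j, q.2) else 0)
    + (if p.1 = i ∧ q.1 = j then B (j, p.2) (i, q.2) else 0)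
    + (if p.1 = j ∧ q.1 = i then B (i, p.2) (j, q.2) else 0)
    + (if p.1 = j ∧ q.1 = j then B (i, p.2) (i, q.2) else 0) := by
  rw [mul_Swc_apply, Sw_mul_apply, Sw_mul_apply]
  rcases eq_or_ne i j with rfl | hij
  · by_cases h1 : q.1 = i <;> by_cases h3 : p.1 = i <;> simp [h1, h3] <;> ring
  · by_cases h1 : q.1 = i <;> by_cases h2 : q.1 = j <;> by_cases h3 : p.1 = i <;>
      by_cases h4 : p.1 = j <;>
      first
        | (exact absurd (h1.symm.trans h2) hij)
        | (exact absurd (h3.symm.trans h4) hij)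
        | (simp [h1, h2, h3, h4, hij, hij.symm]; try ring)

lemma sum_SBS {m n : ℕ} (B : Matrix (Fin m × Fin n) (Fin m × Fin n) ℂ) :
    ∑ x ∈ Finset.univ.offDiag, Sw (n := n) x.1 x.2 * B * (Sw (n := n) x.1 x.2)ᴴ
      = 2 • ((1 : Matrix (Fin m) (Fin m) ℂ) ⊗ₖ tr1 (ptrans B) + ptrans B
          - 2 • blockDiagPart B) := by
  set f : Fin m × Fin m → Matrix (Fin m × Fin n) (Fin m × Fin n) ℂ :=
    fun x => Sw (n := n) x.1 x.2 * B * (Sw (n := n) x.1 x.2)ᴴ with hf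
  have h1 : ∑ x ∈ Finset.univ.diag ∪ Finset.univ.offDiag, f x
      = ∑ x ∈ Finset.univ.diag, f x + ∑ x ∈ Finset.univ.offDiag, f x :=
    Finset.sum_union (Finset.disjoint_diag_offDiag _)
  rw [Finset.diag_union_offDiag] at h1
  have h2 : ∑ x ∈ Finset.univ.offDiag, f x
      = ∑ x ∈ Finset.univ ×ˢ Finset.univ, f x - ∑ x ∈ Finset.univ.diag, f x := by
    rw [h1]; abel
  rw [h2]
  ext p q
  simp only [Matrix.sub_apply, Matrix.sum_apply, hf, SBS, Finset.univ_product_univ, Fintype.sum_prod_type,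
    Finset.sum_diag, ite_and, Finset.sum_add_distrib, Finset.sum_ite_irrel,
    Finset.sum_ite_eq, Finset.sum_ite_eq', Finset.mem_univ, if_true,
    Matrix.smul_apply, Matrix.add_apply, kroneckerMap_apply, Matrix.one_apply,
    tr1, ptrans, blockDiagPart, smul_eq_mul, Finset.sum_const_zero]
  obtain ⟨a, b⟩ := p
  obtain ⟨c, d⟩ := q
  rcases eq_or_ne a c with rfl | h
  · simp [two_smul]; abel
  · simp [h, h.symm, two_smul]

lemma plugin_max {m n : ℕ} (A : Matrix (Fin m × Fin n) (Fin m × Fin n) ℂ) (c : ℝ) :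
    (1 : Matrix (Fin m) (Fin m) ℂ) ⊗ₖ tr1 (ptrans ((c : ℂ) • 1 - A))
      + ptrans ((c : ℂ) • 1 - A) - 2 • blockDiagPart ((c : ℂ) • 1 - A)
    = ((((m : ℝ) - 1) * c : ℝ) : ℂ) • 1 + 2 • blockDiagPart A
      - ((1 : Matrix (Fin m) (Fin m) ℂ) ⊗ₖ tr1 (ptrans A) + ptrans A) := by
  ext p q
  obtain ⟨a, b⟩ := p
  obtain ⟨a', b'⟩ := q
  simp only [Matrix.sub_apply, Matrix.add_apply, Matrix.smul_apply, kroneckerMap_apply,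
    Matrix.one_apply, tr1, ptrans, blockDiagPart, Matrix.sub_apply, Matrix.smul_apply,
    smul_eq_mul, Finset.sum_sub_distrib, Prod.mk.injEq, two_smul]
  by_cases h1 : a = a' <;> by_cases h2 : b = b' <;>
    simp [h1, h2, eq_comm, Finset.sum_const, Finset.card_univ, Prod.ext_iff, nsmul_eq_mul] <;>
    push_cast <;> ring

lemma plugin_min {m n : ℕ} (A : Matrix (Fin m × Fin n) (Fin m × Fin n) ℂ) (c : ℝ) :
    (1 : Matrix (Fin m) (Fin m) ℂ) ⊗ₖ tr1 (ptrans (A - (c : ℂ) • 1))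
      + ptrans (A - (c : ℂ) • 1) - 2 • blockDiagPart (A - (c : ℂ) • 1)
    = (1 : Matrix (Fin m) (Fin m) ℂ) ⊗ₖ tr1 (ptrans A) + ptrans A
      - (((((m : ℝ) - 1) * c : ℝ) : ℂ) • 1 + 2 • blockDiagPart A) := by
  ext p q
  obtain ⟨a, b⟩ := p
  obtain ⟨a', b'⟩ := q
  simp only [Matrix.sub_apply, Matrix.add_apply, Matrix.smul_apply, kroneckerMap_apply,
    Matrix.one_apply, tr1, ptrans, blockDiagPart, Matrix.sub_apply, Matrix.smul_apply,
    smul_eq_mul, Finset.sum_sub_distrib, Prod.mk.injEq, two_smul]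
  by_cases h1 : a = a' <;> by_cases h2 : b = b' <;>
    simp [h1, h2, eq_comm, Finset.sum_const, Finset.card_univ, Prod.ext_iff, nsmul_eq_mul] <;>
    push_cast <;> ring

lemma posSemidef_sum {N ι : Type*} [Fintype N] (s : Finset ι) (f : ι → Matrix N N ℂ)
    (h : ∀ i ∈ s, (f i).PosSemidef) : (∑ i ∈ s, f i).PosSemidef := by
  classical
  induction s using Finset.induction_on with
  | empty => simpa using Matrix.PosSemidef.zero
  | insert a s hx ih =>
    rw [Finset.sum_insert hx]
    exact (h _ (Finset.mem_insert_self _ _)).add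
      (ih fun i hi => h i (Finset.mem_insert_of_mem hi))

lemma half_psd {N : Type*} [Fintype N] {X : Matrix N N ℂ} (h : ((2 : ℕ) • X).PosSemidef) :
    X.PosSemidef := by
  refine Matrix.posSemidef_iff_dotProduct_mulVec.mpr ⟨?_, ?_⟩
  · have h1 := h.1
    rw [Matrix.IsHermitian] at h1 ⊢
    ext i j
    have h2 := congrFun (congrFun h1 i) j
    simp only [Matrix.smul_apply, Matrix.conjTranspose_apply, smul_eq_mul] at h2 ⊢
    have : (2 : ℂ) * (star (X j i)) = (2 : ℂ) * X i j := by
      have := h2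
      push_cast at this ⊢
      simpa [two_smul, ← two_mul] using this
    exact mul_left_cancel₀ two_ne_zero this
  · intro x
    have h2 := h.dotProduct_mulVec_nonneg x
    have hrw : star x ⬝ᵥ ((2 : ℕ) • X) *ᵥ x = (2 : ℂ) * (star x ⬝ᵥ X *ᵥ x) := by
      rw [Matrix.smul_mulVec, dotProduct_smul]
      push_cast
      simp [two_smul, two_mul]
    rw [hrw] at h2
    rw [Complex.nonneg_iff] at h2 ⊢
    constructor
    · have := h2.1; simp at this; linarith
    · have := h2.2; simp at this; linarith

/-- For Hermitian `A ∈ M_m(M_n)`: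
`(m-1)λ_max(A) I + 2 D_A ≥ I_m ⊗ tr₁(Aᵗ) + Aᵗ ≥ (m-1)λ_min(A) I + 2 D_A`. -/
theorem stmt2 {m n : ℕ} (A : Matrix (Fin m × Fin n) (Fin m × Fin n) ℂ)
    (hA : A.IsHermitian) :
    (((((m : ℝ) - 1) * lamMax hA : ℝ) : ℂ) • (1 : Matrix (Fin m × Fin n) (Fin m × Fin n) ℂ)
        + 2 • blockDiagPart A
        - ((1 : Matrix (Fin m) (Fin m) ℂ) ⊗ₖ tr1 (ptrans A) + ptrans A)).PosSemidef
    ∧ ((1 : Matrix (Fin m) (Fin m) ℂ) ⊗ₖ tr1 (ptrans A) + ptrans A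
        - ((((((m : ℝ) - 1) * lamMin hA : ℝ) : ℂ) • (1 : Matrix (Fin m × Fin n) (Fin m × Fin n) ℂ))
          + 2 • blockDiagPart A)).PosSemidef := by
  have hmax : ∀ i, hA.eigenvalues i ≤ lamMax hA := fun i =>
    le_ciSup (Set.Finite.bddAbove (Set.finite_range _)) i
  have hmin : ∀ i, lamMin hA ≤ hA.eigenvalues i := fun i =>
    ciInf_le (Set.Finite.bddBelow (Set.finite_range _)) i
  constructor
  · have hpsd := smul_one_sub_psd hA hmax
    have hsum : (∑ x ∈ Finset.univ.offDiag,
        Sw (n := n) x.1 x.2 * (((lamMax hA : ℝ) : ℂ) • 1 - A)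
          * (Sw (n := n) x.1 x.2)ᴴ).PosSemidef :=
      posSemidef_sum _ _ fun x _ => hpsd.mul_mul_conjTranspose_same _
    rw [sum_SBS, plugin_max] at hsum
    exact half_psd hsum
  · have hpsd := sub_smul_one_psd hA hmin
    have hsum : (∑ x ∈ Finset.univ.offDiag,
        Sw (n := n) x.1 x.2 * (A - ((lamMin hA : ℝ) : ℂ) • 1)
          * (Sw (n := n) x.1 x.2)ᴴ).PosSemidef :=
      posSemidef_sum _ _ fun x _ => hpsd.mul_mul_conjTranspose_same _
    rw [sum_SBS, plugin_min] at hsum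
    exact half_psd hsum
end
end

section
/- Let A = [A_{i,j}]_{i,j=1}^m ∈ M_m(M_n) be positive semidefinite. Then I_m ⊗ tr_1(A^τ) ≥ −A^τ + (m−1)λ_min(A)·I_{mn}. -/
open Matrix Kronecker BigOperators
open scoped ComplexOrder

noncomputable section

namespace Aux

variable {m n : ℕ}

set_option maxHeartbeats 1000000 in
lemma quad1 (C : Matrix (Fin m × Fin n) (Fin m × Fin n) ℂ) (x : Fin m × Fin n → ℂ) :
    star x ⬝ᵥ (((1 : Matrix (Fin m) (Fin m) ℂ) ⊗ₖ tr1 (Cᴴ*C)) *ᵥ x)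
      = ∑ k, ∑ i, ∑ j, (starRingEnd ℂ) (∑ r, C k (j,r) * x (i,r)) * (∑ s, C k (j,s) * x (i,s)) := by
  simp only [dotProduct, mulVec, Fintype.sum_prod_type, kroneckerMap_apply, tr1, mul_apply,
    conjTranspose_apply, Pi.star_apply, RCLike.star_def, one_apply, ite_mul, zero_mul,
    map_sum, _root_.map_mul, Finset.mul_sum, Finset.sum_mul, Finset.sum_ite_eq, Finset.mem_univ,
    if_true, mul_ite, mul_zero, Finset.sum_ite_irrel, Finset.sum_const_zero, one_mul]
  conv_lhs => enter [2, i, 2, r, 2, s]; rw [Finset.sum_comm]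
  conv_lhs => enter [2, i, 2, r, 2, s, 2, k1]; rw [Finset.sum_comm]
  conv_lhs => enter [2, i, 2, r]; rw [Finset.sum_comm]
  conv_lhs => enter [2, i, 2, r, 2, k1]; rw [Finset.sum_comm]
  conv_lhs => enter [2, i]; rw [Finset.sum_comm]
  conv_lhs => enter [2, i, 2, k1]; rw [Finset.sum_comm]
  conv_lhs => rw [Finset.sum_comm]
  conv_lhs => enter [2, k1]; rw [Finset.sum_comm]
  conv_lhs => enter [2, k1, 2, k2, 2, i, 2, r]; rw [Finset.sum_comm]
  conv_lhs => enter [2, k1, 2, k2, 2, i]; rw [Finset.sum_comm]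
  conv_rhs => enter [2, k1, 2, k2, 2, i, 2, j]; rw [Finset.sum_comm]
  exact Finset.sum_congr rfl fun k1 _ => Finset.sum_congr rfl fun k2 _ =>
    Finset.sum_congr rfl fun i _ => Finset.sum_congr rfl fun j _ =>
    Finset.sum_congr rfl fun r _ => Finset.sum_congr rfl fun s _ => by ring

set_option maxHeartbeats 1000000 in
lemma quad2 (C : Matrix (Fin m × Fin n) (Fin m × Fin n) ℂ) (x : Fin m × Fin n → ℂ) :
    star x ⬝ᵥ ((ptrans (Cᴴ*C)) *ᵥ x)
      = ∑ k, ∑ i, ∑ j, (starRingEnd ℂ) (∑ r, C k (j,r) * x (i,r)) * (∑ s, C k (i,s) * x (j,s)) := by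
  simp only [dotProduct, mulVec, Fintype.sum_prod_type, ptrans, mul_apply,
    conjTranspose_apply, Pi.star_apply, RCLike.star_def,
    map_sum, _root_.map_mul, Finset.mul_sum, Finset.sum_mul]
  conv_lhs => enter [2, i, 2, r, 2, j]; rw [Finset.sum_comm]
  conv_lhs => enter [2, i, 2, r, 2, j, 2, k1]; rw [Finset.sum_comm]
  conv_lhs => enter [2, i, 2, r]; rw [Finset.sum_comm]
  conv_lhs => enter [2, i, 2, r, 2, k1]; rw [Finset.sum_comm]
  conv_lhs => enter [2, i]; rw [Finset.sum_comm]
  conv_lhs => enter [2, i, 2, k1]; rw [Finset.sum_comm]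
  conv_lhs => rw [Finset.sum_comm]
  conv_lhs => enter [2, k1]; rw [Finset.sum_comm]
  conv_lhs => enter [2, k1, 2, k2, 2, i]; rw [Finset.sum_comm]
  conv_rhs => enter [2, k1, 2, k2, 2, i, 2, j]; rw [Finset.sum_comm]
  exact Finset.sum_congr rfl fun k1 _ => Finset.sum_congr rfl fun k2 _ =>
    Finset.sum_congr rfl fun i _ => Finset.sum_congr rfl fun j _ =>
    Finset.sum_congr rfl fun r _ => Finset.sum_congr rfl fun s _ => by ring

lemma posT {i k : Type*} [Fintype i] [Fintype k] (e : i → k → k → ℂ) :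
    (0:ℂ) ≤ ∑ a, ∑ b, ∑ c, (starRingEnd ℂ) (e a b c) * (e a b c + e a c b) := by
  have hTS : (∑ a, ∑ b, ∑ c, (starRingEnd ℂ) (e a b c) * (e a b c + e a c b))
      = ∑ a, ∑ b, ∑ c, (starRingEnd ℂ) (e a c b) * (e a b c + e a c b) := by
    refine Finset.sum_congr rfl fun a _ => ?_
    rw [Finset.sum_comm]
    exact Finset.sum_congr rfl fun b _ => Finset.sum_congr rfl fun c _ => by rw [add_comm]
  have key : (0:ℂ) ≤ (∑ a, ∑ b, ∑ c, (starRingEnd ℂ) (e a b c) * (e a b c + e a c b))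
      + (∑ a, ∑ b, ∑ c, (starRingEnd ℂ) (e a b c) * (e a b c + e a c b)) := by
    nth_rewrite 2 [hTS]
    simp only [← Finset.sum_add_distrib, ← add_mul, ← map_add]
    exact Finset.sum_nonneg fun a _ => Finset.sum_nonneg fun b _ =>
      Finset.sum_nonneg fun c _ => star_mul_self_nonneg _
  have h2 : (0:ℂ) ≤ (2:ℂ)⁻¹ := by
    rw [(by norm_num : ((2:ℂ))⁻¹ = ((2⁻¹ : ℝ) : ℂ)), Complex.zero_le_real]
    norm_num
  calc (0:ℂ) ≤ (2:ℂ)⁻¹ * ((∑ a, ∑ b, ∑ c, (starRingEnd ℂ) (e a b c) * (e a b c + e a c b))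
      + (∑ a, ∑ b, ∑ c, (starRingEnd ℂ) (e a b c) * (e a b c + e a c b))) :=
        mul_nonneg h2 key
    _ = ∑ a, ∑ b, ∑ c, (starRingEnd ℂ) (e a b c) * (e a b c + e a c b) := by ring

lemma core {B : Matrix (Fin m × Fin n) (Fin m × Fin n) ℂ} (hB : B.PosSemidef) :
    ((1 : Matrix (Fin m) (Fin m) ℂ) ⊗ₖ tr1 B + ptrans B).PosSemidef := by
  have hb : ∀ p q, (starRingEnd ℂ) (B q p) = B p q := by
    intro p q
    have := congrFun (congrFun hB.1 p) q
    simpa [conjTranspose_apply, RCLike.star_def] using this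
  rw [posSemidef_iff_dotProduct_mulVec]
  constructor
  · -- Hermitian
    ext ⟨i, r⟩ ⟨j, s⟩
    simp only [conjTranspose_apply, Matrix.add_apply, kroneckerMap_apply, tr1, ptrans, one_apply,
      Pi.star_apply, RCLike.star_def, map_add, _root_.map_mul, map_sum, apply_ite,
      _root_.map_one, map_zero, hb]
    congr 1
    congr 1
    by_cases h : i = j <;> simp [h, eq_comm]
  · intro x
    open scoped MatrixOrder in
    obtain ⟨C, hC⟩ := CStarAlgebra.nonneg_iff_eq_star_mul_self.mp hB.nonneg
    rw [Matrix.star_eq_conjTranspose] at hC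
    subst hC
    rw [add_mulVec, dotProduct_add, quad1, quad2]
    have hmerge : (∑ k, ∑ i, ∑ j,
          (starRingEnd ℂ) (∑ r, C k (j,r) * x (i,r)) * (∑ s, C k (j,s) * x (i,s)))
        + (∑ k, ∑ i, ∑ j,
          (starRingEnd ℂ) (∑ r, C k (j,r) * x (i,r)) * (∑ s, C k (i,s) * x (j,s)))
        = ∑ a, ∑ b, ∑ c,
            (starRingEnd ℂ) ((fun k i j => ∑ r, C k (j,r) * x (i,r)) a b c)
              * ((fun k i j => ∑ r, C k (j,r) * x (i,r)) a b c
                + (fun k i j => ∑ r, C k (j,r) * x (i,r)) a c b) := by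
      rw [← Finset.sum_add_distrib]
      refine Finset.sum_congr rfl fun k _ => ?_
      rw [← Finset.sum_add_distrib]
      refine Finset.sum_congr rfl fun i _ => ?_
      rw [← Finset.sum_add_distrib]
      exact Finset.sum_congr rfl fun j _ => (mul_add _ _ _).symm
    rw [hmerge]
    exact posT _

lemma smul_one_posSemidef {c : ℝ} (hc : 0 ≤ c) :
    (((c : ℂ)) • (1 : Matrix (Fin m × Fin n) (Fin m × Fin n) ℂ)).PosSemidef := by
  rw [Matrix.smul_one_eq_diagonal]
  exact PosSemidef.diagonal fun _ => Complex.zero_le_real.mpr hc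

end Aux

/-- If `A ∈ M_m(M_n)` is positive semidefinite, then
`I_m ⊗ tr₁(Aᵗ) ≥ -Aᵗ + (m-1)λ_min(A) I_{mn}`. -/
theorem stmt3 {m n : ℕ} (A : Matrix (Fin m × Fin n) (Fin m × Fin n) ℂ)
    (hA : A.PosSemidef) :
    ((1 : Matrix (Fin m) (Fin m) ℂ) ⊗ₖ tr1 (ptrans A)
      - (-(ptrans A)
        + ((((m : ℝ) - 1) * lamMin hA.isHermitian : ℝ) : ℂ)
            • (1 : Matrix (Fin m × Fin n) (Fin m × Fin n) ℂ))).PosSemidef := by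
  by_cases hne : Nonempty (Fin m × Fin n)
  case neg =>
    have hemp : IsEmpty (Fin m × Fin n) := not_nonempty_iff.mp hne
    refine posSemidef_iff_dotProduct_mulVec.mpr ⟨?_, fun x => ?_⟩
    · ext p q; exact hemp.elim p
    · simp [dotProduct, Finset.univ_eq_empty]
  set lam := lamMin hA.isHermitian with hlam
  have hlam_le : ∀ i, lam ≤ hA.isHermitian.eigenvalues i := fun i =>
    ciInf_le (Set.Finite.bddBelow (Set.finite_range _)) i
  have hlam0 : 0 ≤ lam := le_ciInf fun i => hA.eigenvalues_nonneg i
  -- B := A - lam • 1 is PSD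
  set B : Matrix (Fin m × Fin n) (Fin m × Fin n) ℂ := A - ((lam : ℂ)) • 1 with hB
  have hBpsd : B.PosSemidef := by
    have hsp := hA.isHermitian.spectral_theorem
    rw [Unitary.conjStarAlgAut_apply] at hsp
    set U : Matrix (Fin m × Fin n) (Fin m × Fin n) ℂ :=
      (hA.isHermitian.eigenvectorUnitary : Matrix (Fin m × Fin n) (Fin m × Fin n) ℂ) with hU
    have hUU : U * star U = 1 := mem_unitaryGroup_iff.mp hA.isHermitian.eigenvectorUnitary.2
    have hBeq : B = U * (diagonal fun i => ((hA.isHermitian.eigenvalues i - lam : ℝ) : ℂ))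
        * star U := by
      have hd : (diagonal fun i => ((hA.isHermitian.eigenvalues i - lam : ℝ) : ℂ))
          = diagonal (RCLike.ofReal ∘ hA.isHermitian.eigenvalues) - (lam : ℂ) • 1 := by
        ext i j
        by_cases h : i = j <;>
          simp [diagonal_apply, one_apply, h, Function.comp] <;> push_cast <;> ring
      rw [hd, mul_sub, sub_mul, ← hsp, hB]
      congr 1
      rw [mul_smul_comm, smul_mul_assoc, mul_one, hUU]
    rw [hBeq, Matrix.star_eq_conjTranspose]
    exact (PosSemidef.diagonal fun i =>
      Complex.zero_le_real.mpr (by linarith [hlam_le i])).mul_mul_conjTranspose_same U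
  -- algebraic identity
  have hid : ((1 : Matrix (Fin m) (Fin m) ℂ) ⊗ₖ tr1 (ptrans A)
      - (-(ptrans A)
        + ((((m : ℝ) - 1) * lam : ℝ) : ℂ) • (1 : Matrix (Fin m × Fin n) (Fin m × Fin n) ℂ)))
      = ((1 : Matrix (Fin m) (Fin m) ℂ) ⊗ₖ tr1 B + ptrans B)
        + (((2 * lam : ℝ) : ℂ)) • (1 : Matrix (Fin m × Fin n) (Fin m × Fin n) ℂ) := by
    ext ⟨i, r⟩ ⟨j, s⟩
    simp only [Matrix.sub_apply, Matrix.add_apply, Matrix.neg_apply, Matrix.smul_apply, kroneckerMap_apply, one_apply,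
      tr1, ptrans, hB, Matrix.sub_apply, Matrix.smul_apply, smul_eq_mul, Prod.mk.injEq,
      Finset.sum_sub_distrib]
    have hone : ∀ (a b : Fin m) (c d : Fin n),
        (1 : Matrix (Fin m × Fin n) (Fin m × Fin n) ℂ) (a, c) (b, d)
          = if a = b ∧ c = d then 1 else 0 := by
      intro a b c d
      simp [one_apply, Prod.ext_iff]
    simp only [true_and, Finset.sum_const, Finset.card_univ, Fintype.card_fin, nsmul_eq_mul]
    by_cases hij : i = j <;> by_cases hrs : r = s <;>
      simp [hij, hrs, eq_comm] <;> push_cast <;> ring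
  rw [hid]
  exact (Aux.core hBpsd).add (Aux.smul_one_posSemidef (by linarith))
end
end

section
/- Let A = [A_{i,j}]_{i,j=1}^m ∈ M_m(M_n) be positive semidefinite. Then (tr_2(A^τ)) ⊗ I_n ≥ −A^τ + 2(A^τ ∘ J), where J ∈ M_m(M_n) is the m×m block matrix each of whose blocks equals I_n and ∘ denotes the Hadamard (entrywise) product. -/
open Matrix Kronecker BigOperators
open scoped ComplexOrder

noncomputable section

/-- The second partial trace `tr₂ A = [tr A_{i,j}] ∈ M_m`. -/
def tr2 {m n : ℕ} (A : Matrix (Fin m × Fin n) (Fin m × Fin n) ℂ) :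
    Matrix (Fin m) (Fin m) ℂ :=
  fun i j => ∑ r, A (i, r) (j, r)

/-- `J ∈ M_m(M_n)`: the `m × m` block matrix each of whose blocks is `I_n`. -/
def Jmat (m n : ℕ) : Matrix (Fin m × Fin n) (Fin m × Fin n) ℂ :=
  fun p q => if p.2 = q.2 then 1 else 0

/-- Auxiliary "symmetrizer" matrices used in the congruence argument. -/
def Smat (m n : ℕ) (r t : Fin n) : Matrix (Fin m × Fin n) (Fin m × Fin n) ℂ :=
  fun p q => (if p.1 = q.1 ∧ p.2 = t ∧ q.2 = r then 1 else 0)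
    + (if p.1 = q.1 ∧ p.2 = r ∧ q.2 = t then 1 else 0)

lemma mulS {m n : ℕ} (A : Matrix (Fin m × Fin n) (Fin m × Fin n) ℂ) (r t : Fin n)
    (p : Fin m × Fin n) (j : Fin m) (v : Fin n) :
    (A * Smat m n r t) p (j, v)
      = (if v = r then A p (j, t) else 0) + (if v = t then A p (j, r) else 0) := by
  rw [mul_apply, Fintype.sum_prod_type]
  simp [Smat, mul_add, Finset.sum_add_distrib, ite_and, mul_ite]

lemma Smul_left {m n : ℕ} (B : Matrix (Fin m × Fin n) (Fin m × Fin n) ℂ) (r t : Fin n)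
    (i : Fin m) (u : Fin n) (q : Fin m × Fin n) :
    ((Smat m n r t)ᴴ * B) (i, u) q
      = (if u = r then B (i, t) q else 0) + (if u = t then B (i, r) q else 0) := by
  rw [mul_apply, Fintype.sum_prod_type]
  simp [Smat, conjTranspose_apply, add_mul, Finset.sum_add_distrib, ite_and, ite_mul,
    apply_ite (starRingEnd ℂ)]

lemma entryS {m n : ℕ} (A : Matrix (Fin m × Fin n) (Fin m × Fin n) ℂ) (r t : Fin n)
    (i : Fin m) (u : Fin n) (j : Fin m) (v : Fin n) :
    ((Smat m n r t)ᴴ * A * Smat m n r t) (i, u) (j, v)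
      = (if u = r then ((if v = r then A (i, t) (j, t) else 0)
            + (if v = t then A (i, t) (j, r) else 0)) else 0)
        + (if u = t then ((if v = r then A (i, r) (j, t) else 0)
            + (if v = t then A (i, r) (j, r) else 0)) else 0) := by
  rw [Matrix.mul_assoc, Smul_left, mulS, mulS]

lemma keyid {m n : ℕ} (A : Matrix (Fin m × Fin n) (Fin m × Fin n) ℂ) :
    (tr2 (ptrans A) ⊗ₖ (1 : Matrix (Fin n) (Fin n) ℂ)
      - (-(ptrans A) + 2 • (Matrix.hadamard (ptrans A) (Jmat m n))))
    = (2:ℂ)⁻¹ • ∑ r : Fin n, ∑ t : Fin n,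
        (if r = t then 0 else ((Smat m n r t)ᴴ * A * Smat m n r t)ᵀ) := by
  ext ⟨i, u⟩ ⟨j, v⟩
  have hsplit : ∀ (r t : Fin n) (x : ℂ), (if r = t then (0:ℂ) else x)
      = x - (if r = t then x else 0) := by intro r t x; split <;> simp
  simp only [Matrix.smul_apply, Matrix.sum_apply, Matrix.transpose_apply, entryS,
    Matrix.sub_apply, Matrix.add_apply, Matrix.neg_apply, Matrix.hadamard_apply,
    kroneckerMap_apply, Matrix.one_apply, tr2, ptrans, Jmat]
  simp only [apply_ite (fun (X : Matrix (Fin m × Fin n) (Fin m × Fin n) ℂ) => X (i,u) (j,v)),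
    Matrix.zero_apply, Matrix.transpose_apply, entryS, hsplit]
  rcases eq_or_ne u v with h | h
  · subst h
    simp only [if_pos rfl]
    simp [Finset.sum_add_distrib, Finset.sum_sub_distrib, Finset.sum_ite_eq,
      Finset.sum_ite_eq', Finset.mul_sum]
    ring
  · simp only [if_neg h, if_neg (Ne.symm h)]
    simp [Finset.sum_add_distrib, Finset.sum_sub_distrib, Finset.sum_ite_eq,
      Finset.sum_ite_eq', h, Ne.symm h]
    ring

lemma smul_psd {k : Type*} [Fintype k] (N : Matrix k k ℂ) (c : ℝ) (hc : 0 ≤ c)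
    (h : N.PosSemidef) : ((c : ℂ) • N).PosSemidef := by
  constructor
  · have : ((c : ℂ) • N)ᴴ = (starRingEnd ℂ) (c : ℂ) • Nᴴ := Matrix.conjTranspose_smul _ _
    rw [Matrix.IsHermitian, this, Complex.conj_ofReal, h.1]
  · intro x
    have hc' : (0:ℂ) ≤ (c:ℂ) := by exact_mod_cast hc
    have := mul_nonneg hc' (h.2 x)
    simp only [Finsupp.mul_sum] at this
    simpa only [Matrix.smul_apply, smul_eq_mul, mul_assoc, mul_left_comm] using this

/-- If `A ∈ M_m(M_n)` is positive semidefinite, then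
`(tr₂ Aᵗ) ⊗ I_n ≥ -Aᵗ + 2 (Aᵗ ∘ J)` (`∘` is the Hadamard product). -/
theorem stmt4 {m n : ℕ} (A : Matrix (Fin m × Fin n) (Fin m × Fin n) ℂ)
    (hA : A.PosSemidef) :
    (tr2 (ptrans A) ⊗ₖ (1 : Matrix (Fin n) (Fin n) ℂ)
      - (-(ptrans A) + 2 • (Matrix.hadamard (ptrans A) (Jmat m n)))).PosSemidef := by
  rw [keyid A]
  have h2 : ((((2:ℝ)⁻¹ : ℝ)) : ℂ) = (2:ℂ)⁻¹ := by push_cast; ring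
  rw [← h2]
  refine smul_psd _ ((2:ℝ)⁻¹) (by norm_num) ?_
  have hsum : ∀ (s : Finset (Fin n)) (f : Fin n → Matrix (Fin m × Fin n) (Fin m × Fin n) ℂ),
      (∀ i, (f i).PosSemidef) → (∑ i ∈ s, f i).PosSemidef := by
    intro s f hf
    exact Finset.sum_induction f _ (fun a b ha hb => ha.add hb) .zero (fun i _ => hf i)
  refine hsum _ _ fun r => hsum _ _ fun t => ?_
  split
  · exact .zero
  · exact (hA.conjTranspose_mul_mul_same _).transpose
end
end

section
/- Let A = [A_{i,j}]_{i,j=1}^m ∈ M_m(M_n) be Hermitian. Then (n−1)λ_max(A)·I_{mn} + 2(A^τ ∘ J) ≥ (tr_2(A^τ)) ⊗ I_n + A^τ ≥ (n−1)λ_min(A)·I_{mn} + 2(A^τ ∘ J), where J ∈ M_m(M_n) is the m×m block matrix each of whose blocks equals I_n. -/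
open Matrix Kronecker BigOperators
open scoped ComplexOrder

noncomputable section

/-! ### Auxiliary lemmas -/

lemma psd_max' {N : Type*} [Fintype N] [DecidableEq N] {A : Matrix N N ℂ}
    (hA : A.IsHermitian) :
    (((lamMax hA : ℝ) : ℂ) • (1 : Matrix N N ℂ) - A).PosSemidef := by
  have hle : ∀ i, hA.eigenvalues i ≤ lamMax hA := fun i =>
    le_ciSup (Set.Finite.bddAbove (Set.finite_range _)) i
  have hdiag : (Matrix.diagonal (fun i => ((lamMax hA - hA.eigenvalues i : ℝ) : ℂ))).PosSemidef := by
    refine PosSemidef.diagonal fun i => ?_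
    simp only [Pi.zero_apply]
    rw [Complex.zero_le_real]
    linarith [hle i]
  have h2 := hdiag.mul_mul_conjTranspose_same (hA.eigenvectorUnitary : Matrix N N ℂ)
  convert h2 using 1
  have hU : (hA.eigenvectorUnitary : Matrix N N ℂ) *
      (star (hA.eigenvectorUnitary : Matrix N N ℂ)) = 1 :=
    Matrix.mem_unitaryGroup_iff.mp hA.eigenvectorUnitary.2
  have hd : Matrix.diagonal (fun i => ((lamMax hA - hA.eigenvalues i : ℝ) : ℂ))
      = ((lamMax hA : ℝ) : ℂ) • 1 - Matrix.diagonal (RCLike.ofReal ∘ hA.eigenvalues) := by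
    rw [smul_one_eq_diagonal, diagonal_sub]
    funext p q
    simp [Complex.ofReal_sub]
  rw [hd, Matrix.mul_sub, Matrix.sub_mul, Matrix.mul_smul, Matrix.smul_mul, mul_one,
    ← Matrix.star_eq_conjTranspose, hU, ← Unitary.conjStarAlgAut_apply (S := ℂ), ← hA.spectral_theorem]

lemma psd_min' {N : Type*} [Fintype N] [DecidableEq N] {A : Matrix N N ℂ}
    (hA : A.IsHermitian) :
    (A - ((lamMin hA : ℝ) : ℂ) • (1 : Matrix N N ℂ)).PosSemidef := by
  have hle : ∀ i, lamMin hA ≤ hA.eigenvalues i := fun i =>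
    ciInf_le (Set.Finite.bddBelow (Set.finite_range _)) i
  have hdiag : (Matrix.diagonal (fun i => ((hA.eigenvalues i - lamMin hA : ℝ) : ℂ))).PosSemidef := by
    refine PosSemidef.diagonal fun i => ?_
    simp only [Pi.zero_apply]
    rw [Complex.zero_le_real]
    linarith [hle i]
  have h2 := hdiag.mul_mul_conjTranspose_same (hA.eigenvectorUnitary : Matrix N N ℂ)
  convert h2 using 1
  have hU : (hA.eigenvectorUnitary : Matrix N N ℂ) *
      (star (hA.eigenvectorUnitary : Matrix N N ℂ)) = 1 :=
    Matrix.mem_unitaryGroup_iff.mp hA.eigenvectorUnitary.2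
  have hd : Matrix.diagonal (fun i => ((hA.eigenvalues i - lamMin hA : ℝ) : ℂ))
      = Matrix.diagonal (RCLike.ofReal ∘ hA.eigenvalues) - ((lamMin hA : ℝ) : ℂ) • 1 := by
    rw [smul_one_eq_diagonal, diagonal_sub]
    funext p q
    simp [Complex.ofReal_sub]
  rw [hd, Matrix.mul_sub, Matrix.sub_mul, Matrix.mul_smul, Matrix.smul_mul, mul_one,
    ← Matrix.star_eq_conjTranspose, hU, ← Unitary.conjStarAlgAut_apply (S := ℂ), ← hA.spectral_theorem]

lemma psd_sum' {ι : Type*} {N : Type*} [Fintype N] [DecidableEq N]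
    (s : Finset ι) (f : ι → Matrix N N ℂ) (h : ∀ i ∈ s, (f i).PosSemidef) :
    (∑ i ∈ s, f i).PosSemidef :=
  Finset.sum_induction f _ (fun _ _ ha hb => ha.add hb) Matrix.PosSemidef.zero h

lemma psd_smul' {N : Type*} [Fintype N] [DecidableEq N] {M : Matrix N N ℂ}
    (h : M.PosSemidef) {c : ℝ} (hc : 0 ≤ c) : (((c : ℝ) : ℂ) • M).PosSemidef := by
  constructor
  · have : star ((c : ℝ) : ℂ) = ((c : ℝ) : ℂ) := by
      simp [Complex.star_def, Complex.conj_ofReal]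
    rw [Matrix.IsHermitian, Matrix.conjTranspose_smul, this, h.1.eq]
  · intro x
    have e : ∀ i j (xi xj : ℂ), star xi * (((c : ℝ) : ℂ) • M) i j * xj
        = ((c : ℝ) : ℂ) * (star xi * M i j * xj) := by
      intros; rw [Matrix.smul_apply, smul_eq_mul]; ring
    simp only [e, ← Finsupp.mul_sum]
    exact mul_nonneg (Complex.zero_le_real.mpr hc) (h.2 x)

/-- The blockwise `0/1` diagonal projection onto block-columns `r` and `s`. -/
def Emat (m : ℕ) {n : ℕ} (r s : Fin n) : Matrix (Fin m × Fin n) (Fin m × Fin n) ℂ :=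
  Matrix.diagonal fun p => if p.2 = r ∨ p.2 = s then 1 else 0

/-- `Aᵀ` conjugated by the partial swap of indices `r` and `s`. -/
def Dmat {m n : ℕ} (A : Matrix (Fin m × Fin n) (Fin m × Fin n) ℂ) (r s : Fin n) :
    Matrix (Fin m × Fin n) (Fin m × Fin n) ℂ :=
  Aᵀ.submatrix (fun p => (p.1, Equiv.swap r s p.2)) (fun p => (p.1, Equiv.swap r s p.2))

lemma submatrix_one_prodswap (m : ℕ) {n : ℕ} (r s : Fin n) :
    (1 : Matrix (Fin m × Fin n) (Fin m × Fin n) ℂ).submatrix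
      (fun p : Fin m × Fin n => (p.1, Equiv.swap r s p.2))
      (fun p : Fin m × Fin n => (p.1, Equiv.swap r s p.2)) = 1 := by
  ext p q
  simp [Matrix.submatrix_apply, Matrix.one_apply, Prod.ext_iff]

lemma Emat_conjTranspose (m : ℕ) {n : ℕ} (r s : Fin n) : (Emat m r s)ᴴ = Emat m r s := by
  ext p q
  rw [Matrix.conjTranspose_apply]
  by_cases h : p = q
  · subst h
    simp only [Emat, Matrix.diagonal_apply_eq]
    split_ifs <;> simp
  · simp [Emat, Matrix.diagonal_apply_ne _ (fun hh => h hh.symm), Matrix.diagonal_apply_ne _ h]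

lemma psd_term_max {m n : ℕ} {A : Matrix (Fin m × Fin n) (Fin m × Fin n) ℂ}
    (hA : A.IsHermitian) (r s : Fin n) :
    (Emat m r s * (((lamMax hA : ℝ) : ℂ) • 1 - Dmat A r s) * Emat m r s).PosSemidef := by
  have hsub : ((lamMax hA : ℝ) : ℂ) • (1 : Matrix (Fin m × Fin n) (Fin m × Fin n) ℂ)
        - Dmat A r s
      = ((((lamMax hA : ℝ) : ℂ) • 1 - A)ᵀ).submatrix
          (fun p => (p.1, Equiv.swap r s p.2)) (fun p => (p.1, Equiv.swap r s p.2)) := by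
    rw [Matrix.transpose_sub, Matrix.transpose_smul, Matrix.transpose_one]
    simp only [Matrix.submatrix_sub, Matrix.submatrix_smul, Pi.sub_apply, Pi.smul_apply,
      submatrix_one_prodswap, Dmat]
  have h := (((psd_max' hA).transpose).submatrix
      (fun p => (p.1, Equiv.swap r s p.2))).mul_mul_conjTranspose_same (Emat m r s)
  rw [Emat_conjTranspose] at h
  rwa [hsub]

lemma psd_term_min {m n : ℕ} {A : Matrix (Fin m × Fin n) (Fin m × Fin n) ℂ}
    (hA : A.IsHermitian) (r s : Fin n) :
    (Emat m r s * (Dmat A r s - ((lamMin hA : ℝ) : ℂ) • 1) * Emat m r s).PosSemidef := by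
  have hsub : Dmat A r s - ((lamMin hA : ℝ) : ℂ) • (1 : Matrix (Fin m × Fin n) (Fin m × Fin n) ℂ)
      = ((A - ((lamMin hA : ℝ) : ℂ) • 1)ᵀ).submatrix
          (fun p => (p.1, Equiv.swap r s p.2)) (fun p => (p.1, Equiv.swap r s p.2)) := by
    rw [Matrix.transpose_sub, Matrix.transpose_smul, Matrix.transpose_one]
    simp only [Matrix.submatrix_sub, Matrix.submatrix_smul, Pi.sub_apply, Pi.smul_apply,
      submatrix_one_prodswap, Dmat]
  have h := (((psd_min' hA).transpose).submatrix
      (fun p => (p.1, Equiv.swap r s p.2))).mul_mul_conjTranspose_same (Emat m r s)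
  rw [Emat_conjTranspose] at h
  rwa [hsub]

lemma sum_swap_indicator {n : ℕ} (X : Fin n → Fin n → ℂ) (a b : Fin n) :
    ∑ r : Fin n, ∑ s : Fin n, (if r = s then 0 else
      (if a = r ∨ a = s then (1:ℂ) else 0) * X r s * (if b = r ∨ b = s then 1 else 0))
    = (if a = b then ∑ s : Fin n, (if a = s then 0 else (X a s + X s a))
        else (X a b + X b a)) := by
  have step : ∀ r s : Fin n, (if r = s then 0 else
      (if a = r ∨ a = s then (1:ℂ) else 0) * X r s * (if b = r ∨ b = s then 1 else 0))
      = (if a = r then (if b = r then (if r = s then 0 else X r s) else 0) else 0)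
      + (if a = r then (if b = s then (if r = s then 0 else X r s) else 0) else 0)
      + (if a = s then (if b = r then (if r = s then 0 else X r s) else 0) else 0)
      + (if a = s then (if b = s then (if r = s then 0 else X r s) else 0) else 0) := by
    intro r s
    by_cases h : r = s
    · simp [h]
    · by_cases h1 : a = r <;> by_cases h2 : a = s <;>
        by_cases h3 : b = r <;> by_cases h4 : b = s <;>
        simp_all
  simp_rw [step, Finset.sum_add_distrib]
  simp only [Finset.sum_ite_irrel, Finset.sum_ite_eq, Finset.sum_ite_eq',
    Finset.mem_univ, if_true, Finset.sum_const_zero]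
  by_cases hab : a = b
  · subst hab
    simp only [if_true, if_pos rfl]
    simp only [add_zero, zero_add]
    rw [← Finset.sum_add_distrib]
    refine Finset.sum_congr rfl fun s _ => ?_
    by_cases h : a = s
    · simp [h]
    · simp [h, Ne.symm h]
  · have hba : b ≠ a := fun h => hab h.symm
    simp only [if_neg hab, if_neg hba]
    ring

lemma key_sum {m n : ℕ} (A : Matrix (Fin m × Fin n) (Fin m × Fin n) ℂ) (μ : ℝ) :
    ∑ r : Fin n, ∑ s : Fin n, (if r = s then (0 : Matrix (Fin m × Fin n) (Fin m × Fin n) ℂ)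
        else Emat m r s * (((μ : ℝ) : ℂ) • 1 - Dmat A r s) * Emat m r s)
    = (2 * ((n:ℂ) - 1) * (μ:ℂ)) • 1 + (4:ℂ) • (Matrix.hadamard (ptrans A) (Jmat m n))
        - (2:ℂ) • (tr2 (ptrans A) ⊗ₖ (1 : Matrix (Fin n) (Fin n) ℂ) + ptrans A) := by
  ext ⟨i, a⟩ ⟨j, b⟩
  simp only [Matrix.sum_apply]
  have hterm : ∀ r s : Fin n,
      (if r = s then (0 : Matrix (Fin m × Fin n) (Fin m × Fin n) ℂ)
        else Emat m r s * (((μ : ℝ) : ℂ) • 1 - Dmat A r s) * Emat m r s) (i, a) (j, b)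
      = (if r = s then 0 else
          (if a = r ∨ a = s then (1:ℂ) else 0)
          * ((if i = j ∧ a = b then ((μ:ℝ):ℂ) else 0)
              - A (j, Equiv.swap r s b) (i, Equiv.swap r s a))
          * (if b = r ∨ b = s then 1 else 0)) := by
    intro r s
    rw [apply_ite (fun M : Matrix (Fin m × Fin n) (Fin m × Fin n) ℂ => M (i, a) (j, b))]
    simp only [Matrix.zero_apply, Emat, Dmat, Matrix.mul_diagonal, Matrix.diagonal_mul,
      Matrix.sub_apply, Matrix.smul_apply, Matrix.one_apply, Matrix.submatrix_apply,
      Matrix.transpose_apply, Prod.mk.injEq, smul_eq_mul, mul_ite, mul_one, mul_zero]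
  simp_rw [hterm]
  rw [sum_swap_indicator]
  by_cases hab : a = b
  · subst hab
    simp only [if_pos rfl, Equiv.swap_apply_left, Equiv.swap_apply_right]
    simp only [if_pos rfl, and_true, if_true]
    have hsum : ∀ f : Fin n → ℂ,
        (∑ x : Fin n, if a = x then 0 else f x) = (∑ x, f x) - f a := by
      intro f
      have h1 : ∀ x, (if a = x then (0:ℂ) else f x)
          = f x - (if a = x then f x else 0) := by
        intro x; split_ifs <;> ring
      simp_rw [h1, Finset.sum_sub_distrib, Finset.sum_ite_eq, Finset.mem_univ, if_true]
    rw [hsum]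
    simp only [Matrix.add_apply, Matrix.sub_apply, Matrix.smul_apply, Matrix.hadamard_apply,
      Matrix.kroneckerMap_apply, Matrix.one_apply, Jmat, ptrans, tr2, smul_eq_mul,
      Prod.mk.injEq, and_true, if_pos rfl, Finset.sum_sub_distrib, Finset.sum_add_distrib,
      Finset.sum_const, Finset.card_univ, Fintype.card_fin, nsmul_eq_mul]
    by_cases hij : i = j <;> simp [hij] <;> ring
  · simp only [if_neg hab, Equiv.swap_apply_left, Equiv.swap_apply_right,
      if_neg (fun h : i = j ∧ a = b => hab h.2)]
    simp only [Matrix.add_apply, Matrix.sub_apply, Matrix.smul_apply, Matrix.hadamard_apply,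
      Matrix.kroneckerMap_apply, Matrix.one_apply, Jmat, ptrans, tr2, smul_eq_mul,
      Prod.mk.injEq, if_neg hab, if_neg (fun h : i = j ∧ a = b => hab h.2),
      and_false, if_false, mul_zero, zero_mul]
    ring

/-- For Hermitian `A ∈ M_m(M_n)`:
`(n-1)λ_max(A) I + 2(Aᵗ ∘ J) ≥ (tr₂ Aᵗ) ⊗ I_n + Aᵗ ≥ (n-1)λ_min(A) I + 2(Aᵗ ∘ J)`. -/
theorem stmt5 {m n : ℕ} (A : Matrix (Fin m × Fin n) (Fin m × Fin n) ℂ)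
    (hA : A.IsHermitian) :
    (((((n : ℝ) - 1) * lamMax hA : ℝ) : ℂ) • (1 : Matrix (Fin m × Fin n) (Fin m × Fin n) ℂ)
        + 2 • (Matrix.hadamard (ptrans A) (Jmat m n))
        - (tr2 (ptrans A) ⊗ₖ (1 : Matrix (Fin n) (Fin n) ℂ) + ptrans A)).PosSemidef
    ∧ (tr2 (ptrans A) ⊗ₖ (1 : Matrix (Fin n) (Fin n) ℂ) + ptrans A
        - (((((n : ℝ) - 1) * lamMin hA : ℝ) : ℂ) • (1 : Matrix (Fin m × Fin n) (Fin m × Fin n) ℂ)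
          + 2 • (Matrix.hadamard (ptrans A) (Jmat m n)))).PosSemidef := by
  constructor
  · have hS : (∑ r : Fin n, ∑ s : Fin n,
        (if r = s then (0 : Matrix (Fin m × Fin n) (Fin m × Fin n) ℂ)
          else Emat m r s * (((lamMax hA : ℝ) : ℂ) • 1 - Dmat A r s)
            * Emat m r s)).PosSemidef := by
      refine psd_sum' _ _ fun r _ => psd_sum' _ _ fun s _ => ?_
      split_ifs
      · exact Matrix.PosSemidef.zero
      · exact psd_term_max hA r s
    have h2 := psd_smul' hS (by norm_num : (0:ℝ) ≤ 2⁻¹)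
    rw [key_sum A (lamMax hA)] at h2
    convert h2 using 1
    push_cast
    module
  · have hS : (∑ r : Fin n, ∑ s : Fin n,
        (if r = s then (0 : Matrix (Fin m × Fin n) (Fin m × Fin n) ℂ)
          else Emat m r s * (Dmat A r s - ((lamMin hA : ℝ) : ℂ) • 1)
            * Emat m r s)).PosSemidef := by
      refine psd_sum' _ _ fun r _ => psd_sum' _ _ fun s _ => ?_
      split_ifs
      · exact Matrix.PosSemidef.zero
      · exact psd_term_min hA r s
    have hneg : ∑ r : Fin n, ∑ s : Fin n,
        (if r = s then (0 : Matrix (Fin m × Fin n) (Fin m × Fin n) ℂ)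
          else Emat m r s * (Dmat A r s - ((lamMin hA : ℝ) : ℂ) • 1) * Emat m r s)
        = -(∑ r : Fin n, ∑ s : Fin n,
        (if r = s then (0 : Matrix (Fin m × Fin n) (Fin m × Fin n) ℂ)
          else Emat m r s * (((lamMin hA : ℝ) : ℂ) • 1 - Dmat A r s) * Emat m r s)) := by
      rw [← Finset.sum_neg_distrib]
      refine Finset.sum_congr rfl fun r _ => ?_
      rw [← Finset.sum_neg_distrib]
      refine Finset.sum_congr rfl fun s _ => ?_
      split_ifs
      · simp
      · rw [show Dmat A r s - ((lamMin hA : ℝ) : ℂ) • 1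
            = -((((lamMin hA : ℝ) : ℂ)) • 1 - Dmat A r s) from (neg_sub _ _).symm,
          Matrix.mul_neg, Matrix.neg_mul]
    have h2 := psd_smul' hS (by norm_num : (0:ℝ) ≤ 2⁻¹)
    rw [hneg, key_sum A (lamMin hA)] at h2
    convert h2 using 1
    push_cast
    module
end
end

section
/- Let A = [A_{i,j}]_{i,j=1}^m ∈ M_m(M_n) be positive semidefinite. Then both (tr_2(A^τ)) ⊗ I_n ≥ A^τ and (tr_2(A^τ)) ⊗ I_n ≥ −A^τ hold. -/
open Matrix Kronecker BigOperators
open scoped ComplexOrder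

noncomputable section

/-! Writing `x = ∑ₛ xₛ ⊗ eₛ` and `uₛᵣ = x̄ₛ ⊗ eᵣ`, both quadratic forms are sums of values of the
sesquilinear form of `A`: `x*(tr₂(Aᵗ) ⊗ I)x = ∑ ⟨uₛᵣ, A uₛᵣ⟩` and `x*Aᵗx = ∑ ⟨uₛᵣ, A uᵣₛ⟩`.
Hence `∑ ⟨uₛᵣ - ε uᵣₛ, A (uₛᵣ - ε uᵣₛ)⟩ = (1 + ε²) x*(tr₂(Aᵗ) ⊗ I)x - 2ε x*Aᵗx`, which is
nonnegative because `A ≥ 0`; take `ε = ±1`. -/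

namespace Matrix

variable {m n : ℕ}

theorem IsHermitian.ptrans {A : Matrix (Fin m × Fin n) (Fin m × Fin n) ℂ} (hA : A.IsHermitian) :
    (ptrans A).IsHermitian := by
  ext p q
  exact hA.apply _ _

theorem IsHermitian.tr2 {A : Matrix (Fin m × Fin n) (Fin m × Fin n) ℂ} (hA : A.IsHermitian) :
    (tr2 A).IsHermitian := by
  ext i j
  simp only [conjTranspose_apply, _root_.tr2, star_sum, hA.apply]

/-- The vector `uₛᵣ = x̄ₛ ⊗ eᵣ`. -/
def conjSliceAt (x : Fin m × Fin n → ℂ) (s r : Fin n) : Fin m × Fin n → ℂ :=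
  fun p => if p.2 = r then star (x (p.1, s)) else 0

theorem star_conjSliceAt_dotProduct_mulVec (A : Matrix (Fin m × Fin n) (Fin m × Fin n) ℂ)
    (x : Fin m × Fin n → ℂ) (s r s' r' : Fin n) :
    star (conjSliceAt x s r) ⬝ᵥ (A *ᵥ conjSliceAt x s' r') =
      ∑ j, ∑ i, star (x (j, s')) * (A (i, r) (j, r') * x (i, s)) := by
  simp only [conjSliceAt, dotProduct, mulVec, Fintype.sum_prod_type, Pi.star_apply,
    apply_ite (star : ℂ → ℂ), star_star, star_zero, ite_mul, mul_ite, zero_mul, mul_zero,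
    Finset.sum_ite_eq', Finset.mem_univ, if_true]
  simp only [Finset.mul_sum]
  rw [Finset.sum_comm]
  exact Finset.sum_congr rfl fun j _ => Finset.sum_congr rfl fun i _ => by ring

theorem star_dotProduct_ptrans_mulVec (A : Matrix (Fin m × Fin n) (Fin m × Fin n) ℂ)
    (x : Fin m × Fin n → ℂ) :
    star x ⬝ᵥ (ptrans A *ᵥ x) =
      ∑ r, ∑ s, star (conjSliceAt x s r) ⬝ᵥ (A *ᵥ conjSliceAt x r s) := by
  simp only [star_conjSliceAt_dotProduct_mulVec]
  simp only [dotProduct, mulVec, _root_.ptrans, Fintype.sum_prod_type, Finset.mul_sum,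
    Pi.star_apply]
  simp_rw [Finset.sum_comm (γ := Fin m) (α := Fin n)]

theorem star_dotProduct_tr2_ptrans_kronecker_one_mulVec
    (A : Matrix (Fin m × Fin n) (Fin m × Fin n) ℂ) (x : Fin m × Fin n → ℂ) :
    star x ⬝ᵥ ((tr2 (ptrans A) ⊗ₖ (1 : Matrix (Fin n) (Fin n) ℂ)) *ᵥ x) =
      ∑ s, ∑ r, star (conjSliceAt x s r) ⬝ᵥ (A *ᵥ conjSliceAt x s r) := by
  simp only [star_conjSliceAt_dotProduct_mulVec]
  simp only [dotProduct, Pi.star_apply, mulVec, kroneckerMap_apply, _root_.tr2, _root_.ptrans,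
    one_apply, mul_ite, mul_one, mul_zero, ite_mul, zero_mul, Finset.sum_mul, Finset.mul_sum,
    Fintype.sum_prod_type, Finset.sum_ite_eq, Finset.mem_univ, if_true]
  simp_rw [Finset.sum_comm (γ := Fin m) (α := Fin n)]

theorem sum_star_dotProduct_mulVec_conjSliceAt_sub_smul
    (A : Matrix (Fin m × Fin n) (Fin m × Fin n) ℂ) (x : Fin m × Fin n → ℂ) (ε : ℝ) :
    ∑ s, ∑ r, star (conjSliceAt x s r - (ε : ℂ) • conjSliceAt x r s) ⬝ᵥ
        (A *ᵥ (conjSliceAt x s r - (ε : ℂ) • conjSliceAt x r s)) =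
      (1 + ε ^ 2 : ℂ) * (star x ⬝ᵥ ((tr2 (ptrans A) ⊗ₖ (1 : Matrix (Fin n) (Fin n) ℂ)) *ᵥ x))
        - 2 * ε * (star x ⬝ᵥ (ptrans A *ᵥ x)) := by
  have hτ : ∑ s, ∑ r, star (conjSliceAt x s r) ⬝ᵥ (A *ᵥ conjSliceAt x r s) =
      star x ⬝ᵥ (ptrans A *ᵥ x) := by
    rw [star_dotProduct_ptrans_mulVec, Finset.sum_comm]
  have hT : ∑ r, ∑ s, star (conjSliceAt x s r) ⬝ᵥ (A *ᵥ conjSliceAt x s r) =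
      star x ⬝ᵥ ((tr2 (ptrans A) ⊗ₖ (1 : Matrix (Fin n) (Fin n) ℂ)) *ᵥ x) := by
    rw [star_dotProduct_tr2_ptrans_kronecker_one_mulVec, Finset.sum_comm]
  simp only [star_sub, star_smul, Complex.star_def, Complex.conj_ofReal, mulVec_sub, mulVec_smul,
    sub_dotProduct, dotProduct_sub, smul_dotProduct, dotProduct_smul, smul_eq_mul,
    Finset.sum_sub_distrib, ← Finset.mul_sum, hτ, hT, ← star_dotProduct_ptrans_mulVec,
    ← star_dotProduct_tr2_ptrans_kronecker_one_mulVec]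
  ring

theorem PosSemidef.tr2_ptrans_kronecker_one_sub_smul_ptrans
    {A : Matrix (Fin m × Fin n) (Fin m × Fin n) ℂ} (hA : A.PosSemidef) {ε : ℝ} (hε : ε ^ 2 = 1) :
    (tr2 (ptrans A) ⊗ₖ (1 : Matrix (Fin n) (Fin n) ℂ) - (ε : ℂ) • ptrans A).PosSemidef := by
  have hK : (tr2 (ptrans A) ⊗ₖ (1 : Matrix (Fin n) (Fin n) ℂ)).IsHermitian := by
    rw [IsHermitian, conjTranspose_kronecker, hA.1.ptrans.tr2.eq, conjTranspose_one]
  refine .of_dotProduct_mulVec_nonneg (hK.sub (hA.1.ptrans.smul (Complex.conj_ofReal ε)))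
    fun x => ?_
  have hsum := Finset.sum_nonneg (s := .univ) fun s _ => Finset.sum_nonneg (s := .univ) fun r _ =>
    hA.dotProduct_mulVec_nonneg (conjSliceAt x s r - (ε : ℂ) • conjSliceAt x r s)
  rw [sum_star_dotProduct_mulVec_conjSliceAt_sub_smul, ← Complex.ofReal_pow, hε,
    Complex.ofReal_one] at hsum
  rw [sub_mulVec, dotProduct_sub, smul_mulVec, dotProduct_smul, smul_eq_mul]
  convert mul_nonneg (by positivity : (0 : ℂ) ≤ 2⁻¹) hsum using 1
  ring

end Matrix

/-- If `A ∈ M_m(M_n)` is positive semidefinite, then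
`(tr₂ Aᵗ) ⊗ I_n ≥ Aᵗ` and `(tr₂ Aᵗ) ⊗ I_n ≥ -Aᵗ`. -/
theorem stmt7 {m n : ℕ} (A : Matrix (Fin m × Fin n) (Fin m × Fin n) ℂ)
    (hA : A.PosSemidef) :
    (tr2 (ptrans A) ⊗ₖ (1 : Matrix (Fin n) (Fin n) ℂ) - ptrans A).PosSemidef
    ∧ (tr2 (ptrans A) ⊗ₖ (1 : Matrix (Fin n) (Fin n) ℂ) - -(ptrans A)).PosSemidef := by
  constructor
  · simpa using hA.tr2_ptrans_kronecker_one_sub_smul_ptrans (ε := 1) (by norm_num)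
  · simpa using hA.tr2_ptrans_kronecker_one_sub_smul_ptrans (ε := -1) (by norm_num)
end
end

section
/- Let A = [A_{i,j}]_{i,j=1}^m ∈ M_m(M_n) be PPT, i.e., both A and A^τ are positive semidefinite. Then I_m ⊗ (tr_1 A) ≥ A and (tr_2 A) ⊗ I_n ≥ A. -/
open Matrix Kronecker BigOperators
open scoped ComplexOrder

noncomputable section

lemma aux_swap3 {γ δ ε : Type*} [Fintype γ] [Fintype δ] [Fintype ε] (f : γ → δ → ε → ℂ) :
    ∑ r, ∑ s, ∑ j, f r s j = ∑ j, ∑ r, ∑ s, f r s j :=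
  (Finset.sum_congr rfl fun _ _ => Finset.sum_comm).trans Finset.sum_comm

/-- Key inequality: if `B` is PSD on `α × β`, then the matrix
`C p q = δ_{p.1 q.1} ∑ k B (k,p.2) (k,q.2) - B (q.1,p.2) (p.1,q.2)` has nonnegative
quadratic form. -/
lemma aux_key {α β : Type*} [Fintype α] [Fintype β] [DecidableEq α]
    (B : Matrix (α × β) (α × β) ℂ) (hB : B.PosSemidef) (x : α × β → ℂ) :
    0 ≤ star x ⬝ᵥ (Matrix.of fun p q : α × β =>
      (if p.1 = q.1 then ∑ k, B (k, p.2) (k, q.2) else 0) - B (q.1, p.2) (p.1, q.2)) *ᵥ x := by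
  set z : α → α → (α × β) → ℂ := fun a b p => if p.1 = a then x (b, p.2) else 0 with hz
  set P : α → α → α → α → ℂ := fun a b c d =>
    ∑ r, ∑ s, (starRingEnd ℂ) (x (b, r)) * (B (a, r) (c, s) * x (d, s)) with hP
  have hPz : ∀ a b c d, star (z a b) ⬝ᵥ B *ᵥ (z c d) = P a b c d := by
    intro a b c d
    simp [hz, hP, dotProduct, mulVec, Fintype.sum_prod_type, ite_mul, mul_ite,
      apply_ite (starRingEnd ℂ), Finset.mul_sum, Finset.sum_ite_eq, Finset.sum_ite_eq']
  have hq : ∀ i j, star (z i j - z j i) ⬝ᵥ B *ᵥ (z i j - z j i) =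
      P i j i j - P i j j i - P j i i j + P j i j i := by
    intro i j
    rw [star_sub, sub_dotProduct, mulVec_sub, dotProduct_sub, dotProduct_sub,
      hPz, hPz, hPz, hPz]
    ring
  have hsum : (0:ℂ) ≤ ∑ i, ∑ j, star (z i j - z j i) ⬝ᵥ B *ᵥ (z i j - z j i) :=
    Finset.sum_nonneg fun i _ => Finset.sum_nonneg fun j _ => hB.dotProduct_mulVec_nonneg _
  have ite_sum : ∀ (c : Prop) [Decidable c] (f : β → ℂ),
      (∑ s : β, if c then f s else 0) = if c then ∑ s, f s else 0 := by
    intros c _ f; split <;> simp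
  have hT : star x ⬝ᵥ (Matrix.of fun p q : α × β =>
      (if p.1 = q.1 then ∑ k, B (k, p.2) (k, q.2) else 0) - B (q.1, p.2) (p.1, q.2)) *ᵥ x =
      (∑ i, ∑ k : α, P k i k i) - ∑ i, ∑ j, P j i i j := by
    simp only [hP, dotProduct, mulVec, Matrix.of_apply, Fintype.sum_prod_type,
      Pi.star_apply, RCLike.star_def]
    simp only [sub_mul, mul_sub, ite_mul, zero_mul, mul_ite, mul_zero,
      Finset.sum_sub_distrib, Finset.mul_sum, ite_sum, Finset.sum_ite_eq, Finset.sum_ite_eq']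
    simp only [← Finset.sum_sub_distrib]
    refine Finset.sum_congr rfl fun i _ => ?_
    simp only [Finset.mem_univ, if_true, Finset.sum_sub_distrib, Finset.mul_sum,
      Finset.sum_mul]
    congr 1
    · rw [aux_swap3 (fun r s j => (starRingEnd ℂ) (x (i, r)) * (B (j, r) (j, s) * x (i, s)))]
    · rw [Finset.sum_comm (f := fun r j => ∑ s, (starRingEnd ℂ) (x (i, r)) *
        (B (j, r) (i, s) * x (j, s)))]
  have hqsum : ∑ i, ∑ j, star (z i j - z j i) ⬝ᵥ B *ᵥ (z i j - z j i) =
      2 * ((∑ i, ∑ k : α, P k i k i) - ∑ i, ∑ j, P j i i j) := by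
    simp only [hq]
    have e1 : ∑ i, ∑ j, P i j i j = ∑ i, ∑ k : α, P k i k i := Finset.sum_comm
    have e2 : ∑ i, ∑ j, P i j j i = ∑ i, ∑ j, P j i i j := Finset.sum_comm
    simp only [Finset.sum_add_distrib, Finset.sum_sub_distrib, e1, e2]
    ring
  have h2 : (0:ℂ) ≤ 2 * ((∑ i, ∑ k : α, P k i k i) - ∑ i, ∑ j, P j i i j) := by
    rw [← hqsum]; exact hsum
  rw [hT]
  have h3 := mul_nonneg (show (0:ℂ) ≤ 2⁻¹ by
    rw [show ((2:ℂ))⁻¹ = ((2⁻¹:ℝ):ℂ) by push_cast; ring]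
    exact_mod_cast (by norm_num : (0:ℝ) ≤ 2⁻¹)) h2
  rw [← mul_assoc] at h3
  simpa using h3

lemma aux_dot_reindex {ι κ : Type*} [Fintype ι] [Fintype κ] (e : κ ≃ ι) (M : Matrix ι ι ℂ)
    (x : ι → ℂ) :
    star (fun p => x (e p)) ⬝ᵥ (M.submatrix e e) *ᵥ (fun p => x (e p)) = star x ⬝ᵥ M *ᵥ x := by
  simp only [dotProduct, mulVec, submatrix_apply, Pi.star_apply]
  rw [← Equiv.sum_comp e (fun p => star (x p) * ∑ q, M p q * x q)]
  exact Finset.sum_congr rfl fun p _ => by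
    rw [← Equiv.sum_comp e (fun q => M (e p) q * x q)]

lemma aux_kron_herm {a b : Type*} [Fintype a] [Fintype b] {M : Matrix a a ℂ} {N : Matrix b b ℂ}
    (hM : M.IsHermitian) (hN : N.IsHermitian) : (M ⊗ₖ N).IsHermitian := by
  ext ⟨i, r⟩ ⟨j, s⟩
  simp only [conjTranspose_apply, kroneckerMap_apply, star_mul']
  rw [hM.apply, hN.apply, mul_comm]

/-- If `A ∈ M_m(M_n)` is PPT (both `A` and `Aᵗ` positive semidefinite), then
`I_m ⊗ (tr₁ A) ≥ A` and `(tr₂ A) ⊗ I_n ≥ A`. -/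
theorem stmt8 {m n : ℕ} (A : Matrix (Fin m × Fin n) (Fin m × Fin n) ℂ)
    (hA : A.PosSemidef) (hAt : (ptrans A).PosSemidef) :
    ((1 : Matrix (Fin m) (Fin m) ℂ) ⊗ₖ tr1 A - A).PosSemidef
    ∧ (tr2 A ⊗ₖ (1 : Matrix (Fin n) (Fin n) ℂ) - A).PosSemidef := by
  have htr1 : (tr1 A).IsHermitian := by
    ext r s
    simp only [conjTranspose_apply, tr1, star_sum]
    exact Finset.sum_congr rfl fun k _ => hA.1.apply _ _
  have htr2 : (tr2 A).IsHermitian := by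
    ext i j
    simp only [conjTranspose_apply, tr2, star_sum]
    exact Finset.sum_congr rfl fun k _ => hA.1.apply _ _
  constructor
  · refine .of_dotProduct_mulVec_nonneg ((aux_kron_herm isHermitian_one htr1).sub hA.1) fun x => ?_
    have h1 : ((1 : Matrix (Fin m) (Fin m) ℂ) ⊗ₖ tr1 A - A) =
        Matrix.of fun p q : Fin m × Fin n =>
          (if p.1 = q.1 then ∑ k, (ptrans A) (k, p.2) (k, q.2) else 0)
            - (ptrans A) (q.1, p.2) (p.1, q.2) := by
      ext ⟨i, r⟩ ⟨j, s⟩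
      simp [ptrans, tr1, one_apply]
    rw [h1]
    exact aux_key (ptrans A) hAt x
  · refine .of_dotProduct_mulVec_nonneg ((aux_kron_herm htr2 isHermitian_one).sub hA.1) fun x => ?_
    set e : Fin n × Fin m ≃ Fin m × Fin n := Equiv.prodComm (Fin n) (Fin m) with he
    set B' : Matrix (Fin n × Fin m) (Fin n × Fin m) ℂ :=
      ((ptrans A)ᵀ).submatrix e e with hB'def
    have hB' : B'.PosSemidef := (hAt.transpose).submatrix e
    have h2 : (Matrix.of fun p q : Fin n × Fin m =>
        (if p.1 = q.1 then ∑ k, B' (k, p.2) (k, q.2) else 0) - B' (q.1, p.2) (p.1, q.2)) =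
        (tr2 A ⊗ₖ (1 : Matrix (Fin n) (Fin n) ℂ) - A).submatrix e e := by
      ext ⟨r, i⟩ ⟨s, j⟩
      simp [hB'def, he, ptrans, tr2, one_apply, mul_ite, mul_one, mul_zero]
    have h3 := aux_key B' hB' (fun p => x (e p))
    rw [h2, aux_dot_reindex e _ x] at h3
    exact h3
end
end

section
/- Let A = [A_{i,j}]_{i,j=1}^m ∈ M_m(M_n) be positive semidefinite. Then (tr A)·I_{mn} + (tr_2 A) ⊗ I_n ≥ A + I_m ⊗ (tr_1 A) + 2(tr_2 D_A) ⊗ I_n − 2D_A, where D_A = A_{1,1} ⊕ A_{2,2} ⊕ ⋯ ⊕ A_{m,m}. -/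
/-!
Write `Φ(A)` (`partialTraceGap A`) for the difference of the two sides and `Ψ(X) = tr(X) I - X`
for the reduction map (`reductionMap`). Blockwise, `Φ(A)` has off-diagonal blocks `Ψ(A_ij)` and
diagonal blocks `∑_{k ≠ i} Ψ(A_kk)`, so `xᴴ Φ(A) x` is a sum over pairs `i ≠ j` of the quadratic
forms of the `2 × 2` block matrices `[[Ψ(A_jj), Ψ(A_ij)], [Ψ(A_ji), Ψ(A_ii)]]` at `(x_i, x_j)`.
Since `Φ` is additive it suffices to treat `A = v vᴴ`, and then each pair term is half the
squared norm of the antisymmetric tensor `x_j ∧ v_i + x_i ∧ v_j` (a Binet–Cauchy identity).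
-/

open Matrix Kronecker BigOperators
open scoped ComplexOrder

noncomputable section

section General

variable {ι n R : Type*} [Fintype ι] [Fintype n]

theorem dotProduct_mulVec_eq_sum_submatrix [NonUnitalNonAssocSemiring R]
    (u v : ι × n → R) (M : Matrix (ι × n) (ι × n) R) :
    u ⬝ᵥ M *ᵥ v =
      ∑ i, ∑ j, (fun r ↦ u (i, r)) ⬝ᵥ M.submatrix (i, ·) (j, ·) *ᵥ (fun s ↦ v (j, s)) := by
  simp only [dotProduct, mulVec, Fintype.sum_prod_type, Finset.mul_sum, submatrix_apply]
  exact Finset.sum_congr rfl fun i _ ↦ Finset.sum_comm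

def reductionMap [DecidableEq n] [Ring R] (X : Matrix n n R) : Matrix n n R :=
  X.trace • 1 - X

theorem dotProduct_reductionMap_vecMulVec_mulVec [DecidableEq n] [CommRing R]
    (p q u w : n → R) :
    p ⬝ᵥ reductionMap (vecMulVec u w) *ᵥ q = (w ⬝ᵥ u) * (p ⬝ᵥ q) - (p ⬝ᵥ u) * (w ⬝ᵥ q) := by
  simp [reductionMap, sub_mulVec, smul_mulVec, vecMulVec_mulVec, trace_vecMulVec,
    dotProduct_sub, dotProduct_smul, dotProduct_comm w, mul_comm]

def wedge [Mul R] [Sub R] (u w : n → R) : n × n → R :=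
  fun p ↦ u p.1 * w p.2 - w p.1 * u p.2

theorem star_wedge_dotProduct_wedge [CommRing R] [StarRing R] (u w u' w' : n → R) :
    star (wedge u w) ⬝ᵥ wedge u' w' =
      2 * ((star u ⬝ᵥ u') * (star w ⬝ᵥ w') - (star u ⬝ᵥ w') * (star w ⬝ᵥ u')) := by
  set a := fun r ↦ star (u r) * u' r
  set b := fun r ↦ star (w r) * w' r
  set c := fun r ↦ star (u r) * w' r
  set d := fun r ↦ star (w r) * u' r
  calc star (wedge u w) ⬝ᵥ wedge u' w'
      = ∑ r, ∑ s, ((a r * b s - c r * d s) + (a s * b r - c s * d r)) := by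
        simp only [dotProduct, Fintype.sum_prod_type, wedge, Pi.star_apply, star_sub, star_mul']
        exact Finset.sum_congr rfl fun r _ ↦ Finset.sum_congr rfl fun s _ ↦ by
          simp only [a, b, c, d]; ring
    _ = _ := by
        simp only [Finset.sum_add_distrib, Finset.sum_sub_distrib, ← Finset.mul_sum,
          ← Finset.sum_mul, dotProduct, Pi.star_apply, a, b, c, d]
        ring

end General

section PairForm

variable {ι n R : Type*} [Fintype n] [DecidableEq n] [CommRing R] [StarRing R]

def reductionForm (A : Matrix (ι × n) (ι × n) R) (x : ι × n → R) (i j k l : ι) : R :=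
  star (fun r ↦ x (i, r)) ⬝ᵥ reductionMap (A.submatrix (k, ·) (l, ·)) *ᵥ fun s ↦ x (j, s)

/-- The quadratic form of `[[Ψ(A_jj), Ψ(A_ij)], [Ψ(A_ji), Ψ(A_ii)]]` at `(x_i, x_j)`. -/
def pairForm (A : Matrix (ι × n) (ι × n) R) (x : ι × n → R) (i j : ι) : R :=
  reductionForm A x i i j j + reductionForm A x i j i j + reductionForm A x j i j i +
    reductionForm A x j j i i

theorem two_mul_pairForm_vecMulVec (v x : ι × n → R) (i j : ι) :
    2 * pairForm (vecMulVec v (star v)) x i j =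
      star (wedge (fun r ↦ x (j, r)) (fun r ↦ v (i, r)) +
          wedge (fun r ↦ x (i, r)) (fun r ↦ v (j, r))) ⬝ᵥ
        (wedge (fun r ↦ x (j, r)) (fun r ↦ v (i, r)) +
          wedge (fun r ↦ x (i, r)) (fun r ↦ v (j, r))) := by
  have hblock : ∀ k l, (vecMulVec v (star v)).submatrix (k, ·) (l, ·) =
      vecMulVec (fun r ↦ v (k, r)) (star fun r ↦ v (l, r)) := fun _ _ ↦ rfl
  simp only [pairForm, reductionForm, hblock, dotProduct_reductionMap_vecMulVec_mulVec, star_add,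
    add_dotProduct, dotProduct_add, star_wedge_dotProduct_wedge]
  ring

end PairForm

theorem pairForm_vecMulVec_nonneg {ι n : Type*} [Fintype n] [DecidableEq n]
    (v x : ι × n → ℂ) (i j : ι) : 0 ≤ pairForm (vecMulVec v (star v)) x i j :=
  le_of_mul_le_mul_left
    (by rw [mul_zero, two_mul_pairForm_vecMulVec]; exact dotProduct_star_self_nonneg _) two_pos

section Gap

variable {m n : ℕ}

def partialTraceGap (A : Matrix (Fin m × Fin n) (Fin m × Fin n) ℂ) :
    Matrix (Fin m × Fin n) (Fin m × Fin n) ℂ :=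
  A.trace • (1 : Matrix (Fin m × Fin n) (Fin m × Fin n) ℂ)
      + tr2 A ⊗ₖ (1 : Matrix (Fin n) (Fin n) ℂ)
      - (A + (1 : Matrix (Fin m) (Fin m) ℂ) ⊗ₖ tr1 A
        + 2 • (tr2 (blockDiagPart A) ⊗ₖ (1 : Matrix (Fin n) (Fin n) ℂ))
        - 2 • blockDiagPart A)

theorem partialTraceGap_add (A B : Matrix (Fin m × Fin n) (Fin m × Fin n) ℂ) :
    partialTraceGap (A + B) = partialTraceGap A + partialTraceGap B := by
  ext p q
  simp only [partialTraceGap, Matrix.smul_apply, Matrix.add_apply, Matrix.sub_apply,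
    kroneckerMap_apply]
  simp only [tr1, tr2, blockDiagPart, trace_add, Matrix.add_apply, nsmul_eq_mul]
  split_ifs <;> simp [Finset.sum_add_distrib] <;> ring

theorem partialTraceGap_sum {κ : Type*} (s : Finset κ)
    (A : κ → Matrix (Fin m × Fin n) (Fin m × Fin n) ℂ) :
    partialTraceGap (∑ k ∈ s, A k) = ∑ k ∈ s, partialTraceGap (A k) :=
  map_sum (AddMonoidHom.mk' partialTraceGap partialTraceGap_add) A s

theorem partialTraceGap_conjTranspose (A : Matrix (Fin m × Fin n) (Fin m × Fin n) ℂ) :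
    (partialTraceGap A)ᴴ = partialTraceGap Aᴴ := by
  ext p q
  simp only [partialTraceGap, conjTranspose_apply, Matrix.smul_apply, Matrix.add_apply,
    Matrix.sub_apply, kroneckerMap_apply]
  simp only [tr1, tr2, blockDiagPart, trace_conjTranspose, conjTranspose_apply, one_apply,
    nsmul_eq_mul]
  split_ifs <;> simp_all [star_sum]

theorem isHermitian_partialTraceGap {A : Matrix (Fin m × Fin n) (Fin m × Fin n) ℂ}
    (hA : A.IsHermitian) : (partialTraceGap A).IsHermitian := by
  rw [IsHermitian, partialTraceGap_conjTranspose, hA.eq]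

theorem partialTraceGap_submatrix (A : Matrix (Fin m × Fin n) (Fin m × Fin n) ℂ) (i j : Fin m) :
    (partialTraceGap A).submatrix (i, ·) (j, ·) = reductionMap (A.submatrix (i, ·) (j, ·)) +
      if i = j then
        ∑ k, reductionMap (A.submatrix (k, ·) (k, ·)) -
          (2 : ℂ) • reductionMap (A.submatrix (i, ·) (i, ·))
      else 0 := by
  ext r s
  simp only [partialTraceGap, submatrix_apply, Matrix.smul_apply, Matrix.add_apply,
    Matrix.sub_apply, kroneckerMap_apply]
  split_ifs with h
  · subst h
    simp only [Matrix.sub_apply, Matrix.sum_apply, Matrix.smul_apply]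
    by_cases hrs : r = s <;>
      simp [hrs, reductionMap, tr1, tr2, blockDiagPart, one_apply, trace, Fintype.sum_prod_type] <;>
      ring
  · simp [reductionMap, tr1, tr2, blockDiagPart, one_apply, trace, h]

theorem two_mul_dotProduct_partialTraceGap_mulVec
    (A : Matrix (Fin m × Fin n) (Fin m × Fin n) ℂ) (x : Fin m × Fin n → ℂ) :
    2 * (star x ⬝ᵥ partialTraceGap A *ᵥ x) =
      ∑ i, ∑ j ∈ Finset.univ.erase i, pairForm A x i j := by
  have hquad : star x ⬝ᵥ partialTraceGap A *ᵥ x = ∑ i, ∑ j, reductionForm A x i j i j +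
      ∑ i, (∑ k, reductionForm A x i i k k - 2 * reductionForm A x i i i i) := by
    rw [dotProduct_mulVec_eq_sum_submatrix]
    simp only [partialTraceGap_submatrix, add_mulVec, dotProduct_add, Finset.sum_add_distrib]
    congr 1
    refine Finset.sum_congr rfl fun i _ ↦ ?_
    rw [Finset.sum_eq_single i (fun j _ hj ↦ by simp [Ne.symm hj]) (by simp), if_pos rfl]
    simp only [sub_mulVec, sum_mulVec, smul_mulVec, dotProduct_sub, dotProduct_sum,
      dotProduct_smul, smul_eq_mul]
    rfl
  simp only [Finset.sum_erase_eq_sub (Finset.mem_univ _), pairForm, Finset.sum_add_distrib,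
    Finset.sum_sub_distrib, hquad]
  rw [Finset.sum_comm (f := fun i j ↦ reductionForm A x j i j i),
    Finset.sum_comm (f := fun i j ↦ reductionForm A x j j i i), ← Finset.mul_sum]
  ring

theorem posSemidef_partialTraceGap_vecMulVec (v : Fin m × Fin n → ℂ) :
    (partialTraceGap (vecMulVec v (star v))).PosSemidef := by
  refine .of_dotProduct_mulVec_nonneg
    (isHermitian_partialTraceGap (posSemidef_vecMulVec_self_star v).1)
    fun x ↦ le_of_mul_le_mul_left ?_ two_pos
  rw [mul_zero, two_mul_dotProduct_partialTraceGap_mulVec]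
  exact Finset.sum_nonneg fun i _ ↦ Finset.sum_nonneg fun j _ ↦ pairForm_vecMulVec_nonneg v x i j

theorem posSemidef_partialTraceGap {A : Matrix (Fin m × Fin n) (Fin m × Fin n) ℂ}
    (hA : A.PosSemidef) : (partialTraceGap A).PosSemidef := by
  obtain ⟨k, v, rfl⟩ := posSemidef_iff_eq_sum_vecMulVec.mp hA
  rw [partialTraceGap_sum]
  exact posSemidef_sum _ fun i _ ↦ posSemidef_partialTraceGap_vecMulVec (v i)

end Gap

/-- If `A ∈ M_m(M_n)` is positive semidefinite, then
`(tr A) I + (tr₂ A) ⊗ I_n ≥ A + I_m ⊗ (tr₁ A) + 2 (tr₂ D_A) ⊗ I_n - 2 D_A`. -/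
theorem stmt9 {m n : ℕ} (A : Matrix (Fin m × Fin n) (Fin m × Fin n) ℂ)
    (hA : A.PosSemidef) :
    (A.trace • (1 : Matrix (Fin m × Fin n) (Fin m × Fin n) ℂ)
      + tr2 A ⊗ₖ (1 : Matrix (Fin n) (Fin n) ℂ)
      - (A + (1 : Matrix (Fin m) (Fin m) ℂ) ⊗ₖ tr1 A
        + 2 • (tr2 (blockDiagPart A) ⊗ₖ (1 : Matrix (Fin n) (Fin n) ℂ))
        - 2 • blockDiagPart A)).PosSemidef :=
  posSemidef_partialTraceGap hA
end
end

section
/- Let A = [A_{i,j}]_{i,j=1}^m ∈ M_m(M_n) be positive semidefinite. Then (tr A)·I_{mn} − (tr_2 A) ⊗ I_n ≥ A − I_m ⊗ (tr_1 A) + 2((I_m ⊗ (tr_1 A)) − A) ∘ J, where J ∈ M_m(M_n) is the m×m block matrix each of whose blocks equals I_n and ∘ denotes the Hadamard (entrywise) product. -/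
open Matrix Kronecker BigOperators
open scoped ComplexOrder

noncomputable section

namespace Stmt10Aux

variable {m n : ℕ}

/-- the auxiliary vector used in the sum-of-squares decomposition -/
def zv (x : Fin m × Fin n → ℂ) (r s : Fin n) (i j : Fin m) : Fin m × Fin n → ℂ :=
  fun p => ((if p = (i,s) then star (x (j,r)) else 0) + (if p = (i,r) then star (x (j,s)) else 0))
    - (if p = (j,s) then star (x (i,r)) else 0) - (if p = (j,r) then star (x (i,s)) else 0)

def Q (A : Matrix (Fin m × Fin n) (Fin m × Fin n) ℂ) (x : Fin m × Fin n → ℂ)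
    (r s : Fin n) (i j : Fin m) : ℂ :=
  star (zv x r s i j) ⬝ᵥ A *ᵥ (zv x r s i j)

lemma Qexp (A : Matrix (Fin m × Fin n) (Fin m × Fin n) ℂ) (x : Fin m × Fin n → ℂ)
    (r s : Fin n) (i j : Fin m) :
    Q A x r s i j =
      x (j,r) * A (i,s) (i,s) * star (x (j,r))
    + x (j,r) * A (i,s) (i,r) * star (x (j,s))
    - x (j,r) * A (i,s) (j,s) * star (x (i,r))
    - x (j,r) * A (i,s) (j,r) * star (x (i,s))
    + x (j,s) * A (i,r) (i,s) * star (x (j,r))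
    + x (j,s) * A (i,r) (i,r) * star (x (j,s))
    - x (j,s) * A (i,r) (j,s) * star (x (i,r))
    - x (j,s) * A (i,r) (j,r) * star (x (i,s))
    - x (i,r) * A (j,s) (i,s) * star (x (j,r))
    - x (i,r) * A (j,s) (i,r) * star (x (j,s))
    + x (i,r) * A (j,s) (j,s) * star (x (i,r))
    + x (i,r) * A (j,s) (j,r) * star (x (i,s))
    - x (i,s) * A (j,r) (i,s) * star (x (j,r))
    - x (i,s) * A (j,r) (i,r) * star (x (j,s))
    + x (i,s) * A (j,r) (j,s) * star (x (i,r))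
    + x (i,s) * A (j,r) (j,r) * star (x (i,s)) := by
  simp only [Q, zv, dotProduct, mulVec, Pi.star_apply, star_sub, star_add, apply_ite (star : ℂ → ℂ),
    star_zero, star_star, mul_add, mul_sub, mul_ite, mul_zero, add_mul, sub_mul, ite_mul, zero_mul,
    Finset.sum_add_distrib, Finset.sum_sub_distrib, Finset.sum_ite_eq', Finset.mem_univ, if_true]
  ring

lemma xBx (A : Matrix (Fin m × Fin n) (Fin m × Fin n) ℂ) (x : Fin m × Fin n → ℂ) :
    star x ⬝ᵥ (A.trace • (1 : Matrix (Fin m × Fin n) (Fin m × Fin n) ℂ)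
      - tr2 A ⊗ₖ (1 : Matrix (Fin n) (Fin n) ℂ)
      - (A - (1 : Matrix (Fin m) (Fin m) ℂ) ⊗ₖ tr1 A
        + 2 • Matrix.hadamard ((1 : Matrix (Fin m) (Fin m) ℂ) ⊗ₖ tr1 A - A)
            (Jmat m n))) *ᵥ x =
      (∑ i : Fin m, ∑ r : Fin n, ∑ j : Fin m, ∑ s : Fin n,
          star (x (i,r)) * A (j,s) (j,s) * x (i,r))
    - (∑ i : Fin m, ∑ r : Fin n, ∑ j : Fin m, ∑ s : Fin n,
          star (x (i,r)) * A (i,s) (j,s) * x (j,r))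
    - (∑ i : Fin m, ∑ r : Fin n, ∑ j : Fin m, ∑ s : Fin n,
          star (x (i,r)) * A (i,r) (j,s) * x (j,s))
    + (∑ i : Fin m, ∑ r : Fin n, ∑ s : Fin n, ∑ j : Fin m,
          star (x (i,r)) * A (j,r) (j,s) * x (i,s))
    - (∑ i : Fin m, ∑ r : Fin n, ∑ j : Fin m,
          2 * (star (x (i,r)) * A (j,r) (j,r) * x (i,r)))
    + (∑ i : Fin m, ∑ r : Fin n, ∑ j : Fin m,
          2 * (star (x (i,r)) * A (i,r) (j,r) * x (j,r))) := by
  rw [← Nat.cast_smul_eq_nsmul ℂ]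
  simp only [dotProduct, mulVec, Pi.star_apply, Matrix.sub_apply, Matrix.add_apply,
    Matrix.smul_apply, smul_eq_mul, Nat.cast_ofNat, Matrix.one_apply, Matrix.kroneckerMap_apply,
    Matrix.hadamard_apply, tr1, tr2, Jmat, Matrix.trace, Matrix.diag,
    Fintype.sum_prod_type, Prod.mk.injEq, ite_and, mul_ite, mul_zero, mul_one, ite_mul, zero_mul,
    one_mul, mul_sub, mul_add, sub_mul, add_mul, Finset.sum_sub_distrib, Finset.sum_add_distrib,
    Finset.sum_ite_irrel, Finset.sum_ite_eq, Finset.sum_ite_eq', Finset.mem_univ, if_true,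
    Finset.mul_sum, Finset.sum_mul, Finset.sum_const_zero]
  simp only [mul_assoc, mul_comm, mul_left_comm]
  ring

/-- integrand: the whole identity moved to one side -/
def phi (A : Matrix (Fin m × Fin n) (Fin m × Fin n) ℂ) (x : Fin m × Fin n → ℂ)
    (t : (Fin m × Fin n) × Fin m × Fin n) : ℂ :=
  (if t.1.2 = t.2.2 then 0 else Q A x t.1.2 t.2.2 t.1.1 t.2.1)
  - 4 * (star (x t.1) * A t.2 t.2 * x t.1)
  + 4 * (star (x t.1) * A (t.1.1, t.2.2) (t.2.1, t.2.2) * x (t.2.1, t.1.2))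
  + 4 * (star (x t.1) * A t.1 t.2 * x t.2)
  - 4 * (star (x t.1) * A (t.2.1, t.1.2) (t.2.1, t.2.2) * x (t.1.1, t.2.2))
  + (if t.1.2 = t.2.2 then 4 * (2 * (star (x t.1) * A (t.2.1, t.1.2) (t.2.1, t.1.2) * x t.1)) else 0)
  - (if t.1.2 = t.2.2 then 4 * (2 * (star (x t.1) * A t.1 (t.2.1, t.1.2) * x (t.2.1, t.1.2))) else 0)

def e1 : ((Fin m × Fin n) × Fin m × Fin n) ≃ ((Fin m × Fin n) × Fin m × Fin n) where
  toFun t := ((t.2.1, t.1.2), (t.1.1, t.2.2))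
  invFun t := ((t.2.1, t.1.2), (t.1.1, t.2.2))
  left_inv t := rfl
  right_inv t := rfl

def e2 : ((Fin m × Fin n) × Fin m × Fin n) ≃ ((Fin m × Fin n) × Fin m × Fin n) where
  toFun t := ((t.1.1, t.2.2), (t.2.1, t.1.2))
  invFun t := ((t.1.1, t.2.2), (t.2.1, t.1.2))
  left_inv t := rfl
  right_inv t := rfl

def e3 : ((Fin m × Fin n) × Fin m × Fin n) ≃ ((Fin m × Fin n) × Fin m × Fin n) where
  toFun t := ((t.2.1, t.2.2), (t.1.1, t.1.2))
  invFun t := ((t.2.1, t.2.2), (t.1.1, t.1.2))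
  left_inv t := rfl
  right_inv t := rfl

lemma phi_sym_zero (A : Matrix (Fin m × Fin n) (Fin m × Fin n) ℂ) (x : Fin m × Fin n → ℂ)
    (t : (Fin m × Fin n) × Fin m × Fin n) :
    phi A x t + phi A x (e1 t) + phi A x (e2 t) + phi A x (e3 t) = 0 := by
  obtain ⟨⟨i, r⟩, j, s⟩ := t
  simp only [phi, e1, e2, e3, Equiv.coe_fn_mk, Qexp]
  by_cases h : r = s
  · subst h
    simp only [↓reduceIte]
    ring
  · simp only [h, Ne.symm h, ↓reduceIte]
    ring

lemma sum_phi_zero (A : Matrix (Fin m × Fin n) (Fin m × Fin n) ℂ) (x : Fin m × Fin n → ℂ) :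
    ∑ t : (Fin m × Fin n) × Fin m × Fin n, phi A x t = 0 := by
  have h4 : (4 : ℂ) * ∑ t : (Fin m × Fin n) × Fin m × Fin n, phi A x t
      = ∑ t : (Fin m × Fin n) × Fin m × Fin n,
          (phi A x t + phi A x (e1 t) + phi A x (e2 t) + phi A x (e3 t)) := by
    rw [Finset.sum_add_distrib, Finset.sum_add_distrib, Finset.sum_add_distrib,
      Equiv.sum_comp e1 (phi A x), Equiv.sum_comp e2 (phi A x), Equiv.sum_comp e3 (phi A x)]
    ring
  have h0 : ∑ t : (Fin m × Fin n) × Fin m × Fin n,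
      (phi A x t + phi A x (e1 t) + phi A x (e2 t) + phi A x (e3 t)) = 0 :=
    Finset.sum_eq_zero fun t _ => phi_sym_zero A x t
  have := h4.trans h0
  rcases mul_eq_zero.mp this with h | h
  · norm_num at h
  · exact h

lemma key (A : Matrix (Fin m × Fin n) (Fin m × Fin n) ℂ) (x : Fin m × Fin n → ℂ) :
    ∑ t : (Fin m × Fin n) × Fin m × Fin n,
      (if t.1.2 = t.2.2 then 0 else Q A x t.1.2 t.2.2 t.1.1 t.2.1)
    = 4 * (star x ⬝ᵥ (A.trace • (1 : Matrix (Fin m × Fin n) (Fin m × Fin n) ℂ)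
      - tr2 A ⊗ₖ (1 : Matrix (Fin n) (Fin n) ℂ)
      - (A - (1 : Matrix (Fin m) (Fin m) ℂ) ⊗ₖ tr1 A
        + 2 • Matrix.hadamard ((1 : Matrix (Fin m) (Fin m) ℂ) ⊗ₖ tr1 A - A)
            (Jmat m n))) *ᵥ x) := by
  rw [xBx]
  have hbook : ∑ t : (Fin m × Fin n) × Fin m × Fin n, phi A x t
      = (∑ t : (Fin m × Fin n) × Fin m × Fin n,
          (if t.1.2 = t.2.2 then 0 else Q A x t.1.2 t.2.2 t.1.1 t.2.1))
      - 4 * ((∑ i : Fin m, ∑ r : Fin n, ∑ j : Fin m, ∑ s : Fin n,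
          star (x (i,r)) * A (j,s) (j,s) * x (i,r))
    - (∑ i : Fin m, ∑ r : Fin n, ∑ j : Fin m, ∑ s : Fin n,
          star (x (i,r)) * A (i,s) (j,s) * x (j,r))
    - (∑ i : Fin m, ∑ r : Fin n, ∑ j : Fin m, ∑ s : Fin n,
          star (x (i,r)) * A (i,r) (j,s) * x (j,s))
    + (∑ i : Fin m, ∑ r : Fin n, ∑ s : Fin n, ∑ j : Fin m,
          star (x (i,r)) * A (j,r) (j,s) * x (i,s))
    - (∑ i : Fin m, ∑ r : Fin n, ∑ j : Fin m,
          2 * (star (x (i,r)) * A (j,r) (j,r) * x (i,r)))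
    + (∑ i : Fin m, ∑ r : Fin n, ∑ j : Fin m,
          2 * (star (x (i,r)) * A (i,r) (j,r) * x (j,r)))) := by
    have hT1 : (∑ i : Fin m, ∑ r : Fin n, ∑ s : Fin n, ∑ j : Fin m,
          star (x (i,r)) * A (j,r) (j,s) * x (i,s))
        = ∑ i : Fin m, ∑ r : Fin n, ∑ j : Fin m, ∑ s : Fin n,
          star (x (i,r)) * A (j,r) (j,s) * x (i,s) :=
      Finset.sum_congr rfl fun i _ => Finset.sum_congr rfl fun r _ => Finset.sum_comm
    rw [hT1]
    simp only [phi, Fintype.sum_prod_type, Finset.sum_sub_distrib, Finset.sum_add_distrib,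
      ← Finset.mul_sum, Finset.sum_ite_eq, Finset.mem_univ, if_true]
    ring
  have h0 := sum_phi_zero A x
  rw [hbook] at h0
  linear_combination h0

end Stmt10Aux

open Stmt10Aux in
/-- If `A ∈ M_m(M_n)` is positive semidefinite, then
`(tr A) I - (tr₂ A) ⊗ I_n ≥ A - I_m ⊗ (tr₁ A) + 2 ((I_m ⊗ (tr₁ A)) - A) ∘ J`. -/
theorem stmt10 {m n : ℕ} (A : Matrix (Fin m × Fin n) (Fin m × Fin n) ℂ)
    (hA : A.PosSemidef) :
    (A.trace • (1 : Matrix (Fin m × Fin n) (Fin m × Fin n) ℂ)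
      - tr2 A ⊗ₖ (1 : Matrix (Fin n) (Fin n) ℂ)
      - (A - (1 : Matrix (Fin m) (Fin m) ℂ) ⊗ₖ tr1 A
        + 2 • Matrix.hadamard ((1 : Matrix (Fin m) (Fin m) ℂ) ⊗ₖ tr1 A - A)
            (Jmat m n))).PosSemidef := by
  have hH : ∀ p q, star (A q p) = A p q := hA.1.apply
  refine posSemidef_iff_dotProduct_mulVec.mpr ⟨?_, ?_⟩
  · -- Hermitian
    show _ = _
    ext p q
    have flip : ∀ {α : Type} [inst : DecidableEq α] (a b : α),
        (if a = b then (1:ℂ) else 0) = (if b = a then 1 else 0) := by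
      intro α _ a b
      by_cases h : a = b
      · simp [h]
      · simp [h, Ne.symm h]
    simp only [conjTranspose_apply, Matrix.sub_apply, Matrix.add_apply, Matrix.smul_apply,
      Matrix.one_apply, Matrix.kroneckerMap_apply, Matrix.hadamard_apply, tr1, tr2, Jmat,
      Matrix.trace, Matrix.diag, ← Nat.cast_smul_eq_nsmul ℂ, Nat.cast_ofNat, smul_eq_mul,
      star_sub, star_add, star_mul', star_sum, apply_ite (star : ℂ → ℂ), star_zero, star_one, star_ofNat,
      hH, flip]
  · intro x
    have hk := key A x
    have hnn : 0 ≤ ∑ t : (Fin m × Fin n) × Fin m × Fin n,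
        (if t.1.2 = t.2.2 then 0 else Q A x t.1.2 t.2.2 t.1.1 t.2.1) := by
      refine Finset.sum_nonneg fun t _ => ?_
      split
      · exact le_refl 0
      · exact hA.dotProduct_mulVec_nonneg _
    rw [hk] at hnn
    have h4 : (0:ℂ) < 4 := by norm_num
    calc (0:ℂ) = 4⁻¹ * 0 := by ring
    _ ≤ 4⁻¹ * (4 * (star x ⬝ᵥ _ *ᵥ x)) := by
        refine mul_le_mul_of_nonneg_left hnn ?_
        rw [Complex.le_def]
        norm_num
    _ = star x ⬝ᵥ _ *ᵥ x := by ring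
end
end

section
/- Let A ∈ M_m(M_n) be Hermitian. Then the following four inequalities hold: (tr A)·I_{mn} − (tr_2 A) ⊗ I_n ≥ (I_m ⊗ (tr_1 A) − A) + (m−1)(n−1)λ_min(A)·I_{mn}; (tr A)·I_{mn} − (tr_2 A) ⊗ I_n ≥ −(I_m ⊗ (tr_1 A) − A) + (m−1)(n+1)λ_min(A)·I_{mn}; (tr A)·I_{mn} − (tr_2 A) ⊗ I_n ≤ (I_m ⊗ (tr_1 A) − A) + (m−1)(n−1)λ_max(A)·I_{mn}; and (tr A)·I_{mn} − (tr_2 A) ⊗ I_n ≤ −(I_m ⊗ (tr_1 A) − A) + (m−1)(n+1)λ_max(A)·I_{mn}. -/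
open Matrix Kronecker BigOperators
open scoped ComplexOrder

noncomputable section

section SumLemmas

variable {α β γ δ : Type*} [Fintype α] [Fintype β] [Fintype γ] [Fintype δ]

private lemma sswap12 (f : α → β → γ → δ → ℂ) :
    ∑ a, ∑ b, ∑ c, ∑ d, f a b c d = ∑ b, ∑ a, ∑ c, ∑ d, f a b c d :=
  Finset.sum_comm

private lemma sswap23 (f : α → β → γ → δ → ℂ) :
    ∑ a, ∑ b, ∑ c, ∑ d, f a b c d = ∑ a, ∑ c, ∑ b, ∑ d, f a b c d :=
  Finset.sum_congr rfl fun _ _ => Finset.sum_comm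

private lemma sswap34 (f : α → β → γ → δ → ℂ) :
    ∑ a, ∑ b, ∑ c, ∑ d, f a b c d = ∑ a, ∑ b, ∑ d, ∑ c, f a b c d :=
  Finset.sum_congr rfl fun _ _ => Finset.sum_congr rfl fun _ _ => Finset.sum_comm

private lemma expand_mul (F : α → γ → ℂ) (G : β → δ → ℂ) :
    (∑ a, ∑ c, F a c) * (∑ b, ∑ d, G b d)
      = ∑ a, ∑ b, ∑ c, ∑ d, F a c * G b d := by
  rw [Finset.sum_mul_sum]
  exact Finset.sum_congr rfl fun a _ => Finset.sum_congr rfl fun b _ =>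
    Finset.sum_mul_sum _ _ _ _


end SumLemmas

section Core

variable {m n : ℕ}

private lemma core_sym (f : Fin m → Fin m → Fin n → Fin n → ℂ)
    (hf : ∀ i j r s, f i j r s + f j i r s + f i j s r + f j i s r = 0) :
    ∑ i, ∑ j, ∑ r, ∑ s, f i j r s = 0 := by
  have hzero : ∑ i, ∑ j, ∑ r, ∑ s, (f i j r s + f j i r s + f i j s r + f j i s r) = (0:ℂ) := by
    simp only [hf, Finset.sum_const_zero]
  have hsplit : ∑ i, ∑ j, ∑ r, ∑ s, (f i j r s + f j i r s + f i j s r + f j i s r)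
      = (∑ i, ∑ j, ∑ r, ∑ s, f i j r s) + (∑ i, ∑ j, ∑ r, ∑ s, f j i r s)
        + (∑ i, ∑ j, ∑ r, ∑ s, f i j s r) + (∑ i, ∑ j, ∑ r, ∑ s, f j i s r) := by
    simp only [Finset.sum_add_distrib]
  have e1 : ∑ i, ∑ j, ∑ r, ∑ s, f j i r s = ∑ i, ∑ j, ∑ r, ∑ s, f i j r s :=
    (sswap12 f).symm
  have e2 : ∑ i, ∑ j, ∑ r, ∑ s, f i j s r = ∑ i, ∑ j, ∑ r, ∑ s, f i j r s :=
    (sswap34 f).symm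
  have e3 : ∑ i, ∑ j, ∑ r, ∑ s, f j i s r = ∑ i, ∑ j, ∑ r, ∑ s, f i j r s :=
    ((sswap34 (fun i j r s => f j i r s)).symm).trans e1
  rw [hsplit, e1, e2, e3] at hzero
  linear_combination hzero / 4

end Core

section Key

variable {m n : ℕ}

private lemma key1 (u w x y : Fin m → Fin n → ℂ) :
    (∑ i, ∑ r, u i r * w i r) * (∑ j, ∑ s, x j s * y j s)
      - (∑ r, ∑ s, (∑ i, u i s * y i r) * (∑ j, w j s * x j r))
      - (∑ i, ∑ j, (∑ r, u i r * y j r) * (∑ s, w i s * x j s))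
      + (∑ i, ∑ r, w i r * x i r) * (∑ j, ∑ s, u j s * y j s)
    = (1/4) * ∑ i, ∑ j, ∑ r, ∑ s,
        (u i r * x j s - u i s * x j r - u j r * x i s + u j s * x i r) *
        (w i r * y j s - w i s * y j r - w j r * y i s + w j s * y i r) := by
  have ha : (∑ i, ∑ r, u i r * w i r) * (∑ j, ∑ s, x j s * y j s)
      = ∑ i, ∑ j, ∑ r, ∑ s, (u i r * w i r) * (x j s * y j s) :=
    expand_mul (fun i r => u i r * w i r) (fun j s => x j s * y j s)
  have hT : (∑ i, ∑ r, w i r * x i r) * (∑ j, ∑ s, u j s * y j s)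
      = ∑ i, ∑ j, ∑ r, ∑ s, (w i r * x i r) * (u j s * y j s) :=
    expand_mul (fun i r => w i r * x i r) (fun j s => u j s * y j s)
  have hH : (∑ i, ∑ j, (∑ r, u i r * y j r) * (∑ s, w i s * x j s))
      = ∑ i, ∑ j, ∑ r, ∑ s, (u i r * y j r) * (w i s * x j s) :=
    Finset.sum_congr rfl fun i _ => Finset.sum_congr rfl fun j _ =>
      Finset.sum_mul_sum _ _ _ _
  have hG : (∑ r, ∑ s, (∑ i, u i s * y i r) * (∑ j, w j s * x j r))
      = ∑ i, ∑ j, ∑ r, ∑ s, (u i s * y i r) * (w j s * x j r) := by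
    calc ∑ r, ∑ s, (∑ i, u i s * y i r) * (∑ j, w j s * x j r)
        = ∑ r, ∑ s, ∑ i, ∑ j, (u i s * y i r) * (w j s * x j r) :=
          Finset.sum_congr rfl fun r _ => Finset.sum_congr rfl fun s _ =>
            Finset.sum_mul_sum _ _ _ _
      _ = ∑ r, ∑ i, ∑ s, ∑ j, (u i s * y i r) * (w j s * x j r) :=
          sswap23 (fun r s i j => (u i s * y i r) * (w j s * x j r))
      _ = ∑ i, ∑ r, ∑ s, ∑ j, (u i s * y i r) * (w j s * x j r) :=
          sswap12 (fun r i s j => (u i s * y i r) * (w j s * x j r))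
      _ = ∑ i, ∑ r, ∑ j, ∑ s, (u i s * y i r) * (w j s * x j r) :=
          sswap34 (fun i r s j => (u i s * y i r) * (w j s * x j r))
      _ = ∑ i, ∑ j, ∑ r, ∑ s, (u i s * y i r) * (w j s * x j r) :=
          sswap23 (fun i r j s => (u i s * y i r) * (w j s * x j r))
  rw [ha, hT, hH, hG, ← sub_eq_zero]
  simp only [Finset.mul_sum]
  simp only [← Finset.sum_sub_distrib, ← Finset.sum_add_distrib]
  exact core_sym _ (fun i j r s => by ring)

private lemma key2 (u w x y : Fin m → Fin n → ℂ) :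
    (∑ i, ∑ r, u i r * w i r) * (∑ j, ∑ s, x j s * y j s)
      - (∑ r, ∑ s, (∑ i, u i s * y i r) * (∑ j, w j s * x j r))
      + (∑ i, ∑ j, (∑ r, u i r * y j r) * (∑ s, w i s * x j s))
      - (∑ i, ∑ r, w i r * x i r) * (∑ j, ∑ s, u j s * y j s)
    = (1/4) * ∑ i, ∑ j, ∑ r, ∑ s,
        (u i r * x j s + u i s * x j r - u j r * x i s - u j s * x i r) *
        (w i r * y j s + w i s * y j r - w j r * y i s - w j s * y i r) := by
  have ha : (∑ i, ∑ r, u i r * w i r) * (∑ j, ∑ s, x j s * y j s)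
      = ∑ i, ∑ j, ∑ r, ∑ s, (u i r * w i r) * (x j s * y j s) :=
    expand_mul (fun i r => u i r * w i r) (fun j s => x j s * y j s)
  have hT : (∑ i, ∑ r, w i r * x i r) * (∑ j, ∑ s, u j s * y j s)
      = ∑ i, ∑ j, ∑ r, ∑ s, (w i r * x i r) * (u j s * y j s) :=
    expand_mul (fun i r => w i r * x i r) (fun j s => u j s * y j s)
  have hH : (∑ i, ∑ j, (∑ r, u i r * y j r) * (∑ s, w i s * x j s))
      = ∑ i, ∑ j, ∑ r, ∑ s, (u i r * y j r) * (w i s * x j s) :=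
    Finset.sum_congr rfl fun i _ => Finset.sum_congr rfl fun j _ =>
      Finset.sum_mul_sum _ _ _ _
  have hG : (∑ r, ∑ s, (∑ i, u i s * y i r) * (∑ j, w j s * x j r))
      = ∑ i, ∑ j, ∑ r, ∑ s, (u i s * y i r) * (w j s * x j r) := by
    calc ∑ r, ∑ s, (∑ i, u i s * y i r) * (∑ j, w j s * x j r)
        = ∑ r, ∑ s, ∑ i, ∑ j, (u i s * y i r) * (w j s * x j r) :=
          Finset.sum_congr rfl fun r _ => Finset.sum_congr rfl fun s _ =>
            Finset.sum_mul_sum _ _ _ _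
      _ = ∑ r, ∑ i, ∑ s, ∑ j, (u i s * y i r) * (w j s * x j r) :=
          sswap23 (fun r s i j => (u i s * y i r) * (w j s * x j r))
      _ = ∑ i, ∑ r, ∑ s, ∑ j, (u i s * y i r) * (w j s * x j r) :=
          sswap12 (fun r i s j => (u i s * y i r) * (w j s * x j r))
      _ = ∑ i, ∑ r, ∑ j, ∑ s, (u i s * y i r) * (w j s * x j r) :=
          sswap34 (fun i r s j => (u i s * y i r) * (w j s * x j r))
      _ = ∑ i, ∑ j, ∑ r, ∑ s, (u i s * y i r) * (w j s * x j r) :=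
          sswap23 (fun i r j s => (u i s * y i r) * (w j s * x j r))
  rw [ha, hT, hH, hG, ← sub_eq_zero]
  simp only [Finset.mul_sum]
  simp only [← Finset.sum_sub_distrib, ← Finset.sum_add_distrib]
  exact core_sym _ (fun i j r s => by ring)

end Key

section QF

variable {m n : ℕ}

private lemma tswap12 {α β γ : Type*} [Fintype α] [Fintype β] [Fintype γ]
    (f : α → β → γ → ℂ) :
    ∑ a, ∑ b, ∑ c, f a b c = ∑ b, ∑ a, ∑ c, f a b c := Finset.sum_comm

private lemma tswap23 {α β γ : Type*} [Fintype α] [Fintype β] [Fintype γ]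
    (f : α → β → γ → ℂ) :
    ∑ a, ∑ b, ∑ c, f a b c = ∑ a, ∑ c, ∑ b, f a b c :=
  Finset.sum_congr rfl fun _ _ => Finset.sum_comm

private lemma trace_outer (v : Fin m × Fin n → ℂ) :
    (vecMulVec (star v) v).trace = ∑ i, ∑ r, star (v (i,r)) * v (i,r) := by
  simp [Matrix.trace, Matrix.diag, vecMulVec_apply, Fintype.sum_prod_type]

private lemma tr2_outer (v : Fin m × Fin n → ℂ) (i j : Fin m) :
    tr2 (vecMulVec (star v) v) i j = ∑ t, star (v (i,t)) * v (j,t) := by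
  simp [tr2, vecMulVec_apply]

private lemma tr1_outer (v : Fin m × Fin n → ℂ) (r s : Fin n) :
    tr1 (vecMulVec (star v) v) r s = ∑ a, star (v (a,r)) * v (a,s) := by
  simp [tr1, vecMulVec_apply]

private lemma qf_one (x : Fin m × Fin n → ℂ) :
    star x ⬝ᵥ ((1 : Matrix (Fin m × Fin n) (Fin m × Fin n) ℂ) *ᵥ x)
      = ∑ j, ∑ s, x (j,s) * star (x (j,s)) := by
  rw [Matrix.one_mulVec]
  simp [dotProduct, Fintype.sum_prod_type, mul_comm]

private lemma qf_kron_one (P : Matrix (Fin m) (Fin m) ℂ) (x : Fin m × Fin n → ℂ) :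
    star x ⬝ᵥ ((P ⊗ₖ (1 : Matrix (Fin n) (Fin n) ℂ)) *ᵥ x)
      = ∑ r, ∑ i, ∑ j, star (x (i,r)) * (P i j * x (j,r)) := by
  simp only [dotProduct, Matrix.mulVec, Fintype.sum_prod_type, Pi.star_apply,
    kroneckerMap_apply, Matrix.one_apply, mul_ite, ite_mul, mul_one, one_mul, mul_zero,
    zero_mul, Finset.sum_ite_eq, Finset.sum_ite_eq', Finset.mem_univ, if_true]
  simp only [Finset.mul_sum]
  exact tswap12 (fun i r j => star (x (i,r)) * (P i j * x (j,r)))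

private lemma qf_one_kron (N : Matrix (Fin n) (Fin n) ℂ) (x : Fin m × Fin n → ℂ) :
    star x ⬝ᵥ (((1 : Matrix (Fin m) (Fin m) ℂ) ⊗ₖ N) *ᵥ x)
      = ∑ i, ∑ r, ∑ s, star (x (i,r)) * (N r s * x (i,s)) := by
  simp only [dotProduct, Matrix.mulVec, Fintype.sum_prod_type, Pi.star_apply,
    kroneckerMap_apply, Matrix.one_apply, ite_mul, one_mul, zero_mul]
  refine Finset.sum_congr rfl fun i _ => Finset.sum_congr rfl fun r _ => ?_
  simp only [Finset.mul_sum]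
  rw [Finset.sum_comm]
  simp only [mul_ite, mul_zero, Finset.sum_ite_eq, Finset.mem_univ, if_true]

private lemma qf_outer (v x : Fin m × Fin n → ℂ) :
    star x ⬝ᵥ ((vecMulVec (star v) v) *ᵥ x)
      = (∑ i, ∑ r, v (i,r) * x (i,r)) * (∑ j, ∑ s, star (v (j,s)) * star (x (j,s))) := by
  simp only [dotProduct, Matrix.mulVec, Pi.star_apply, vecMulVec_apply]
  have h : ∀ p : Fin m × Fin n, star (x p) * ∑ q : Fin m × Fin n, star (v p) * v q * x q
      = (star (v p) * star (x p)) * ∑ q : Fin m × Fin n, v q * x q := by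
    intro p
    rw [Finset.mul_sum, Finset.mul_sum]
    exact Finset.sum_congr rfl fun q _ => by ring
  simp only [h]
  rw [← Finset.sum_mul, mul_comm]
  rw [Fintype.sum_prod_type, Fintype.sum_prod_type]

private lemma p2qf (v x : Fin m × Fin n → ℂ) :
    star x ⬝ᵥ ((tr2 (vecMulVec (star v) v) ⊗ₖ (1 : Matrix (Fin n) (Fin n) ℂ)) *ᵥ x)
      = ∑ r, ∑ s, (∑ i, star (v (i,s)) * star (x (i,r))) * (∑ j, v (j,s) * x (j,r)) := by
  rw [qf_kron_one]
  refine Finset.sum_congr rfl fun r _ => ?_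
  calc ∑ i, ∑ j, star (x (i,r)) * (tr2 (vecMulVec (star v) v) i j * x (j,r))
      = ∑ i, ∑ j, ∑ s, (star (v (i,s)) * star (x (i,r))) * (v (j,s) * x (j,r)) := by
        refine Finset.sum_congr rfl fun i _ => Finset.sum_congr rfl fun j _ => ?_
        rw [tr2_outer, Finset.sum_mul, Finset.mul_sum]
        exact Finset.sum_congr rfl fun s _ => by ring
    _ = ∑ i, ∑ s, ∑ j, (star (v (i,s)) * star (x (i,r))) * (v (j,s) * x (j,r)) :=
        tswap23 _
    _ = ∑ s, ∑ i, ∑ j, (star (v (i,s)) * star (x (i,r))) * (v (j,s) * x (j,r)) :=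
        tswap12 _
    _ = ∑ s, (∑ i, star (v (i,s)) * star (x (i,r))) * (∑ j, v (j,s) * x (j,r)) :=
        Finset.sum_congr rfl fun s _ => (Finset.sum_mul_sum _ _ _ _).symm

private lemma p3qf (v x : Fin m × Fin n → ℂ) :
    star x ⬝ᵥ (((1 : Matrix (Fin m) (Fin m) ℂ) ⊗ₖ tr1 (vecMulVec (star v) v)) *ᵥ x)
      = ∑ i, ∑ j, (∑ r, star (v (i,r)) * star (x (j,r))) * (∑ s, v (i,s) * x (j,s)) := by
  rw [qf_one_kron]
  calc ∑ i, ∑ r, ∑ s, star (x (i,r)) * (tr1 (vecMulVec (star v) v) r s * x (i,s))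
      = ∑ i, ∑ r, ∑ s, ∑ a, (star (v (a,r)) * star (x (i,r))) * (v (a,s) * x (i,s)) := by
        refine Finset.sum_congr rfl fun i _ => Finset.sum_congr rfl fun r _ =>
          Finset.sum_congr rfl fun s _ => ?_
        rw [tr1_outer, Finset.sum_mul, Finset.mul_sum]
        exact Finset.sum_congr rfl fun a _ => by ring
    _ = ∑ i, ∑ r, ∑ a, ∑ s, (star (v (a,r)) * star (x (i,r))) * (v (a,s) * x (i,s)) :=
        sswap34 _
    _ = ∑ i, ∑ a, ∑ r, ∑ s, (star (v (a,r)) * star (x (i,r))) * (v (a,s) * x (i,s)) :=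
        sswap23 _
    _ = ∑ a, ∑ i, ∑ r, ∑ s, (star (v (a,r)) * star (x (i,r))) * (v (a,s) * x (i,s)) :=
        sswap12 _
    _ = ∑ a, ∑ i, (∑ r, star (v (a,r)) * star (x (i,r))) * (∑ s, v (a,s) * x (i,s)) :=
        Finset.sum_congr rfl fun a _ => Finset.sum_congr rfl fun i _ =>
          (Finset.sum_mul_sum _ _ _ _).symm

private lemma p1qf (v x : Fin m × Fin n → ℂ) :
    star x ⬝ᵥ (((vecMulVec (star v) v).trace • (1 : Matrix (Fin m × Fin n) (Fin m × Fin n) ℂ)) *ᵥ x)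
      = (∑ i, ∑ r, star (v (i,r)) * v (i,r)) * (∑ j, ∑ s, x (j,s) * star (x (j,s))) := by
  rw [Matrix.smul_mulVec, dotProduct_smul, smul_eq_mul, qf_one, trace_outer]

end QF


section Phi

variable {m n : ℕ}

private def phi1 (B : Matrix (Fin m × Fin n) (Fin m × Fin n) ℂ) :
    Matrix (Fin m × Fin n) (Fin m × Fin n) ℂ :=
  B.trace • 1 - tr2 B ⊗ₖ (1 : Matrix (Fin n) (Fin n) ℂ)
    - (1 : Matrix (Fin m) (Fin m) ℂ) ⊗ₖ tr1 B + B

private def phi2 (B : Matrix (Fin m × Fin n) (Fin m × Fin n) ℂ) :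
    Matrix (Fin m × Fin n) (Fin m × Fin n) ℂ :=
  B.trace • 1 - tr2 B ⊗ₖ (1 : Matrix (Fin n) (Fin n) ℂ)
    + (1 : Matrix (Fin m) (Fin m) ℂ) ⊗ₖ tr1 B - B

private lemma rank1_qf1 (v x : Fin m × Fin n → ℂ) :
    0 ≤ star x ⬝ᵥ ((phi1 (vecMulVec (star v) v)) *ᵥ x) := by
  unfold phi1
  rw [Matrix.add_mulVec, Matrix.sub_mulVec, Matrix.sub_mulVec, dotProduct_add,
    dotProduct_sub, dotProduct_sub, p1qf, p2qf, p3qf, qf_outer]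
  have hk := key1 (fun i r => star (v (i,r))) (fun i r => v (i,r))
    (fun i r => x (i,r)) (fun i r => star (x (i,r)))
  rw [hk]
  refine mul_nonneg (by rw [Complex.le_def]; norm_num) ?_
  refine Finset.sum_nonneg fun i _ => Finset.sum_nonneg fun j _ =>
    Finset.sum_nonneg fun r _ => Finset.sum_nonneg fun s _ => ?_
  have h2 : (star (v (i,r)) * x (j,s) - star (v (i,s)) * x (j,r)
        - star (v (j,r)) * x (i,s) + star (v (j,s)) * x (i,r))
      = star (v (i,r) * star (x (j,s)) - v (i,s) * star (x (j,r))
        - v (j,r) * star (x (i,s)) + v (j,s) * star (x (i,r))) := by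
    simp only [star_sub, star_add, star_mul', star_star]
  rw [h2]
  exact star_mul_self_nonneg _

private lemma rank1_qf2 (v x : Fin m × Fin n → ℂ) :
    0 ≤ star x ⬝ᵥ ((phi2 (vecMulVec (star v) v)) *ᵥ x) := by
  unfold phi2
  rw [Matrix.sub_mulVec, Matrix.add_mulVec, Matrix.sub_mulVec, dotProduct_sub,
    dotProduct_add, dotProduct_sub, p1qf, p2qf, p3qf, qf_outer]
  have hk := key2 (fun i r => star (v (i,r))) (fun i r => v (i,r))
    (fun i r => x (i,r)) (fun i r => star (x (i,r)))
  rw [hk]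
  refine mul_nonneg (by rw [Complex.le_def]; norm_num) ?_
  refine Finset.sum_nonneg fun i _ => Finset.sum_nonneg fun j _ =>
    Finset.sum_nonneg fun r _ => Finset.sum_nonneg fun s _ => ?_
  have h2 : (star (v (i,r)) * x (j,s) + star (v (i,s)) * x (j,r)
        - star (v (j,r)) * x (i,s) - star (v (j,s)) * x (i,r))
      = star (v (i,r) * star (x (j,s)) + v (i,s) * star (x (j,r))
        - v (j,r) * star (x (i,s)) - v (j,s) * star (x (i,r))) := by
    simp only [star_sub, star_add, star_mul', star_star]
  rw [h2]
  exact star_mul_self_nonneg _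

end Phi

section Herm

variable {m n : ℕ}

private lemma sub_kron (X Y : Matrix (Fin m) (Fin m) ℂ) (Z : Matrix (Fin n) (Fin n) ℂ) :
    (X - Y) ⊗ₖ Z = X ⊗ₖ Z - Y ⊗ₖ Z := by
  ext ⟨i,r⟩ ⟨j,s⟩
  simp [Matrix.kroneckerMap_apply, sub_mul]

private lemma kron_sub (X : Matrix (Fin m) (Fin m) ℂ) (Y Z : Matrix (Fin n) (Fin n) ℂ) :
    X ⊗ₖ (Y - Z) = X ⊗ₖ Y - X ⊗ₖ Z := by
  ext ⟨i,r⟩ ⟨j,s⟩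
  simp [Matrix.kroneckerMap_apply, mul_sub]

private lemma kron_conjTranspose (X : Matrix (Fin m) (Fin m) ℂ) (Y : Matrix (Fin n) (Fin n) ℂ) :
    (X ⊗ₖ Y)ᴴ = Xᴴ ⊗ₖ Yᴴ := by
  ext ⟨i,r⟩ ⟨j,s⟩
  simp [Matrix.kroneckerMap_apply, Matrix.conjTranspose_apply]

private lemma tr2_isHermitian {B : Matrix (Fin m × Fin n) (Fin m × Fin n) ℂ}
    (hB : B.IsHermitian) : (tr2 B).IsHermitian := by
  ext i j
  simp only [Matrix.conjTranspose_apply, tr2, star_sum]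
  exact Finset.sum_congr rfl fun r _ => hB.apply _ _

private lemma tr1_isHermitian {B : Matrix (Fin m × Fin n) (Fin m × Fin n) ℂ}
    (hB : B.IsHermitian) : (tr1 B).IsHermitian := by
  ext r s
  simp only [Matrix.conjTranspose_apply, tr1, star_sum]
  exact Finset.sum_congr rfl fun i _ => hB.apply _ _

private lemma trace_smul_one_isHermitian {B : Matrix (Fin m × Fin n) (Fin m × Fin n) ℂ}
    (hB : B.IsHermitian) :
    (B.trace • (1 : Matrix (Fin m × Fin n) (Fin m × Fin n) ℂ)).IsHermitian := by
  have htr : star B.trace = B.trace := by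
    conv_rhs => rw [← hB.eq]
    rw [Matrix.trace_conjTranspose]
  unfold Matrix.IsHermitian
  rw [Matrix.conjTranspose_smul, Matrix.conjTranspose_one, htr]

private lemma phi1_isHermitian {B : Matrix (Fin m × Fin n) (Fin m × Fin n) ℂ}
    (hB : B.IsHermitian) : (phi1 B).IsHermitian := by
  unfold phi1
  refine (((trace_smul_one_isHermitian hB).sub ?_).sub ?_).add hB
  · unfold Matrix.IsHermitian
    rw [kron_conjTranspose, Matrix.conjTranspose_one, (tr2_isHermitian hB).eq]
  · unfold Matrix.IsHermitian
    rw [kron_conjTranspose, Matrix.conjTranspose_one, (tr1_isHermitian hB).eq]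

private lemma phi2_isHermitian {B : Matrix (Fin m × Fin n) (Fin m × Fin n) ℂ}
    (hB : B.IsHermitian) : (phi2 B).IsHermitian := by
  unfold phi2
  refine (((trace_smul_one_isHermitian hB).sub ?_).add ?_).sub hB
  · unfold Matrix.IsHermitian
    rw [kron_conjTranspose, Matrix.conjTranspose_one, (tr2_isHermitian hB).eq]
  · unfold Matrix.IsHermitian
    rw [kron_conjTranspose, Matrix.conjTranspose_one, (tr1_isHermitian hB).eq]

end Herm

section Pos

variable {m n : ℕ}

private lemma tr2_sum {κ : Type*} [Fintype κ]
    (f : κ → Matrix (Fin m × Fin n) (Fin m × Fin n) ℂ) :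
    tr2 (∑ k, f k) = ∑ k, tr2 (f k) := by
  ext i j
  simp only [tr2, Matrix.sum_apply]
  exact Finset.sum_comm

private lemma tr1_sum {κ : Type*} [Fintype κ]
    (f : κ → Matrix (Fin m × Fin n) (Fin m × Fin n) ℂ) :
    tr1 (∑ k, f k) = ∑ k, tr1 (f k) := by
  ext r s
  simp only [tr1, Matrix.sum_apply]
  exact Finset.sum_comm

private lemma phi1_sum {κ : Type*} [Fintype κ]
    (f : κ → Matrix (Fin m × Fin n) (Fin m × Fin n) ℂ) :
    phi1 (∑ k, f k) = ∑ k, phi1 (f k) := by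
  unfold phi1
  rw [Matrix.trace_sum, tr2_sum, tr1_sum, Finset.sum_smul]
  rw [show (∑ k, tr2 (f k)) ⊗ₖ (1 : Matrix (Fin n) (Fin n) ℂ)
      = ∑ k, tr2 (f k) ⊗ₖ (1 : Matrix (Fin n) (Fin n) ℂ) by
    ext ⟨i,r⟩ ⟨j,s⟩
    simp [Matrix.kroneckerMap_apply, Matrix.sum_apply, Finset.sum_mul]]
  rw [show (1 : Matrix (Fin m) (Fin m) ℂ) ⊗ₖ (∑ k, tr1 (f k))
      = ∑ k, (1 : Matrix (Fin m) (Fin m) ℂ) ⊗ₖ tr1 (f k) by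
    ext ⟨i,r⟩ ⟨j,s⟩
    simp [Matrix.kroneckerMap_apply, Matrix.sum_apply, Finset.mul_sum]]
  simp only [← Finset.sum_sub_distrib, ← Finset.sum_add_distrib]

private lemma phi2_sum {κ : Type*} [Fintype κ]
    (f : κ → Matrix (Fin m × Fin n) (Fin m × Fin n) ℂ) :
    phi2 (∑ k, f k) = ∑ k, phi2 (f k) := by
  unfold phi2
  rw [Matrix.trace_sum, tr2_sum, tr1_sum, Finset.sum_smul]
  rw [show (∑ k, tr2 (f k)) ⊗ₖ (1 : Matrix (Fin n) (Fin n) ℂ)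
      = ∑ k, tr2 (f k) ⊗ₖ (1 : Matrix (Fin n) (Fin n) ℂ) by
    ext ⟨i,r⟩ ⟨j,s⟩
    simp [Matrix.kroneckerMap_apply, Matrix.sum_apply, Finset.sum_mul]]
  rw [show (1 : Matrix (Fin m) (Fin m) ℂ) ⊗ₖ (∑ k, tr1 (f k))
      = ∑ k, (1 : Matrix (Fin m) (Fin m) ℂ) ⊗ₖ tr1 (f k) by
    ext ⟨i,r⟩ ⟨j,s⟩
    simp [Matrix.kroneckerMap_apply, Matrix.sum_apply, Finset.mul_sum]]
  simp only [← Finset.sum_sub_distrib, ← Finset.sum_add_distrib]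

private lemma qf_sum {κ : Type*} [Fintype κ]
    (N : κ → Matrix (Fin m × Fin n) (Fin m × Fin n) ℂ) (x : Fin m × Fin n → ℂ) :
    star x ⬝ᵥ (∑ k, N k) *ᵥ x = ∑ k, star x ⬝ᵥ (N k) *ᵥ x := by
  simp only [dotProduct, Matrix.mulVec, Matrix.sum_apply, Finset.sum_mul,
    Finset.mul_sum, Pi.star_apply]
  rw [tswap23 (fun p q k => star (x p) * (N k p q * x q))]
  exact tswap12 (fun p k q => star (x p) * (N k p q * x q))

private lemma decomp_s12 (C : Matrix (Fin m × Fin n) (Fin m × Fin n) ℂ) :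
    Cᴴ * C = ∑ k, vecMulVec (star (C k)) (C k) := by
  ext p q
  simp [Matrix.mul_apply, Matrix.conjTranspose_apply, Matrix.vecMulVec_apply,
    Matrix.sum_apply]

private lemma phi1_posSemidef {B : Matrix (Fin m × Fin n) (Fin m × Fin n) ℂ}
    (hB : B.PosSemidef) : (phi1 B).PosSemidef := by
  refine Matrix.posSemidef_iff_dotProduct_mulVec.mpr ⟨phi1_isHermitian hB.1, ?_⟩
  obtain ⟨C, rfl⟩ : ∃ C : Matrix (Fin m × Fin n) (Fin m × Fin n) ℂ, B = Cᴴ * C := by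
    open scoped MatrixOrder in exact CStarAlgebra.nonneg_iff_eq_star_mul_self.mp hB.nonneg
  intro x
  rw [decomp_s12 C, phi1_sum, qf_sum]
  exact Finset.sum_nonneg fun k _ => rank1_qf1 (C k) x

private lemma phi2_posSemidef {B : Matrix (Fin m × Fin n) (Fin m × Fin n) ℂ}
    (hB : B.PosSemidef) : (phi2 B).PosSemidef := by
  refine Matrix.posSemidef_iff_dotProduct_mulVec.mpr ⟨phi2_isHermitian hB.1, ?_⟩
  obtain ⟨C, rfl⟩ : ∃ C : Matrix (Fin m × Fin n) (Fin m × Fin n) ℂ, B = Cᴴ * C := by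
    open scoped MatrixOrder in exact CStarAlgebra.nonneg_iff_eq_star_mul_self.mp hB.nonneg
  intro x
  rw [decomp_s12 C, phi2_sum, qf_sum]
  exact Finset.sum_nonneg fun k _ => rank1_qf2 (C k) x

end Pos

section Eig

private lemma shift_psd_min {N : Type*} [Fintype N] [DecidableEq N]
    {A : Matrix N N ℂ} (hA : A.IsHermitian) (c : ℝ) (hc : ∀ i, c ≤ hA.eigenvalues i) :
    (A - (c : ℂ) • 1).PosSemidef := by
  have hU : (hA.eigenvectorUnitary : Matrix N N ℂ) *
      star (hA.eigenvectorUnitary : Matrix N N ℂ) = 1 :=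
    (Matrix.mem_unitaryGroup_iff).mp hA.eigenvectorUnitary.2
  have key : A - (c : ℂ) • 1
      = (hA.eigenvectorUnitary : Matrix N N ℂ) *
        Matrix.diagonal (fun i => ((hA.eigenvalues i - c : ℝ) : ℂ)) *
        ((hA.eigenvectorUnitary : Matrix N N ℂ))ᴴ := by
    have hd : Matrix.diagonal (fun i => ((hA.eigenvalues i - c : ℝ) : ℂ))
        = Matrix.diagonal (RCLike.ofReal ∘ hA.eigenvalues) - (c : ℂ) • 1 := by
      ext i j
      rcases eq_or_ne i j with rfl | h
      · simp [Matrix.one_apply, Complex.ofReal_sub]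
      · simp [Matrix.diagonal_apply_ne _ h, Matrix.one_apply_ne h]
    rw [hd]
    simp only [Matrix.sub_mul, Matrix.mul_sub]
    rw [Matrix.star_eq_conjTranspose] at hU
    have h1 : (hA.eigenvectorUnitary : Matrix N N ℂ) * ((c : ℂ) • 1) *
        ((hA.eigenvectorUnitary : Matrix N N ℂ))ᴴ = (c : ℂ) • 1 := by
      rw [Matrix.mul_smul, Matrix.mul_one, Matrix.smul_mul, hU]
    rw [h1]
    congr 1
    conv_lhs => rw [hA.spectral_theorem]
    rw [Unitary.conjStarAlgAut_apply, Matrix.star_eq_conjTranspose]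
  rw [key]
  exact (Matrix.posSemidef_diagonal_iff.mpr fun i =>
    Complex.zero_le_real.mpr (by linarith [hc i])).mul_mul_conjTranspose_same _

private lemma shift_psd_max {N : Type*} [Fintype N] [DecidableEq N]
    {A : Matrix N N ℂ} (hA : A.IsHermitian) (c : ℝ) (hc : ∀ i, hA.eigenvalues i ≤ c) :
    ((c : ℂ) • 1 - A).PosSemidef := by
  have hU : (hA.eigenvectorUnitary : Matrix N N ℂ) *
      star (hA.eigenvectorUnitary : Matrix N N ℂ) = 1 :=
    (Matrix.mem_unitaryGroup_iff).mp hA.eigenvectorUnitary.2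
  have key : (c : ℂ) • 1 - A
      = (hA.eigenvectorUnitary : Matrix N N ℂ) *
        Matrix.diagonal (fun i => ((c - hA.eigenvalues i : ℝ) : ℂ)) *
        ((hA.eigenvectorUnitary : Matrix N N ℂ))ᴴ := by
    have hd : Matrix.diagonal (fun i => ((c - hA.eigenvalues i : ℝ) : ℂ))
        = (c : ℂ) • 1 - Matrix.diagonal (RCLike.ofReal ∘ hA.eigenvalues) := by
      ext i j
      rcases eq_or_ne i j with rfl | h
      · simp [Matrix.one_apply, Complex.ofReal_sub]
      · simp [Matrix.diagonal_apply_ne _ h, Matrix.one_apply_ne h]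
    rw [hd]
    simp only [Matrix.sub_mul, Matrix.mul_sub]
    rw [Matrix.star_eq_conjTranspose] at hU
    have h1 : (hA.eigenvectorUnitary : Matrix N N ℂ) * ((c : ℂ) • 1) *
        ((hA.eigenvectorUnitary : Matrix N N ℂ))ᴴ = (c : ℂ) • 1 := by
      rw [Matrix.mul_smul, Matrix.mul_one, Matrix.smul_mul, hU]
    rw [h1]
    congr 1
    conv_lhs => rw [hA.spectral_theorem]
    rw [Unitary.conjStarAlgAut_apply, Matrix.star_eq_conjTranspose]
  rw [key]
  exact (Matrix.posSemidef_diagonal_iff.mpr fun i =>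
    Complex.zero_le_real.mpr (by linarith [hc i])).mul_mul_conjTranspose_same _

private lemma lamMin_le {N : Type*} [Fintype N] [DecidableEq N]
    {A : Matrix N N ℂ} (hA : A.IsHermitian) (i : N) : lamMin hA ≤ hA.eigenvalues i :=
  ciInf_le (Set.Finite.bddBelow (Set.finite_range _)) i

private lemma le_lamMax {N : Type*} [Fintype N] [DecidableEq N]
    {A : Matrix N N ℂ} (hA : A.IsHermitian) (i : N) : hA.eigenvalues i ≤ lamMax hA :=
  le_ciSup (Set.Finite.bddAbove (Set.finite_range _)) i

end Eig

section Shift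

variable {m n : ℕ}

private lemma tr2_sub (X Y : Matrix (Fin m × Fin n) (Fin m × Fin n) ℂ) :
    tr2 (X - Y) = tr2 X - tr2 Y := by
  ext i j
  simp [tr2, Finset.sum_sub_distrib]

private lemma tr1_sub (X Y : Matrix (Fin m × Fin n) (Fin m × Fin n) ℂ) :
    tr1 (X - Y) = tr1 X - tr1 Y := by
  ext r s
  simp [tr1, Finset.sum_sub_distrib]

private lemma tr2_smul_one (c : ℂ) :
    tr2 (c • (1 : Matrix (Fin m × Fin n) (Fin m × Fin n) ℂ)) = (c * n) • 1 := by
  ext i j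
  rcases eq_or_ne i j with rfl | h
  · simp [tr2, Matrix.one_apply, Finset.sum_const, Finset.card_univ, nsmul_eq_mul]
    ring
  · simp [tr2, Matrix.one_apply, Prod.ext_iff, h]

private lemma tr1_smul_one (c : ℂ) :
    tr1 (c • (1 : Matrix (Fin m × Fin n) (Fin m × Fin n) ℂ)) = (c * m) • 1 := by
  ext r s
  rcases eq_or_ne r s with rfl | h
  · simp [tr1, Matrix.one_apply, Finset.sum_const, Finset.card_univ, nsmul_eq_mul]
    ring
  · simp [tr1, Matrix.one_apply, Prod.ext_iff, h]

private lemma phi1_shift_min (A : Matrix (Fin m × Fin n) (Fin m × Fin n) ℂ) (t : ℝ) :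
    phi1 (A - ((t : ℝ) : ℂ) • 1)
      = phi1 A - ((((m : ℝ) - 1) * ((n : ℝ) - 1) * t : ℝ) : ℂ) • 1 := by
  unfold phi1
  rw [Matrix.trace_sub, Matrix.trace_smul, Matrix.trace_one, tr2_sub, tr2_smul_one,
    tr1_sub, tr1_smul_one, sub_kron, kron_sub, Matrix.smul_kronecker,
    Matrix.kronecker_smul, Matrix.one_kronecker_one]
  simp only [Fintype.card_prod, Fintype.card_fin, smul_eq_mul]
  push_cast
  module

private lemma phi1_shift_max (A : Matrix (Fin m × Fin n) (Fin m × Fin n) ℂ) (t : ℝ) :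
    phi1 (((t : ℝ) : ℂ) • 1 - A)
      = ((((m : ℝ) - 1) * ((n : ℝ) - 1) * t : ℝ) : ℂ) • 1 - phi1 A := by
  unfold phi1
  rw [Matrix.trace_sub, Matrix.trace_smul, Matrix.trace_one, tr2_sub, tr2_smul_one,
    tr1_sub, tr1_smul_one, sub_kron, kron_sub, Matrix.smul_kronecker,
    Matrix.kronecker_smul, Matrix.one_kronecker_one]
  simp only [Fintype.card_prod, Fintype.card_fin, smul_eq_mul]
  push_cast
  module

private lemma phi2_shift_min (A : Matrix (Fin m × Fin n) (Fin m × Fin n) ℂ) (t : ℝ) :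
    phi2 (A - ((t : ℝ) : ℂ) • 1)
      = phi2 A - ((((m : ℝ) - 1) * ((n : ℝ) + 1) * t : ℝ) : ℂ) • 1 := by
  unfold phi2
  rw [Matrix.trace_sub, Matrix.trace_smul, Matrix.trace_one, tr2_sub, tr2_smul_one,
    tr1_sub, tr1_smul_one, sub_kron, kron_sub, Matrix.smul_kronecker,
    Matrix.kronecker_smul, Matrix.one_kronecker_one]
  simp only [Fintype.card_prod, Fintype.card_fin, smul_eq_mul]
  push_cast
  module

private lemma phi2_shift_max (A : Matrix (Fin m × Fin n) (Fin m × Fin n) ℂ) (t : ℝ) :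
    phi2 (((t : ℝ) : ℂ) • 1 - A)
      = ((((m : ℝ) - 1) * ((n : ℝ) + 1) * t : ℝ) : ℂ) • 1 - phi2 A := by
  unfold phi2
  rw [Matrix.trace_sub, Matrix.trace_smul, Matrix.trace_one, tr2_sub, tr2_smul_one,
    tr1_sub, tr1_smul_one, sub_kron, kron_sub, Matrix.smul_kronecker,
    Matrix.kronecker_smul, Matrix.one_kronecker_one]
  simp only [Fintype.card_prod, Fintype.card_fin, smul_eq_mul]
  push_cast
  module

end Shift

/-- For Hermitian `A ∈ M_m(M_n)`:
`(tr A) I − (tr₂ A) ⊗ I_n ≥ ±(I_m ⊗ (tr₁ A) − A) + (m−1)(n∓1) λ_min(A) I`, and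
`(tr A) I − (tr₂ A) ⊗ I_n ≤ ±(I_m ⊗ (tr₁ A) − A) + (m−1)(n∓1) λ_max(A) I`. -/
theorem stmt12 {m n : ℕ} (A : Matrix (Fin m × Fin n) (Fin m × Fin n) ℂ)
    (hA : A.IsHermitian) :
    (A.trace • (1 : Matrix (Fin m × Fin n) (Fin m × Fin n) ℂ)
      - tr2 A ⊗ₖ (1 : Matrix (Fin n) (Fin n) ℂ)
      - (((1 : Matrix (Fin m) (Fin m) ℂ) ⊗ₖ tr1 A - A)
        + ((((m : ℝ) - 1) * ((n : ℝ) - 1) * lamMin hA : ℝ) : ℂ)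
            • (1 : Matrix (Fin m × Fin n) (Fin m × Fin n) ℂ))).PosSemidef
    ∧ (A.trace • (1 : Matrix (Fin m × Fin n) (Fin m × Fin n) ℂ)
      - tr2 A ⊗ₖ (1 : Matrix (Fin n) (Fin n) ℂ)
      - (-((1 : Matrix (Fin m) (Fin m) ℂ) ⊗ₖ tr1 A - A)
        + ((((m : ℝ) - 1) * ((n : ℝ) + 1) * lamMin hA : ℝ) : ℂ)
            • (1 : Matrix (Fin m × Fin n) (Fin m × Fin n) ℂ))).PosSemidef
    ∧ ((((1 : Matrix (Fin m) (Fin m) ℂ) ⊗ₖ tr1 A - A)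
        + ((((m : ℝ) - 1) * ((n : ℝ) - 1) * lamMax hA : ℝ) : ℂ)
            • (1 : Matrix (Fin m × Fin n) (Fin m × Fin n) ℂ))
      - (A.trace • (1 : Matrix (Fin m × Fin n) (Fin m × Fin n) ℂ)
        - tr2 A ⊗ₖ (1 : Matrix (Fin n) (Fin n) ℂ))).PosSemidef
    ∧ ((-((1 : Matrix (Fin m) (Fin m) ℂ) ⊗ₖ tr1 A - A)
        + ((((m : ℝ) - 1) * ((n : ℝ) + 1) * lamMax hA : ℝ) : ℂ)
            • (1 : Matrix (Fin m × Fin n) (Fin m × Fin n) ℂ))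
      - (A.trace • (1 : Matrix (Fin m × Fin n) (Fin m × Fin n) ℂ)
        - tr2 A ⊗ₖ (1 : Matrix (Fin n) (Fin n) ℂ))).PosSemidef := by
  refine ⟨?_, ?_, ?_, ?_⟩
  · have h := phi1_posSemidef (shift_psd_min hA (lamMin hA) (lamMin_le hA))
    rw [phi1_shift_min] at h
    have e : A.trace • (1 : Matrix (Fin m × Fin n) (Fin m × Fin n) ℂ)
        - tr2 A ⊗ₖ (1 : Matrix (Fin n) (Fin n) ℂ)
        - (((1 : Matrix (Fin m) (Fin m) ℂ) ⊗ₖ tr1 A - A)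
          + ((((m : ℝ) - 1) * ((n : ℝ) - 1) * lamMin hA : ℝ) : ℂ)
              • (1 : Matrix (Fin m × Fin n) (Fin m × Fin n) ℂ))
        = phi1 A - ((((m : ℝ) - 1) * ((n : ℝ) - 1) * lamMin hA : ℝ) : ℂ) • 1 := by
      unfold phi1; abel
    rw [e]
    exact h
  · have h := phi2_posSemidef (shift_psd_min hA (lamMin hA) (lamMin_le hA))
    rw [phi2_shift_min] at h
    have e : A.trace • (1 : Matrix (Fin m × Fin n) (Fin m × Fin n) ℂ)
        - tr2 A ⊗ₖ (1 : Matrix (Fin n) (Fin n) ℂ)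
        - (-((1 : Matrix (Fin m) (Fin m) ℂ) ⊗ₖ tr1 A - A)
          + ((((m : ℝ) - 1) * ((n : ℝ) + 1) * lamMin hA : ℝ) : ℂ)
              • (1 : Matrix (Fin m × Fin n) (Fin m × Fin n) ℂ))
        = phi2 A - ((((m : ℝ) - 1) * ((n : ℝ) + 1) * lamMin hA : ℝ) : ℂ) • 1 := by
      unfold phi2; abel
    rw [e]
    exact h
  · have h := phi1_posSemidef (shift_psd_max hA (lamMax hA) (le_lamMax hA))
    rw [phi1_shift_max] at h
    have e : (((1 : Matrix (Fin m) (Fin m) ℂ) ⊗ₖ tr1 A - A)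
          + ((((m : ℝ) - 1) * ((n : ℝ) - 1) * lamMax hA : ℝ) : ℂ)
              • (1 : Matrix (Fin m × Fin n) (Fin m × Fin n) ℂ))
        - (A.trace • (1 : Matrix (Fin m × Fin n) (Fin m × Fin n) ℂ)
          - tr2 A ⊗ₖ (1 : Matrix (Fin n) (Fin n) ℂ))
        = ((((m : ℝ) - 1) * ((n : ℝ) - 1) * lamMax hA : ℝ) : ℂ) • 1 - phi1 A := by
      unfold phi1; abel
    rw [e]
    exact h
  · have h := phi2_posSemidef (shift_psd_max hA (lamMax hA) (le_lamMax hA))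
    rw [phi2_shift_max] at h
    have e : (-((1 : Matrix (Fin m) (Fin m) ℂ) ⊗ₖ tr1 A - A)
          + ((((m : ℝ) - 1) * ((n : ℝ) + 1) * lamMax hA : ℝ) : ℂ)
              • (1 : Matrix (Fin m × Fin n) (Fin m × Fin n) ℂ))
        - (A.trace • (1 : Matrix (Fin m × Fin n) (Fin m × Fin n) ℂ)
          - tr2 A ⊗ₖ (1 : Matrix (Fin n) (Fin n) ℂ))
        = ((((m : ℝ) - 1) * ((n : ℝ) + 1) * lamMax hA : ℝ) : ℂ) • 1 - phi2 A := by
      unfold phi2; abel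
    rw [e]
    exact h
end
end

section
/- Let A ∈ M_m(M_n) be Hermitian. Then (tr A)·I_{mn} + (tr_2 A) ⊗ I_n ≥ I_m ⊗ (tr_1 A) + A + (m+1)(n−1)λ_min(A)·I_{mn}, and (tr A)·I_{mn} + (tr_2 A) ⊗ I_n ≤ I_m ⊗ (tr_1 A) + A + (m+1)(n−1)λ_max(A)·I_{mn}. -/
open Matrix Kronecker BigOperators
open scoped ComplexOrder

noncomputable section

namespace Stmt13Aux

variable {m n : ℕ}

/-! ### Sum shuffling helpers -/

lemma swapIJ (g : Fin m → Fin m → Fin n → Fin n → ℂ) :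
    (∑ i, ∑ j, ∑ r, ∑ s, g j i r s) = ∑ i, ∑ j, ∑ r, ∑ s, g i j r s :=
  Finset.sum_comm

lemma swapRS (g : Fin m → Fin m → Fin n → Fin n → ℂ) :
    (∑ i, ∑ j, ∑ r, ∑ s, g i j s r) = ∑ i, ∑ j, ∑ r, ∑ s, g i j r s :=
  Finset.sum_congr rfl fun _ _ => Finset.sum_congr rfl fun _ _ => Finset.sum_comm

lemma swapBoth (g : Fin m → Fin m → Fin n → Fin n → ℂ) :
    (∑ i, ∑ j, ∑ r, ∑ s, g j i s r) = ∑ i, ∑ j, ∑ r, ∑ s, g i j r s := by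
  rw [swapIJ (fun i j r s => g i j s r), swapRS]

lemma sym4 (g : Fin m → Fin m → Fin n → Fin n → ℂ) :
    (∑ i, ∑ j, ∑ r, ∑ s, (g i j r s + g j i r s + g i j s r + g j i s r))
      = 4 * ∑ i, ∑ j, ∑ r, ∑ s, g i j r s := by
  simp only [Finset.sum_add_distrib]
  rw [swapIJ g, swapRS g, swapBoth g]; ring

lemma midSwap {α β γ δ : Type*} [Fintype α] [Fintype β] [Fintype γ] [Fintype δ]
    (f : α → β → γ → δ → ℂ) :
    (∑ a, ∑ b, ∑ c, ∑ d, f a b c d) = ∑ a, ∑ c, ∑ b, ∑ d, f a b c d :=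
  Finset.sum_congr rfl fun _ _ => Finset.sum_comm

lemma blockSwap {α β γ δ : Type*} [Fintype α] [Fintype β] [Fintype γ] [Fintype δ]
    (f : α → β → γ → δ → ℂ) :
    (∑ a, ∑ b, ∑ c, ∑ d, f a b c d) = ∑ c, ∑ d, ∑ a, ∑ b, f a b c d := by
  calc (∑ a, ∑ b, ∑ c, ∑ d, f a b c d)
      = ∑ a, ∑ c, ∑ b, ∑ d, f a b c d :=
        Finset.sum_congr rfl fun _ _ => Finset.sum_comm
    _ = ∑ c, ∑ a, ∑ b, ∑ d, f a b c d := Finset.sum_comm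
    _ = ∑ c, ∑ a, ∑ d, ∑ b, f a b c d :=
        Finset.sum_congr rfl fun _ _ => Finset.sum_congr rfl fun _ _ => Finset.sum_comm
    _ = ∑ c, ∑ d, ∑ a, ∑ b, f a b c d :=
        Finset.sum_congr rfl fun _ _ => Finset.sum_comm

/-! ### The key scalar inequality -/

/-- The SOS witness. -/
def Ef (c y : Fin m × Fin n → ℂ) (i j : Fin m) (r s : Fin n) : ℂ :=
  star (c (i, r)) * y (j, s) + star (c (j, r)) * y (i, s)
    - y (i, r) * star (c (j, s)) - y (j, r) * star (c (i, s))

lemma keyNonneg (c y : Fin m × Fin n → ℂ) :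
    0 ≤ (∑ p, star (c p) * c p) * (∑ q, star (y q) * y q)
      + (∑ r, ∑ s, (∑ i, star (y (i, r)) * star (c (i, s))) * (∑ j, c (j, s) * y (j, r)))
      - ((∑ i, ∑ j, (∑ r, star (y (i, r)) * star (c (j, r))) * (∑ s, c (j, s) * y (i, s)))
        + (∑ p, star (y p) * star (c p)) * (∑ q, c q * y q)) := by
  set g1 : Fin m → Fin m → Fin n → Fin n → ℂ :=
    fun i j r s => (star (c (i, r)) * c (i, r)) * (star (y (j, s)) * y (j, s)) with hg1
  set g2 : Fin m → Fin m → Fin n → Fin n → ℂ :=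
    fun i j r s => (star (y (i, r)) * star (c (i, s))) * (c (j, s) * y (j, r)) with hg2
  set g3 : Fin m → Fin m → Fin n → Fin n → ℂ :=
    fun i j r s => (star (y (i, r)) * star (c (j, r))) * (c (j, s) * y (i, s)) with hg3
  set g4 : Fin m → Fin m → Fin n → Fin n → ℂ :=
    fun i j r s => (star (y (i, r)) * star (c (i, r))) * (c (j, s) * y (j, s)) with hg4
  have pw : ∀ i j r s, star (Ef c y i j r s) * Ef c y i j r s
      = (g1 i j r s + g1 j i r s + g1 i j s r + g1 j i s r)
        + (g2 i j r s + g2 j i r s + g2 i j s r + g2 j i s r)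
        - ((g3 i j r s + g3 j i r s + g3 i j s r + g3 j i s r)
          + (g4 i j r s + g4 j i r s + g4 i j s r + g4 j i s r)) := by
    intro i j r s
    simp only [Ef, hg1, hg2, hg3, hg4, star_add, star_sub, star_mul', star_star]
    ring
  have h0 : (0:ℂ) ≤ ∑ i, ∑ j, ∑ r, ∑ s, star (Ef c y i j r s) * Ef c y i j r s := by
    refine Finset.sum_nonneg fun i _ => Finset.sum_nonneg fun j _ =>
      Finset.sum_nonneg fun r _ => Finset.sum_nonneg fun s _ => star_mul_self_nonneg _
  have hsum : (∑ i, ∑ j, ∑ r, ∑ s, star (Ef c y i j r s) * Ef c y i j r s)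
      = 4 * ((∑ i, ∑ j, ∑ r, ∑ s, g1 i j r s) + (∑ i, ∑ j, ∑ r, ∑ s, g2 i j r s)
        - ((∑ i, ∑ j, ∑ r, ∑ s, g3 i j r s) + (∑ i, ∑ j, ∑ r, ∑ s, g4 i j r s))) := by
    calc (∑ i, ∑ j, ∑ r, ∑ s, star (Ef c y i j r s) * Ef c y i j r s)
        = ∑ i, ∑ j, ∑ r, ∑ s,
            ((g1 i j r s + g1 j i r s + g1 i j s r + g1 j i s r)
            + (g2 i j r s + g2 j i r s + g2 i j s r + g2 j i s r)
            - ((g3 i j r s + g3 j i r s + g3 i j s r + g3 j i s r)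
              + (g4 i j r s + g4 j i r s + g4 i j s r + g4 j i s r))) :=
          Finset.sum_congr rfl fun i _ => Finset.sum_congr rfl fun j _ =>
            Finset.sum_congr rfl fun r _ => Finset.sum_congr rfl fun s _ => pw i j r s
      _ = (∑ i, ∑ j, ∑ r, ∑ s, (g1 i j r s + g1 j i r s + g1 i j s r + g1 j i s r))
          + (∑ i, ∑ j, ∑ r, ∑ s, (g2 i j r s + g2 j i r s + g2 i j s r + g2 j i s r))
          - ((∑ i, ∑ j, ∑ r, ∑ s, (g3 i j r s + g3 j i r s + g3 i j s r + g3 j i s r))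
            + (∑ i, ∑ j, ∑ r, ∑ s, (g4 i j r s + g4 j i r s + g4 i j s r + g4 j i s r))) := by
          simp only [Finset.sum_add_distrib, Finset.sum_sub_distrib]
      _ = 4 * (∑ i, ∑ j, ∑ r, ∑ s, g1 i j r s) + 4 * (∑ i, ∑ j, ∑ r, ∑ s, g2 i j r s)
          - (4 * (∑ i, ∑ j, ∑ r, ∑ s, g3 i j r s) + 4 * (∑ i, ∑ j, ∑ r, ∑ s, g4 i j r s)) := by
          rw [sym4 g1, sym4 g2, sym4 g3, sym4 g4]
      _ = _ := by ring
  -- convert the structured forms to quadruple sums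
  have tl1 : (∑ p, star (c p) * c p) * (∑ q, star (y q) * y q)
      = ∑ i, ∑ j, ∑ r, ∑ s, g1 i j r s := by
    rw [Fintype.sum_mul_sum]
    rw [Fintype.sum_prod_type]
    simp only [Fintype.sum_prod_type (f := fun q : Fin m × Fin n =>
      _ * (star (y q) * y q))]
    exact (midSwap fun i r j s => (star (c (i, r)) * c (i, r)) * (star (y (j, s)) * y (j, s)))
  have tl2 : (∑ r, ∑ s, (∑ i, star (y (i, r)) * star (c (i, s))) * (∑ j, c (j, s) * y (j, r)))
      = ∑ i, ∑ j, ∑ r, ∑ s, g2 i j r s := by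
    have : ∀ r s, (∑ i, star (y (i, r)) * star (c (i, s))) * (∑ j, c (j, s) * y (j, r))
        = ∑ i, ∑ j, g2 i j r s := fun r s => Fintype.sum_mul_sum _ _
    simp only [this]
    exact (blockSwap fun r s i j => g2 i j r s).symm ▸
      (blockSwap fun i j r s => g2 i j r s).symm
  have tl3 : (∑ i, ∑ j, (∑ r, star (y (i, r)) * star (c (j, r))) * (∑ s, c (j, s) * y (i, s)))
      = ∑ i, ∑ j, ∑ r, ∑ s, g3 i j r s := by
    exact Finset.sum_congr rfl fun i _ => Finset.sum_congr rfl fun j _ =>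
      Fintype.sum_mul_sum _ _
  have tl4 : (∑ p, star (y p) * star (c p)) * (∑ q, c q * y q)
      = ∑ i, ∑ j, ∑ r, ∑ s, g4 i j r s := by
    rw [Fintype.sum_mul_sum]
    rw [Fintype.sum_prod_type]
    simp only [Fintype.sum_prod_type (f := fun q : Fin m × Fin n => _ * (c q * y q))]
    exact (midSwap fun i r j s => (star (y (i, r)) * star (c (i, r))) * (c (j, s) * y (j, s)))
  rw [tl1, tl2, tl3, tl4]
  have h4 : (0:ℂ) ≤ 4 * ((∑ i, ∑ j, ∑ r, ∑ s, g1 i j r s) + (∑ i, ∑ j, ∑ r, ∑ s, g2 i j r s)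
      - ((∑ i, ∑ j, ∑ r, ∑ s, g3 i j r s) + (∑ i, ∑ j, ∑ r, ∑ s, g4 i j r s))) :=
    hsum ▸ h0
  have h14 : (0:ℂ) ≤ (4:ℂ)⁻¹ := by
    rw [show ((4:ℂ)⁻¹ : ℂ) = ((4⁻¹ : ℝ) : ℂ) by push_cast; ring]
    exact Complex.zero_le_real.mpr (by norm_num)
  have := mul_nonneg h14 h4
  rwa [← mul_assoc, inv_mul_cancel₀ (by norm_num : (4:ℂ) ≠ 0), one_mul] at this

/-! ### more sum shuffles -/

lemma pull3 {α β γ : Type*} [Fintype α] [Fintype β] [Fintype γ] (F : α → β → γ → ℂ) :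
    (∑ a, ∑ b, ∑ c, F a b c) = ∑ c, ∑ a, ∑ b, F a b c := by
  calc (∑ a, ∑ b, ∑ c, F a b c) = ∑ a, ∑ c, ∑ b, F a b c :=
        Finset.sum_congr rfl fun _ _ => Finset.sum_comm
    _ = ∑ c, ∑ a, ∑ b, F a b c := Finset.sum_comm

lemma pull4 {α β γ δ : Type*} [Fintype α] [Fintype β] [Fintype γ] [Fintype δ]
    (F : α → β → γ → δ → ℂ) :
    (∑ a, ∑ b, ∑ c, ∑ d, F a b c d) = ∑ d, ∑ a, ∑ b, ∑ c, F a b c d := by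
  calc (∑ a, ∑ b, ∑ c, ∑ d, F a b c d) = ∑ a, ∑ d, ∑ b, ∑ c, F a b c d :=
        Finset.sum_congr rfl fun a _ => pull3 _
    _ = ∑ d, ∑ a, ∑ b, ∑ c, F a b c d := Finset.sum_comm

lemma pull5 {α β γ δ ε : Type*} [Fintype α] [Fintype β] [Fintype γ] [Fintype δ] [Fintype ε]
    (F : α → β → γ → δ → ε → ℂ) :
    (∑ a, ∑ b, ∑ c, ∑ d, ∑ e, F a b c d e) = ∑ e, ∑ a, ∑ b, ∑ c, ∑ d, F a b c d e := by
  calc (∑ a, ∑ b, ∑ c, ∑ d, ∑ e, F a b c d e)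
      = ∑ a, ∑ e, ∑ b, ∑ c, ∑ d, F a b c d e := Finset.sum_congr rfl fun a _ => pull4 _
    _ = ∑ e, ∑ a, ∑ b, ∑ c, ∑ d, F a b c d e := Finset.sum_comm

lemma sw12 {α β γ δ : Type*} [Fintype α] [Fintype β] [Fintype γ] [Fintype δ]
    (F : α → β → γ → δ → ℂ) :
    (∑ a, ∑ b, ∑ c, ∑ d, F a b c d) = ∑ b, ∑ a, ∑ c, ∑ d, F a b c d := Finset.sum_comm

lemma sw34 {α β γ δ : Type*} [Fintype α] [Fintype β] [Fintype γ] [Fintype δ]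
    (F : α → β → γ → δ → ℂ) :
    (∑ a, ∑ b, ∑ c, ∑ d, F a b c d) = ∑ a, ∑ b, ∑ d, ∑ c, F a b c d :=
  Finset.sum_congr rfl fun _ _ => Finset.sum_congr rfl fun _ _ => Finset.sum_comm

/-! ### Quadratic form expansions -/

lemma trace_expand (C : Matrix (Fin m × Fin n) (Fin m × Fin n) ℂ) :
    (Cᴴ * C).trace = ∑ k, ∑ p, star (C k p) * C k p := by
  rw [Matrix.trace]
  simp only [Matrix.diag_apply, Matrix.mul_apply, Matrix.conjTranspose_apply]
  exact Finset.sum_comm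

lemma tr2_expand (C : Matrix (Fin m × Fin n) (Fin m × Fin n) ℂ) (i j : Fin m) :
    tr2 (Cᴴ * C) i j = ∑ t, ∑ k, star (C k (i, t)) * C k (j, t) := by
  simp [tr2, Matrix.mul_apply, Matrix.conjTranspose_apply]

lemma tr1_expand (C : Matrix (Fin m × Fin n) (Fin m × Fin n) ℂ) (r s : Fin n) :
    tr1 (Cᴴ * C) r s = ∑ j, ∑ k, star (C k (j, r)) * C k (j, s) := by
  simp [tr1, Matrix.mul_apply, Matrix.conjTranspose_apply]

lemma qf1 (C : Matrix (Fin m × Fin n) (Fin m × Fin n) ℂ) (y : Fin m × Fin n → ℂ) :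
    star y ⬝ᵥ (((Cᴴ * C).trace • (1 : Matrix (Fin m × Fin n) (Fin m × Fin n) ℂ)) *ᵥ y)
      = ∑ k, (∑ p, star (C k p) * C k p) * (∑ q, star (y q) * y q) := by
  rw [Matrix.smul_mulVec, Matrix.one_mulVec, dotProduct_smul, smul_eq_mul,
    trace_expand, Finset.sum_mul]
  refine Finset.sum_congr rfl fun k _ => ?_
  congr 1

lemma qf4 (C : Matrix (Fin m × Fin n) (Fin m × Fin n) ℂ) (y : Fin m × Fin n → ℂ) :
    star y ⬝ᵥ ((Cᴴ * C) *ᵥ y)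
      = ∑ k, (∑ p, star (y p) * star (C k p)) * (∑ q, C k q * y q) := by
  calc star y ⬝ᵥ ((Cᴴ * C) *ᵥ y)
      = ∑ p, ∑ q, ∑ k, star (y p) * (star (C k p) * C k q * y q) := by
        simp only [dotProduct, Matrix.mulVec, Matrix.mul_apply, Matrix.conjTranspose_apply,
          Pi.star_apply, Finset.sum_mul, Finset.mul_sum]
    _ = ∑ k, ∑ p, ∑ q, star (y p) * (star (C k p) * C k q * y q) := pull3 _
    _ = ∑ k, (∑ p, star (y p) * star (C k p)) * (∑ q, C k q * y q) := by
        refine Finset.sum_congr rfl fun k _ => ?_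
        rw [Fintype.sum_mul_sum]
        exact Finset.sum_congr rfl fun p _ => Finset.sum_congr rfl fun q _ => by ring

lemma qf2 (C : Matrix (Fin m × Fin n) (Fin m × Fin n) ℂ) (y : Fin m × Fin n → ℂ) :
    star y ⬝ᵥ ((tr2 (Cᴴ * C) ⊗ₖ (1 : Matrix (Fin n) (Fin n) ℂ)) *ᵥ y)
      = ∑ k, ∑ r, ∑ s, (∑ i, star (y (i, r)) * star (C k (i, s)))
          * (∑ j, C k (j, s) * y (j, r)) := by
  have hmv : ∀ i : Fin m, ∀ r : Fin n,
      ((tr2 (Cᴴ * C) ⊗ₖ (1 : Matrix (Fin n) (Fin n) ℂ)) *ᵥ y) (i, r)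
        = ∑ j, tr2 (Cᴴ * C) i j * y (j, r) := by
    intro i r
    simp [Matrix.mulVec, dotProduct, Fintype.sum_prod_type, Matrix.kroneckerMap_apply,
      Matrix.one_apply, mul_ite, ite_mul, mul_one, mul_zero, zero_mul,
      Finset.sum_ite_eq, Finset.mem_univ]
  calc star y ⬝ᵥ ((tr2 (Cᴴ * C) ⊗ₖ (1 : Matrix (Fin n) (Fin n) ℂ)) *ᵥ y)
      = ∑ i, ∑ r, star (y (i, r)) * ∑ j, tr2 (Cᴴ * C) i j * y (j, r) := by
        simp only [dotProduct, Fintype.sum_prod_type, Pi.star_apply, hmv]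
    _ = ∑ i, ∑ r, ∑ j, ∑ t, ∑ k,
          star (y (i, r)) * (star (C k (i, t)) * C k (j, t) * y (j, r)) := by
        refine Finset.sum_congr rfl fun i _ => Finset.sum_congr rfl fun r _ => ?_
        rw [Finset.mul_sum]
        refine Finset.sum_congr rfl fun j _ => ?_
        rw [tr2_expand, Finset.sum_mul, Finset.mul_sum]
        refine Finset.sum_congr rfl fun t _ => ?_
        rw [Finset.sum_mul, Finset.mul_sum]
    _ = ∑ k, ∑ i, ∑ r, ∑ j, ∑ t,
          star (y (i, r)) * (star (C k (i, t)) * C k (j, t) * y (j, r)) := pull5 _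
    _ = ∑ k, ∑ r, ∑ t, ∑ i, ∑ j,
          star (y (i, r)) * (star (C k (i, t)) * C k (j, t) * y (j, r)) := by
        refine Finset.sum_congr rfl fun k _ => ?_
        rw [sw34 fun i r j t => star (y (i, r)) * (star (C k (i, t)) * C k (j, t) * y (j, r)),
          sw12 fun i r t j => star (y (i, r)) * (star (C k (i, t)) * C k (j, t) * y (j, r)),
          midSwap fun r i t j => star (y (i, r)) * (star (C k (i, t)) * C k (j, t) * y (j, r))]
    _ = ∑ k, ∑ r, ∑ s, (∑ i, star (y (i, r)) * star (C k (i, s)))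
          * (∑ j, C k (j, s) * y (j, r)) := by
        refine Finset.sum_congr rfl fun k _ => Finset.sum_congr rfl fun r _ =>
          Finset.sum_congr rfl fun s _ => ?_
        rw [Fintype.sum_mul_sum]
        exact Finset.sum_congr rfl fun i _ => Finset.sum_congr rfl fun j _ => by ring

lemma qf3 (C : Matrix (Fin m × Fin n) (Fin m × Fin n) ℂ) (y : Fin m × Fin n → ℂ) :
    star y ⬝ᵥ (((1 : Matrix (Fin m) (Fin m) ℂ) ⊗ₖ tr1 (Cᴴ * C)) *ᵥ y)
      = ∑ k, ∑ i, ∑ j, (∑ r, star (y (i, r)) * star (C k (j, r)))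
          * (∑ s, C k (j, s) * y (i, s)) := by
  have hmv : ∀ i : Fin m, ∀ r : Fin n,
      (((1 : Matrix (Fin m) (Fin m) ℂ) ⊗ₖ tr1 (Cᴴ * C)) *ᵥ y) (i, r)
        = ∑ s, tr1 (Cᴴ * C) r s * y (i, s) := by
    intro i r
    simp [Matrix.mulVec, dotProduct, Fintype.sum_prod_type, Matrix.kroneckerMap_apply,
      Matrix.one_apply, mul_ite, ite_mul, mul_one, mul_zero, zero_mul,
      Finset.sum_ite_eq, Finset.mem_univ]
  calc star y ⬝ᵥ (((1 : Matrix (Fin m) (Fin m) ℂ) ⊗ₖ tr1 (Cᴴ * C)) *ᵥ y)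
      = ∑ i, ∑ r, star (y (i, r)) * ∑ s, tr1 (Cᴴ * C) r s * y (i, s) := by
        simp only [dotProduct, Fintype.sum_prod_type, Pi.star_apply, hmv]
    _ = ∑ i, ∑ r, ∑ s, ∑ j, ∑ k,
          star (y (i, r)) * (star (C k (j, r)) * C k (j, s) * y (i, s)) := by
        refine Finset.sum_congr rfl fun i _ => Finset.sum_congr rfl fun r _ => ?_
        rw [Finset.mul_sum]
        refine Finset.sum_congr rfl fun s _ => ?_
        rw [tr1_expand, Finset.sum_mul, Finset.mul_sum]
        refine Finset.sum_congr rfl fun j _ => ?_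
        rw [Finset.sum_mul, Finset.mul_sum]
    _ = ∑ k, ∑ i, ∑ r, ∑ s, ∑ j,
          star (y (i, r)) * (star (C k (j, r)) * C k (j, s) * y (i, s)) := pull5 _
    _ = ∑ k, ∑ i, ∑ j, ∑ r, ∑ s,
          star (y (i, r)) * (star (C k (j, r)) * C k (j, s) * y (i, s)) := by
        refine Finset.sum_congr rfl fun k _ => Finset.sum_congr rfl fun i _ => ?_
        exact pull3 fun r s j => star (y (i, r)) * (star (C k (j, r)) * C k (j, s) * y (i, s))
    _ = ∑ k, ∑ i, ∑ j, (∑ r, star (y (i, r)) * star (C k (j, r)))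
          * (∑ s, C k (j, s) * y (i, s)) := by
        refine Finset.sum_congr rfl fun k _ => Finset.sum_congr rfl fun i _ =>
          Finset.sum_congr rfl fun j _ => ?_
        rw [Fintype.sum_mul_sum]
        exact Finset.sum_congr rfl fun r _ => Finset.sum_congr rfl fun s _ => by ring


/-! ### Hermitian facts -/

lemma tr2_herm {B : Matrix (Fin m × Fin n) (Fin m × Fin n) ℂ} (hB : B.IsHermitian) :
    (tr2 B).IsHermitian := by
  refine Matrix.IsHermitian.ext fun i j => ?_
  simp only [tr2, star_sum]
  exact Finset.sum_congr rfl fun r _ => hB.apply _ _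

lemma tr1_herm {B : Matrix (Fin m × Fin n) (Fin m × Fin n) ℂ} (hB : B.IsHermitian) :
    (tr1 B).IsHermitian := by
  refine Matrix.IsHermitian.ext fun r s => ?_
  simp only [tr1, star_sum]
  exact Finset.sum_congr rfl fun i _ => hB.apply _ _

lemma kron_one_herm {M : Matrix (Fin m) (Fin m) ℂ} (hM : M.IsHermitian) :
    (M ⊗ₖ (1 : Matrix (Fin n) (Fin n) ℂ)).IsHermitian := by
  refine Matrix.IsHermitian.ext fun p q => ?_
  obtain ⟨i, r⟩ := p; obtain ⟨j, s⟩ := q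
  by_cases h : r = s
  · subst h
    simp [Matrix.kroneckerMap_apply, Matrix.one_apply, hM.apply]
  · simp [Matrix.kroneckerMap_apply, Matrix.one_apply, h, Ne.symm h]

lemma one_kron_herm {M : Matrix (Fin n) (Fin n) ℂ} (hM : M.IsHermitian) :
    ((1 : Matrix (Fin m) (Fin m) ℂ) ⊗ₖ M).IsHermitian := by
  refine Matrix.IsHermitian.ext fun p q => ?_
  obtain ⟨i, r⟩ := p; obtain ⟨j, s⟩ := q
  by_cases h : i = j
  · subst h
    simp [Matrix.kroneckerMap_apply, Matrix.one_apply, hM.apply]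
  · simp [Matrix.kroneckerMap_apply, Matrix.one_apply, h, Ne.symm h]

lemma trace_smul_one_herm {B : Matrix (Fin m × Fin n) (Fin m × Fin n) ℂ}
    (hB : B.IsHermitian) :
    (B.trace • (1 : Matrix (Fin m × Fin n) (Fin m × Fin n) ℂ)).IsHermitian := by
  have ht : star B.trace = B.trace := by
    rw [← Matrix.trace_conjTranspose, hB.eq]
  show (B.trace • (1 : Matrix (Fin m × Fin n) (Fin m × Fin n) ℂ))ᴴ = _
  rw [Matrix.conjTranspose_smul, Matrix.conjTranspose_one, ht]

/-! ### The core positivity result -/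

theorem DD_posSemidef (B : Matrix (Fin m × Fin n) (Fin m × Fin n) ℂ) (hB : B.PosSemidef) :
    (B.trace • (1 : Matrix (Fin m × Fin n) (Fin m × Fin n) ℂ)
      + tr2 B ⊗ₖ (1 : Matrix (Fin n) (Fin n) ℂ)
      - ((1 : Matrix (Fin m) (Fin m) ℂ) ⊗ₖ tr1 B + B)).PosSemidef := by
  rw [Matrix.posSemidef_iff_dotProduct_mulVec]
  constructor
  · exact ((trace_smul_one_herm hB.1).add (kron_one_herm (tr2_herm hB.1))).sub
      ((one_kron_herm (tr1_herm hB.1)).add hB.1)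
  · intro y
    open scoped MatrixOrder Matrix.Norms.L2Operator in
    obtain ⟨C, hC⟩ := CStarAlgebra.nonneg_iff_eq_star_mul_self.mp hB.nonneg
    rw [hC, Matrix.star_eq_conjTranspose, Matrix.sub_mulVec, Matrix.add_mulVec, Matrix.add_mulVec, dotProduct_sub,
      dotProduct_add, dotProduct_add, qf1, qf2, qf3, qf4,
      ← Finset.sum_add_distrib, ← Finset.sum_add_distrib, ← Finset.sum_sub_distrib]
    exact Finset.sum_nonneg fun k _ => keyNonneg (fun p => C k p) y

/-! ### Spectral shift lemmas -/

lemma shift_psd_min {N : Type*} [Fintype N] [DecidableEq N] {A : Matrix N N ℂ}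
    (hA : A.IsHermitian) {c : ℝ} (h : ∀ i, c ≤ hA.eigenvalues i) :
    (A - (c : ℂ) • 1).PosSemidef := by
  have hU : (hA.eigenvectorUnitary : Matrix N N ℂ)
      * star (hA.eigenvectorUnitary : Matrix N N ℂ) = 1 :=
    Matrix.mem_unitaryGroup_iff.mp (hA.eigenvectorUnitary).2
  have h1 : (c : ℂ) • (1 : Matrix N N ℂ)
      = (hA.eigenvectorUnitary : Matrix N N ℂ) * Matrix.diagonal (fun _ => (c : ℂ))
        * star (hA.eigenvectorUnitary : Matrix N N ℂ) := by
    rw [← Matrix.smul_one_eq_diagonal, mul_smul_comm, mul_one, smul_mul_assoc, hU]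
  have key : A - (c : ℂ) • 1
      = (hA.eigenvectorUnitary : Matrix N N ℂ)
        * Matrix.diagonal (fun i => ((hA.eigenvalues i - c : ℝ) : ℂ))
        * ((hA.eigenvectorUnitary : Matrix N N ℂ))ᴴ := by
    conv_lhs => rw [hA.spectral_theorem, h1]
    rw [Unitary.conjStarAlgAut_apply, ← Matrix.star_eq_conjTranspose, ← sub_mul, ← Matrix.mul_sub,
      Matrix.diagonal_sub]
    congr 2
    funext i
    simp [Function.comp]
  rw [key]
  exact (Matrix.posSemidef_diagonal_iff.mpr fun i =>
    Complex.zero_le_real.mpr (sub_nonneg.mpr (h i))).mul_mul_conjTranspose_same _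

lemma shift_psd_max {N : Type*} [Fintype N] [DecidableEq N] {A : Matrix N N ℂ}
    (hA : A.IsHermitian) {c : ℝ} (h : ∀ i, hA.eigenvalues i ≤ c) :
    ((c : ℂ) • 1 - A).PosSemidef := by
  have hU : (hA.eigenvectorUnitary : Matrix N N ℂ)
      * star (hA.eigenvectorUnitary : Matrix N N ℂ) = 1 :=
    Matrix.mem_unitaryGroup_iff.mp (hA.eigenvectorUnitary).2
  have h1 : (c : ℂ) • (1 : Matrix N N ℂ)
      = (hA.eigenvectorUnitary : Matrix N N ℂ) * Matrix.diagonal (fun _ => (c : ℂ))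
        * star (hA.eigenvectorUnitary : Matrix N N ℂ) := by
    rw [← Matrix.smul_one_eq_diagonal, mul_smul_comm, mul_one, smul_mul_assoc, hU]
  have key : (c : ℂ) • 1 - A
      = (hA.eigenvectorUnitary : Matrix N N ℂ)
        * Matrix.diagonal (fun i => ((c - hA.eigenvalues i : ℝ) : ℂ))
        * ((hA.eigenvectorUnitary : Matrix N N ℂ))ᴴ := by
    conv_lhs => rw [hA.spectral_theorem, h1]
    rw [Unitary.conjStarAlgAut_apply, ← Matrix.star_eq_conjTranspose, ← sub_mul, ← Matrix.mul_sub,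
      Matrix.diagonal_sub]
    congr 2
    funext i
    simp [Function.comp]
  rw [key]
  exact (Matrix.posSemidef_diagonal_iff.mpr fun i =>
    Complex.zero_le_real.mpr (sub_nonneg.mpr (h i))).mul_mul_conjTranspose_same _

/-! ### Linearity of the partial traces under scalar shifts -/

lemma tr2_sub_smul (A : Matrix (Fin m × Fin n) (Fin m × Fin n) ℂ) (c : ℂ) :
    tr2 (A - c • 1) = tr2 A - ((n : ℂ) * c) • 1 := by
  ext i j
  simp only [tr2, Matrix.sub_apply, Matrix.smul_apply, Matrix.one_apply, smul_eq_mul,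
    Finset.sum_sub_distrib]
  congr 1
  by_cases h : i = j
  · subst h
    simp [Finset.sum_const, Finset.card_univ, mul_comm, mul_assoc]
  · simp [Prod.mk.injEq, h]

lemma tr2_smul_sub (A : Matrix (Fin m × Fin n) (Fin m × Fin n) ℂ) (c : ℂ) :
    tr2 (c • 1 - A) = ((n : ℂ) * c) • 1 - tr2 A := by
  ext i j
  simp only [tr2, Matrix.sub_apply, Matrix.smul_apply, Matrix.one_apply, smul_eq_mul,
    Finset.sum_sub_distrib]
  congr 1
  by_cases h : i = j
  · subst h
    simp [Finset.sum_const, Finset.card_univ, mul_comm, mul_assoc]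
  · simp [Prod.mk.injEq, h]

lemma tr1_sub_smul (A : Matrix (Fin m × Fin n) (Fin m × Fin n) ℂ) (c : ℂ) :
    tr1 (A - c • 1) = tr1 A - ((m : ℂ) * c) • 1 := by
  ext r s
  simp only [tr1, Matrix.sub_apply, Matrix.smul_apply, Matrix.one_apply, smul_eq_mul,
    Finset.sum_sub_distrib]
  congr 1
  by_cases h : r = s
  · subst h
    simp [Finset.sum_const, Finset.card_univ, mul_comm, mul_assoc]
  · simp [Prod.mk.injEq, h]

lemma tr1_smul_sub (A : Matrix (Fin m × Fin n) (Fin m × Fin n) ℂ) (c : ℂ) :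
    tr1 (c • 1 - A) = ((m : ℂ) * c) • 1 - tr1 A := by
  ext r s
  simp only [tr1, Matrix.sub_apply, Matrix.smul_apply, Matrix.one_apply, smul_eq_mul,
    Finset.sum_sub_distrib]
  congr 1
  by_cases h : r = s
  · subst h
    simp [Finset.sum_const, Finset.card_univ, mul_comm, mul_assoc]
  · simp [Prod.mk.injEq, h]

lemma sub_kron (M N : Matrix (Fin m) (Fin m) ℂ) :
    (M - N) ⊗ₖ (1 : Matrix (Fin n) (Fin n) ℂ) = M ⊗ₖ 1 - N ⊗ₖ 1 := by
  ext p q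
  simp [Matrix.kroneckerMap_apply, Matrix.sub_apply, sub_mul]

lemma kron_sub (M N : Matrix (Fin n) (Fin n) ℂ) :
    (1 : Matrix (Fin m) (Fin m) ℂ) ⊗ₖ (M - N) = 1 ⊗ₖ M - 1 ⊗ₖ N := by
  ext p q
  simp [Matrix.kroneckerMap_apply, Matrix.sub_apply, mul_sub]

lemma smul_one_kron (c : ℂ) :
    (c • (1 : Matrix (Fin m) (Fin m) ℂ)) ⊗ₖ (1 : Matrix (Fin n) (Fin n) ℂ)
      = c • (1 : Matrix (Fin m × Fin n) (Fin m × Fin n) ℂ) := by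
  rw [Matrix.smul_kronecker, Matrix.one_kronecker_one]

lemma kron_smul_one (c : ℂ) :
    (1 : Matrix (Fin m) (Fin m) ℂ) ⊗ₖ (c • (1 : Matrix (Fin n) (Fin n) ℂ))
      = c • (1 : Matrix (Fin m × Fin n) (Fin m × Fin n) ℂ) := by
  rw [Matrix.kronecker_smul, Matrix.one_kronecker_one]

lemma DD_eq_min (A : Matrix (Fin m × Fin n) (Fin m × Fin n) ℂ) (c : ℝ) :
    (A - (c : ℂ) • 1).trace • (1 : Matrix (Fin m × Fin n) (Fin m × Fin n) ℂ)
      + tr2 (A - (c : ℂ) • 1) ⊗ₖ (1 : Matrix (Fin n) (Fin n) ℂ)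
      - ((1 : Matrix (Fin m) (Fin m) ℂ) ⊗ₖ tr1 (A - (c : ℂ) • 1) + (A - (c : ℂ) • 1))
    = A.trace • (1 : Matrix (Fin m × Fin n) (Fin m × Fin n) ℂ)
      + tr2 A ⊗ₖ (1 : Matrix (Fin n) (Fin n) ℂ)
      - ((1 : Matrix (Fin m) (Fin m) ℂ) ⊗ₖ tr1 A + A
        + ((((m : ℝ) + 1) * ((n : ℝ) - 1) * c : ℝ) : ℂ)
            • (1 : Matrix (Fin m × Fin n) (Fin m × Fin n) ℂ)) := by
  rw [Matrix.trace_sub, Matrix.trace_smul, Matrix.trace_one, tr2_sub_smul, tr1_sub_smul,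
    sub_kron, kron_sub, smul_one_kron, kron_smul_one, smul_eq_mul]
  have hcard : (Fintype.card (Fin m × Fin n) : ℂ) = (m : ℂ) * n := by
    simp [Fintype.card_prod]
  rw [hcard]
  have hc : ((((m : ℝ) + 1) * ((n : ℝ) - 1) * c : ℝ) : ℂ)
      = ((m : ℂ) + 1) * ((n : ℂ) - 1) * (c : ℂ) := by push_cast; ring
  rw [hc]
  module

lemma DD_eq_max (A : Matrix (Fin m × Fin n) (Fin m × Fin n) ℂ) (c : ℝ) :
    ((c : ℂ) • 1 - A).trace • (1 : Matrix (Fin m × Fin n) (Fin m × Fin n) ℂ)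
      + tr2 ((c : ℂ) • 1 - A) ⊗ₖ (1 : Matrix (Fin n) (Fin n) ℂ)
      - ((1 : Matrix (Fin m) (Fin m) ℂ) ⊗ₖ tr1 ((c : ℂ) • 1 - A) + ((c : ℂ) • 1 - A))
    = ((1 : Matrix (Fin m) (Fin m) ℂ) ⊗ₖ tr1 A + A
        + ((((m : ℝ) + 1) * ((n : ℝ) - 1) * c : ℝ) : ℂ)
            • (1 : Matrix (Fin m × Fin n) (Fin m × Fin n) ℂ))
      - (A.trace • (1 : Matrix (Fin m × Fin n) (Fin m × Fin n) ℂ)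
        + tr2 A ⊗ₖ (1 : Matrix (Fin n) (Fin n) ℂ)) := by
  rw [Matrix.trace_sub, Matrix.trace_smul, Matrix.trace_one, tr2_smul_sub, tr1_smul_sub,
    sub_kron, kron_sub, smul_one_kron, kron_smul_one, smul_eq_mul]
  have hcard : (Fintype.card (Fin m × Fin n) : ℂ) = (m : ℂ) * n := by
    simp [Fintype.card_prod]
  rw [hcard]
  have hc : ((((m : ℝ) + 1) * ((n : ℝ) - 1) * c : ℝ) : ℂ)
      = ((m : ℂ) + 1) * ((n : ℂ) - 1) * (c : ℂ) := by push_cast; ring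
  rw [hc]
  module

end Stmt13Aux



/-- For Hermitian `A ∈ M_m(M_n)`:
`(tr A) I + (tr₂ A) ⊗ I_n ≥ I_m ⊗ (tr₁ A) + A + (m+1)(n−1) λ_min(A) I`, and
`(tr A) I + (tr₂ A) ⊗ I_n ≤ I_m ⊗ (tr₁ A) + A + (m+1)(n−1) λ_max(A) I`. -/
theorem stmt13 {m n : ℕ} (A : Matrix (Fin m × Fin n) (Fin m × Fin n) ℂ)
    (hA : A.IsHermitian) :
    (A.trace • (1 : Matrix (Fin m × Fin n) (Fin m × Fin n) ℂ)
      + tr2 A ⊗ₖ (1 : Matrix (Fin n) (Fin n) ℂ)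
      - ((1 : Matrix (Fin m) (Fin m) ℂ) ⊗ₖ tr1 A + A
        + ((((m : ℝ) + 1) * ((n : ℝ) - 1) * lamMin hA : ℝ) : ℂ)
            • (1 : Matrix (Fin m × Fin n) (Fin m × Fin n) ℂ))).PosSemidef
    ∧ (((1 : Matrix (Fin m) (Fin m) ℂ) ⊗ₖ tr1 A + A
        + ((((m : ℝ) + 1) * ((n : ℝ) - 1) * lamMax hA : ℝ) : ℂ)
            • (1 : Matrix (Fin m × Fin n) (Fin m × Fin n) ℂ))
      - (A.trace • (1 : Matrix (Fin m × Fin n) (Fin m × Fin n) ℂ)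
        + tr2 A ⊗ₖ (1 : Matrix (Fin n) (Fin n) ℂ))).PosSemidef := by
  constructor
  · have h1 : ∀ i, lamMin hA ≤ hA.eigenvalues i := fun i =>
      ciInf_le (Set.Finite.bddBelow (Set.finite_range _)) i
    have hp := Stmt13Aux.DD_posSemidef _ (Stmt13Aux.shift_psd_min hA h1)
    rwa [Stmt13Aux.DD_eq_min A (lamMin hA)] at hp
  · have h1 : ∀ i, hA.eigenvalues i ≤ lamMax hA := fun i =>
      le_ciSup (Set.Finite.bddAbove (Set.finite_range _)) i
    have hp := Stmt13Aux.DD_posSemidef _ (Stmt13Aux.shift_psd_max hA h1)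
    rwa [Stmt13Aux.DD_eq_max A (lamMax hA)] at hp
end
end

section
/- Let X = [x_{ij}] be an m×n real matrix. Then (m−2)·n·Σ_{i=1}^m Σ_{j=1}^n x_{ij}² + n·Σ_{j=1}^n (Σ_{i=1}^m x_{ij})² ≥ (Σ_{i=1}^m Σ_{j=1}^n x_{ij})² + (m−2)·Σ_{i=1}^m (Σ_{j=1}^n x_{ij})². -/
open BigOperators

/-- An extension of the Cauchy–Khinchin inequality: for an `m × n` real matrix
`X = [x_{ij}]`,
`(m−2)·n·Σ x_{ij}² + n·Σ_j (Σ_i x_{ij})² ≥ (Σ x_{ij})² + (m−2)·Σ_i (Σ_j x_{ij})²`. -/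
theorem stmt14 {m n : ℕ} (x : Fin m → Fin n → ℝ) :
    ((m : ℝ) - 2) * (n : ℝ) * (∑ i, ∑ j, (x i j) ^ 2)
      + (n : ℝ) * ∑ j, (∑ i, x i j) ^ 2
    ≥ (∑ i, ∑ j, x i j) ^ 2 + ((m : ℝ) - 2) * ∑ i, (∑ j, x i j) ^ 2 := by
  match m with
  | 0 => simp
  | 1 => simp [Fin.sum_univ_one]; ring_nf; exact le_refl 0
  | (k+2) =>
    have hm : ((k+2 : ℕ) : ℝ) - 2 ≥ 0 := by push_cast; linarith
    have h1 : ∀ i : Fin (k+2), (∑ j, x i j) ^ 2 ≤ (n : ℝ) * ∑ j, (x i j) ^ 2 := by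
      intro i
      have := sq_sum_le_card_mul_sum_sq (s := Finset.univ) (f := x i)
      simpa using this
    have h1' : ∑ i, (∑ j, x i j) ^ 2 ≤ (n : ℝ) * ∑ i, ∑ j, (x i j) ^ 2 := by
      rw [Finset.mul_sum]
      exact Finset.sum_le_sum fun i _ => h1 i
    have h2 : (∑ j, ∑ i, x i j) ^ 2 ≤ (n : ℝ) * ∑ j, (∑ i, x i j) ^ 2 := by
      have := sq_sum_le_card_mul_sum_sq (s := (Finset.univ : Finset (Fin n)))
        (f := fun j => ∑ i, x i j)
      simpa using this
    rw [Finset.sum_comm (f := fun i j => x i j)]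
    nlinarith [mul_le_mul_of_nonneg_left h1' hm]
end

section
/- Let X = [x_{ij}] be an m×n real matrix. Then m·(n−2)·Σ_{i=1}^m Σ_{j=1}^n x_{ij}² + m·Σ_{i=1}^m (Σ_{j=1}^n x_{ij})² ≥ (Σ_{i=1}^m Σ_{j=1}^n x_{ij})² + (n−2)·Σ_{j=1}^n (Σ_{i=1}^m x_{ij})². -/
open BigOperators

lemma cauchy_aux {m : ℕ} (f : Fin m → ℝ) :
    (∑ i, f i) ^ 2 ≤ (m : ℝ) * ∑ i, f i ^ 2 := by
  simpa using sq_sum_le_card_mul_sum_sq (s := Finset.univ) (f := f)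

/-- An extension of the Cauchy–Khinchin inequality: for an `m × n` real matrix
`X = [x_{ij}]`,
`m·(n−2)·Σ x_{ij}² + m·Σ_i (Σ_j x_{ij})² ≥ (Σ x_{ij})² + (n−2)·Σ_j (Σ_i x_{ij})²`. -/
theorem stmt15 {m n : ℕ} (x : Fin m → Fin n → ℝ) :
    (m : ℝ) * ((n : ℝ) - 2) * (∑ i, ∑ j, (x i j) ^ 2)
      + (m : ℝ) * ∑ i, (∑ j, x i j) ^ 2
    ≥ (∑ i, ∑ j, x i j) ^ 2 + ((n : ℝ) - 2) * ∑ j, (∑ i, x i j) ^ 2 := by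
  have h1 : (∑ i, ∑ j, x i j) ^ 2 ≤ (m : ℝ) * ∑ i, (∑ j, x i j) ^ 2 :=
    cauchy_aux _
  match n with
  | 0 => simp
  | 1 => simp [Fin.sum_univ_one] at *; nlinarith [h1]
  | (k+2) =>
    have hn : (0:ℝ) ≤ (k+2 : ℕ) - 2 := by push_cast; linarith
    have h2 : ∑ j, (∑ i, x i j) ^ 2 ≤ (m : ℝ) * ∑ i, ∑ j, (x i j) ^ 2 := by
      rw [Finset.sum_comm (f := fun i j => x i j ^ 2), Finset.mul_sum]
      exact Finset.sum_le_sum fun j _ => cauchy_aux fun i => x i j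
    have := mul_le_mul_of_nonneg_left h2 hn
    push_cast at *
    nlinarith [this, h1]
end
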